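/- arXiv:2111.11630 — 8 statements merged into one kernel-verified Lean document; each statement's English description precedes it below -/
import Mathlib

section
/- Let X be a nonempty set and f₁, f₂ : X* → ℝⁿ two functions on nonempty finite subsets of X, each satisfying the strict weighted averaging property (for disjoint A,B there exists λ ∈ (0,1) with f(A∪B) = λ f(A) + (1−λ) f(B)). If a,b,c,d ∈ X* satisfy a∪b = c∪d, a∩b = ∅, c∩d = ∅, f₁ agrees with f₂ on each of a,b,c,d, and the four points f₁(a), f₁(b), f₁(c), f₁(d) are not all collinear, then f₁(a∪b) = f₂(a∪b). -/
open Finset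

/-- Strict weighted averaging property. -/
def StrictWA {X : Type*} [DecidableEq X] {E : Type*} [AddCommGroup E] [Module ℝ E]
    (f : Finset X → E) : Prop :=
  ∀ A B : Finset X, A.Nonempty → B.Nonempty → Disjoint A B →
    ∃ l : ℝ, l ∈ Set.Ioo (0:ℝ) 1 ∧ f (A ∪ B) = l • f A + (1 - l) • f B

/-- An affine combination of two points lies in their affine span. -/
lemma mem_line_of_combo {n : ℕ} {u v w : Fin n → ℝ} {l : ℝ}
    (h : w = l • u + (1 - l) • v) : w ∈ line[ℝ, u, v] := by
  have : w = AffineMap.lineMap u v (1 - l) := by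
    rw [h, AffineMap.lineMap_apply]
    simp only [vsub_eq_sub, vadd_eq_add]
    module
  rw [this]
  exact AffineMap.lineMap_mem_affineSpan_pair _ _ _

theorem stmt0 {X : Type*} [DecidableEq X] {n : ℕ}
    (f₁ f₂ : Finset X → (Fin n → ℝ))
    (h₁ : StrictWA f₁) (h₂ : StrictWA f₂)
    (a b c d : Finset X)
    (ha : a.Nonempty) (hb : b.Nonempty) (hc : c.Nonempty) (hd : d.Nonempty)
    (hab : Disjoint a b) (hcd : Disjoint c d)
    (hunion : a ∪ b = c ∪ d)
    (ea : f₁ a = f₂ a) (eb : f₁ b = f₂ b) (ec : f₁ c = f₂ c) (ed : f₁ d = f₂ d)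
    (hnc : ¬ Collinear ℝ ({f₁ a, f₁ b, f₁ c, f₁ d} : Set (Fin n → ℝ))) :
    f₁ (a ∪ b) = f₂ (a ∪ b) := by
  by_contra hpq
  set p := f₁ (a ∪ b) with hp
  set q := f₂ (a ∪ b) with hq
  -- p lies on line through f₁ a, f₁ b and on line through f₁ c, f₁ d
  obtain ⟨l₁, -, hl₁⟩ := h₁ a b ha hb hab
  obtain ⟨l₂, -, hl₂⟩ := h₁ c d hc hd hcd
  obtain ⟨l₃, -, hl₃⟩ := h₂ a b ha hb hab
  obtain ⟨l₄, -, hl₄⟩ := h₂ c d hc hd hcd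
  have hpab : p ∈ line[ℝ, f₁ a, f₁ b] := mem_line_of_combo hl₁
  have hpcd : p ∈ line[ℝ, f₁ c, f₁ d] := by
    refine mem_line_of_combo (u := f₁ c) (v := f₁ d) (l := l₂) ?_
    rw [hp, hunion]; exact hl₂
  have hqab : q ∈ line[ℝ, f₁ a, f₁ b] := by
    refine mem_line_of_combo (u := f₁ a) (v := f₁ b) (l := l₃) ?_
    rw [hq, ea, eb]; exact hl₃
  have hqcd : q ∈ line[ℝ, f₁ c, f₁ d] := by
    refine mem_line_of_combo (u := f₁ c) (v := f₁ d) (l := l₄) ?_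
    rw [hq, hunion, ec, ed]; exact hl₄
  -- hence f₁ a, f₁ b, f₁ c, f₁ d all lie on line[p, q]
  have cab : Collinear ℝ ({p, q, f₁ a, f₁ b} : Set (Fin n → ℝ)) :=
    collinear_insert_insert_of_mem_affineSpan_pair hpab hqab
  have ccd : Collinear ℝ ({p, q, f₁ c, f₁ d} : Set (Fin n → ℝ)) :=
    collinear_insert_insert_of_mem_affineSpan_pair hpcd hqcd
  have hfa : f₁ a ∈ line[ℝ, p, q] :=
    cab.mem_affineSpan_of_mem_of_ne (by simp) (by simp) (by simp) hpq
  have hfb : f₁ b ∈ line[ℝ, p, q] :=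
    cab.mem_affineSpan_of_mem_of_ne (by simp) (by simp) (by simp) hpq
  have hfc : f₁ c ∈ line[ℝ, p, q] :=
    ccd.mem_affineSpan_of_mem_of_ne (by simp) (by simp) (by simp) hpq
  have hfd : f₁ d ∈ line[ℝ, p, q] :=
    ccd.mem_affineSpan_of_mem_of_ne (by simp) (by simp) (by simp) hpq
  have c4 : Collinear ℝ ({f₁ c, f₁ d, p, q} : Set (Fin n → ℝ)) :=
    collinear_insert_insert_of_mem_affineSpan_pair hfc hfd
  have c5 : Collinear ℝ (insert (f₁ a) ({f₁ c, f₁ d, p, q} : Set (Fin n → ℝ))) := by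
    rw [c4.collinear_insert_iff_of_ne (p₂ := p) (p₃ := q) (by simp) (by simp) hpq]
    exact collinear_insert_of_mem_affineSpan_pair hfa
  have c6 : Collinear ℝ (insert (f₁ b)
      (insert (f₁ a) ({f₁ c, f₁ d, p, q} : Set (Fin n → ℝ)))) := by
    rw [c5.collinear_insert_iff_of_ne (p₂ := p) (p₃ := q) (by simp) (by simp) hpq]
    exact collinear_insert_of_mem_affineSpan_pair hfb
  exact hnc (c6.subset (by intro x hx; simp at hx ⊢; tauto))
end

section
/- Let f : X* → H be a rich aggregation rule (its range is not contained in any affine line) satisfying the strict weighted averaging property. Then there exists a weight function w : X → ℝ₊₊ such that for every nonempty finite A ⊆ X, f(A) = (∑_{x∈A} w(x) f({x})) / (∑_{x∈A} w(x)). Moreover w is unique up to multiplication by a positive constant. -/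
open Finset

section SWAAux

variable {X : Type*} [DecidableEq X] {H : Type*} [NormedAddCommGroup H] [InnerProductSpace ℝ H]

private lemma swa_li {p1 p2 p3 : H} (h : ¬ Collinear ℝ ({p1, p2, p3} : Set H))
    {a b : ℝ} (h0 : a • (p1 - p3) + b • (p2 - p3) = 0) : a = 0 ∧ b = 0 := by
  by_contra hab
  apply h
  rw [collinear_iff_exists_forall_eq_smul_vadd]
  rcases eq_or_ne a 0 with ha | ha
  · have hb : b ≠ 0 := by tauto
    have hp : p2 = p3 := by
      have h2 : b • (p2 - p3) = 0 := by
        rw [ha] at h0; simpa using h0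
      have := (smul_eq_zero.mp h2).resolve_left hb
      exact sub_eq_zero.mp this
    refine ⟨p3, p1 - p3, ?_⟩
    intro p hp'
    simp only [Set.mem_insert_iff, Set.mem_singleton_iff] at hp'
    rcases hp' with rfl | rfl | rfl
    · exact ⟨1, by simp⟩
    · exact ⟨0, by simp [hp]⟩
    · exact ⟨0, by simp⟩
  · refine ⟨p3, p2 - p3, ?_⟩
    intro p hp'
    have h1 : p1 - p3 = (-(b/a)) • (p2 - p3) := by
      have : a • (p1 - p3) = -(b • (p2 - p3)) := eq_neg_of_add_eq_zero_left h0
      have := congrArg (fun v => (a⁻¹ : ℝ) • v) this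
      simpa [smul_smul, inv_mul_cancel₀ ha, neg_div, div_eq_inv_mul, mul_comm] using this
    simp only [Set.mem_insert_iff, Set.mem_singleton_iff] at hp'
    rcases hp' with rfl | rfl | rfl
    · exact ⟨-(b/a), by rw [vadd_eq_add, ← h1]; abel⟩
    · exact ⟨1, by simp⟩
    · exact ⟨0, by simp⟩

private lemma swa_aff3 {p1 p2 p3 : H} (h : ¬ Collinear ℝ ({p1, p2, p3} : Set H))
    {a b c a' b' c' : ℝ} (hs : a + b + c = a' + b' + c')
    (he : a • p1 + b • p2 + c • p3 = a' • p1 + b' • p2 + c' • p3) :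
    a = a' ∧ b = b' ∧ c = c' := by
  have key : (a - a') • (p1 - p3) + (b - b') • (p2 - p3) = 0 := by
    linear_combination (norm := module) he - hs • p3
  obtain ⟨h1, h2⟩ := swa_li h key
  refine ⟨by linarith, by linarith, by linarith⟩

private lemma swa_aff2 {p q : H} (h : p ≠ q) {a b : ℝ}
    (he : a • p + (1 - a) • q = b • p + (1 - b) • q) : a = b := by
  have h0 : (a - b) • (p - q) = 0 := by
    linear_combination (norm := module) he
  rcases smul_eq_zero.mp h0 with h1 | h1
  · linarith [sub_eq_zero.mp (by linarith : a - b = 0) ]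
  · exact absurd (sub_eq_zero.mp h1) h


private lemma swa_mem (f : Finset X → H) (hswa : StrictWA f) (S : AffineSubspace ℝ H) :
    ∀ (n : ℕ) (A : Finset X), A.card = n → A.Nonempty → (∀ x ∈ A, f {x} ∈ S) → f A ∈ S := by
  intro n
  induction n using Nat.strong_induction_on with
  | _ n ih =>
    intro A hcard hA hmem
    obtain ⟨a, ha⟩ := hA
    by_cases h1 : A.card = 1
    · obtain ⟨x, rfl⟩ := Finset.card_eq_one.mp h1
      exact hmem x (Finset.mem_singleton_self x)
    · have h2 : 2 ≤ A.card := by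
        have := Finset.one_le_card.mpr ⟨a, ha⟩; omega
      have hA' : (A.erase a).Nonempty := by
        rw [← Finset.card_pos, Finset.card_erase_of_mem ha]; omega
      obtain ⟨l, hl, hc⟩ := hswa (A.erase a) {a} hA' (Finset.singleton_nonempty a)
        (Finset.disjoint_singleton_right.mpr (Finset.notMem_erase a A))
      have hu : A.erase a ∪ {a} = A := by
        rw [Finset.union_comm, ← Finset.insert_eq, Finset.insert_erase ha]
      rw [hu] at hc
      rw [hc]
      have key : l • f (A.erase a) + (1 - l) • f {a}
          = l • (f (A.erase a) -ᵥ f {a}) +ᵥ f {a} := by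
        rw [vsub_eq_sub, vadd_eq_add]; module
      rw [key]
      refine S.smul_vsub_vadd_mem l ?_ (hmem a ha) (hmem a ha)
      refine ih (A.erase a).card ?_ _ rfl hA' (fun x hx => hmem x (Finset.mem_of_mem_erase hx))
      rw [Finset.card_erase_of_mem ha]; omega

private lemma swa_cl (f : Finset X → H) (hswa : StrictWA f) (p : H) :
    ∀ (n : ℕ) (A : Finset X), A.card = n → A.Nonempty → (∀ x ∈ A, f {x} = p) → f A = p := by
  intro n
  induction n using Nat.strong_induction_on with
  | _ n ih =>
    intro A hcard hA hmem
    obtain ⟨a, ha⟩ := hA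
    by_cases h1 : A.card = 1
    · obtain ⟨x, rfl⟩ := Finset.card_eq_one.mp h1
      exact hmem x (Finset.mem_singleton_self x)
    · have h2 : 2 ≤ A.card := by
        have := Finset.one_le_card.mpr ⟨a, ha⟩; omega
      have hA' : (A.erase a).Nonempty := by
        rw [← Finset.card_pos, Finset.card_erase_of_mem ha]; omega
      obtain ⟨l, hl, hc⟩ := hswa (A.erase a) {a} hA' (Finset.singleton_nonempty a)
        (Finset.disjoint_singleton_right.mpr (Finset.notMem_erase a A))
      have hu : A.erase a ∪ {a} = A := by
        rw [Finset.union_comm, ← Finset.insert_eq, Finset.insert_erase ha]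
      rw [hu] at hc
      have hprev : f (A.erase a) = p := by
        refine ih (A.erase a).card ?_ _ rfl hA' (fun x hx => hmem x (Finset.mem_of_mem_erase hx))
        rw [Finset.card_erase_of_mem ha]; omega
      rw [hc, hprev, hmem a ha]
      module

private lemma swa_L3 (f : Finset X → H) (hswa : StrictWA f) {A B C : Finset X}
    (hA : A.Nonempty) (hB : B.Nonempty) (hC : C.Nonempty)
    (hAB : Disjoint A B) (hAC : Disjoint A C) (hBC : Disjoint B C)
    (hnc : ¬ Collinear ℝ ({f A, f B, f C} : Set H))
    {l1 l3 l5 : ℝ}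
    (hl1 : l1 ∈ Set.Ioo (0:ℝ) 1) (h1 : f (A ∪ B) = l1 • f A + (1 - l1) • f B)
    (hl3 : l3 ∈ Set.Ioo (0:ℝ) 1) (h3 : f (A ∪ C) = l3 • f A + (1 - l3) • f C)
    (hl5 : l5 ∈ Set.Ioo (0:ℝ) 1) (h5 : f (B ∪ C) = l5 • f B + (1 - l5) • f C) :
    ∃ a b c : ℝ, 0 < a ∧ 0 < b ∧ 0 < c ∧
      l1 * (a + b) = a ∧ l3 * (a + c) = a ∧ l5 * (b + c) = b := by
  obtain ⟨l2, hl2, h2⟩ := hswa (A ∪ B) C (hA.mono Finset.subset_union_left) hC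
    (Finset.disjoint_union_left.mpr ⟨hAC, hBC⟩)
  have E1 : f ((A ∪ B) ∪ C)
      = (l2 * l1) • f A + (l2 * (1 - l1)) • f B + (1 - l2) • f C := by
    rw [h2, h1]; module
  obtain ⟨l4, hl4, h4⟩ := hswa (A ∪ C) B (hA.mono Finset.subset_union_left) hB
    (Finset.disjoint_union_left.mpr ⟨hAB, hBC.symm⟩)
  have hu4 : (A ∪ C) ∪ B = (A ∪ B) ∪ C := Finset.union_right_comm A C B
  have E2 : f ((A ∪ B) ∪ C)
      = (l4 * l3) • f A + (1 - l4) • f B + (l4 * (1 - l3)) • f C := by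
    rw [← hu4, h4, h3]; module
  obtain ⟨l6, hl6, h6⟩ := hswa (B ∪ C) A (hB.mono Finset.subset_union_left) hA
    (Finset.disjoint_union_left.mpr ⟨hAB.symm, hAC.symm⟩)
  have hu6 : (B ∪ C) ∪ A = (A ∪ B) ∪ C := by
    rw [Finset.union_comm (B ∪ C) A, Finset.union_assoc]
  have E3 : f ((A ∪ B) ∪ C)
      = (1 - l6) • f A + (l6 * l5) • f B + (l6 * (1 - l5)) • f C := by
    rw [← hu6, h6, h5]; module
  obtain ⟨q1, q2, q3⟩ := swa_aff3 hnc (by ring) (E1.symm.trans E2)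
  obtain ⟨r1, r2, r3⟩ := swa_aff3 hnc (by ring) (E1.symm.trans E3)
  refine ⟨l2 * l1, l2 * (1 - l1), 1 - l2,
    mul_pos hl2.1 hl1.1, mul_pos hl2.1 (by linarith [hl1.2]), by linarith [hl2.2],
    by ring, ?_, ?_⟩
  · rw [q1, q3]; ring
  · rw [r2, r3]; ring



private lemma swa_exists_w (f : Finset X → H) (hswa : StrictWA f)
    (hext : ∀ p q : H, ∃ t : X, f {t} ∉ affineSpan ℝ ({p, q} : Set H)) :
    ∃ w : X → ℝ, (∀ x, 0 < w x) ∧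
      ∀ x y : X, f {x} ≠ f {y} →
        f ({x} ∪ {y}) = (w x + w y)⁻¹ • (w x • f {x} + w y • f {y}) := by
  classical
  have hpair : ∀ x y : X, ∃ l : ℝ, x ≠ y →
      (l ∈ Set.Ioo (0:ℝ) 1 ∧ f ({x} ∪ {y}) = l • f {x} + (1 - l) • f {y}) := by
    intro x y
    by_cases hxy : x = y
    · exact ⟨1/2, fun h => absurd hxy h⟩
    · obtain ⟨l, hl, hc⟩ := hswa {x} {y} (Finset.singleton_nonempty x)
        (Finset.singleton_nonempty y) (Finset.disjoint_singleton.mpr hxy)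
      exact ⟨l, fun _ => ⟨hl, hc⟩⟩
  choose L hL using hpair
  set r : X → X → ℝ := fun x y => L x y / (1 - L x y) with hrdef
  have hLIoo : ∀ x y : X, x ≠ y → L x y ∈ Set.Ioo (0:ℝ) 1 := fun x y h => (hL x y h).1
  have hrpos : ∀ x y : X, x ≠ y → 0 < r x y := by
    intro x y h
    have := hLIoo x y h
    exact div_pos this.1 (by linarith [this.2])
  have hneel : ∀ x y : X, f {x} ≠ f {y} → x ≠ y := by
    intro x y hv h; exact hv (by rw [h])
  have huniq : ∀ (x y : X) (l' : ℝ), f {x} ≠ f {y} →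
      f ({x} ∪ {y}) = l' • f {x} + (1 - l') • f {y} → l' = L x y := by
    intro x y l' hv hc
    exact swa_aff2 hv (hc.symm.trans (hL x y (hneel x y hv)).2)
  have hsym : ∀ x y : X, f {x} ≠ f {y} → r x y * r y x = 1 := by
    intro x y hv
    have hxy := hneel x y hv
    have hcomb : f ({x} ∪ {y}) = (1 - L y x) • f {x} + (1 - (1 - L y x)) • f {y} := by
      have h2 := (hL y x hxy.symm).2
      rw [Finset.union_comm] at h2
      rw [h2]; module
    have h1 : (1 - L y x) = L x y := huniq x y _ hv hcomb
    have hx := hLIoo x y hxy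
    have hy := hLIoo y x hxy.symm
    have d1 : (1 - L x y) ≠ 0 := ne_of_gt (by linarith [hx.2])
    have d2 : (1 - L y x) ≠ 0 := ne_of_gt (by linarith [hy.2])
    have hv' : L y x = 1 - L x y := by linarith
    have hnz : L x y ≠ 0 := ne_of_gt hx.1
    simp only [hrdef, hv']
    rw [show (1:ℝ) - (1 - L x y) = L x y by ring, div_mul_div_comm,
      mul_comm (1 - L x y) (L x y)]
    exact div_self (mul_ne_zero hnz d1)
  have hcocA : ∀ x y z : X, ¬ Collinear ℝ ({f {x}, f {y}, f {z}} : Set H) →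
      r x y * r y z = r x z := by
    intro x y z hnc
    have hxy : f {x} ≠ f {y} := by
      intro h; apply hnc
      have hset : ({f {x}, f {y}, f {z}} : Set H) = {f {y}, f {z}} := by
        rw [h]; ext u; simp only [Set.mem_insert_iff, Set.mem_singleton_iff]; tauto
      rw [hset]; exact collinear_pair ℝ _ _
    have hxz : f {x} ≠ f {z} := by
      intro h; apply hnc
      have hset : ({f {x}, f {y}, f {z}} : Set H) = {f {z}, f {y}} := by
        rw [h]; ext u; simp only [Set.mem_insert_iff, Set.mem_singleton_iff]; tauto
      rw [hset]; exact collinear_pair ℝ _ _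
    have hyz : f {y} ≠ f {z} := by
      intro h; apply hnc
      have hset : ({f {x}, f {y}, f {z}} : Set H) = {f {x}, f {z}} := by
        rw [h]; ext u; simp only [Set.mem_insert_iff, Set.mem_singleton_iff]; tauto
      rw [hset]; exact collinear_pair ℝ _ _
    obtain ⟨a, b, c, hap, hbp, hcp, e1, e2, e3⟩ := swa_L3 f hswa
      (Finset.singleton_nonempty x) (Finset.singleton_nonempty y) (Finset.singleton_nonempty z)
      (Finset.disjoint_singleton.mpr (hneel x y hxy))
      (Finset.disjoint_singleton.mpr (hneel x z hxz))
      (Finset.disjoint_singleton.mpr (hneel y z hyz))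
      hnc
      (hLIoo x y (hneel x y hxy)) (hL x y (hneel x y hxy)).2
      (hLIoo x z (hneel x z hxz)) (hL x z (hneel x z hxz)).2
      (hLIoo y z (hneel y z hyz)) (hL y z (hneel y z hyz)).2
    have i1 := hLIoo x y (hneel x y hxy)
    have i2 := hLIoo x z (hneel x z hxz)
    have i3 := hLIoo y z (hneel y z hyz)
    have d1 : (1 - L x y) ≠ 0 := ne_of_gt (by linarith [i1.2])
    have d2 : (1 - L x z) ≠ 0 := ne_of_gt (by linarith [i2.2])
    have d3 : (1 - L y z) ≠ 0 := ne_of_gt (by linarith [i3.2])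
    have hxyr : r x y = a / b := by
      simp only [hrdef]
      rw [div_eq_div_iff d1 (ne_of_gt hbp)]
      linear_combination e1
    have hxzr : r x z = a / c := by
      simp only [hrdef]
      rw [div_eq_div_iff d2 (ne_of_gt hcp)]
      linear_combination e2
    have hyzr : r y z = b / c := by
      simp only [hrdef]
      rw [div_eq_div_iff d3 (ne_of_gt hcp)]
      linear_combination e3
    rw [hxyr, hxzr, hyzr]
    rw [div_mul_div_comm]
    rw [div_eq_div_iff (by positivity) (ne_of_gt hcp)]
    ring
  have hcoc : ∀ x y z : X, f {x} ≠ f {y} → f {x} ≠ f {z} → f {y} ≠ f {z} →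
      r x y * r y z = r x z := by
    intro x y z hxy hxz hyz
    by_cases hnc : Collinear ℝ ({f {x}, f {y}, f {z}} : Set H)
    · obtain ⟨t, ht⟩ := hext (f {x}) (f {y})
      have htx : f {t} ≠ f {x} := fun h => ht (h ▸ left_mem_affineSpan_pair ℝ _ _)
      have hty : f {t} ≠ f {y} := fun h => ht (h ▸ right_mem_affineSpan_pair ℝ _ _)
      have hz_mem : f {z} ∈ line[ℝ, f {x}, f {y}] :=
        hnc.mem_affineSpan_of_mem_of_ne (Set.mem_insert _ _)
          (by simp) (by simp) hxy
      have htz : f {t} ≠ f {z} := fun h => ht (h ▸ hz_mem)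
      have nc1 : ¬ Collinear ℝ ({f {x}, f {t}, f {y}} : Set H) := by
        intro hc
        exact ht (hc.mem_affineSpan_of_mem_of_ne (p₁ := f {x}) (p₂ := f {y}) (p₃ := f {t})
          (Set.mem_insert _ _) (by simp) (by simp) hxy)
      have nc2 : ¬ Collinear ℝ ({f {y}, f {t}, f {z}} : Set H) := by
        intro hc
        have h1 : f {t} ∈ line[ℝ, f {y}, f {z}] :=
          hc.mem_affineSpan_of_mem_of_ne (by simp) (by simp) (by simp) hyz
        have h2 : line[ℝ, f {y}, f {z}] ≤ line[ℝ, f {x}, f {y}] :=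
          affineSpan_pair_le_of_mem_of_mem (right_mem_affineSpan_pair ℝ _ _) hz_mem
        exact ht (h2 h1)
      have nc3 : ¬ Collinear ℝ ({f {x}, f {t}, f {z}} : Set H) := by
        intro hc
        have h1 : f {t} ∈ line[ℝ, f {x}, f {z}] :=
          hc.mem_affineSpan_of_mem_of_ne (by simp) (by simp) (by simp) hxz
        have h2 : line[ℝ, f {x}, f {z}] ≤ line[ℝ, f {x}, f {y}] :=
          affineSpan_pair_le_of_mem_of_mem (left_mem_affineSpan_pair ℝ _ _) hz_mem
        exact ht (h2 h1)
      have c1 := hcocA x t y nc1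
      have c2 := hcocA y t z nc2
      have c3 := hcocA x t z nc3
      have hs := hsym t y hty
      calc r x y * r y z = (r x t * r t y) * (r y t * r t z) := by rw [c1, c2]
        _ = (r x t * r t z) * (r t y * r y t) := by ring
        _ = r x t * r t z := by
              rw [mul_comm (r t y) (r y t), hsym y t hty.symm]; ring
        _ = r x z := c3
    · exact hcocA x y z hnc
  have hWd : ∀ x x' t t' : X, f {x} = f {x'} → f {t} ≠ f {x} → f {t'} ≠ f {x} →
      r x t * r t x' = r x t' * r t' x' := by
    intro x x' t t' hxx htx ht'x
    have htx' : f {t} ≠ f {x'} := by rw [← hxx]; exact htx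
    have ht'x' : f {t'} ≠ f {x'} := by rw [← hxx]; exact ht'x
    by_cases htt : f {t} = f {t'}
    · obtain ⟨s, hs⟩ := hext (f {x}) (f {t})
      have hsx : f {s} ≠ f {x} := fun h => hs (h ▸ left_mem_affineSpan_pair ℝ _ _)
      have hst : f {s} ≠ f {t} := fun h => hs (h ▸ right_mem_affineSpan_pair ℝ _ _)
      have hst' : f {s} ≠ f {t'} := by rw [← htt]; exact hst
      have hsx' : f {s} ≠ f {x'} := by rw [← hxx]; exact hsx
      have c1 := hcoc x s t hsx.symm htx.symm hst
      have c2 := hcoc t s x' hst.symm htx' hsx'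
      have c1' := hcoc x s t' hsx.symm ht'x.symm hst'
      have c2' := hcoc t' s x' hst'.symm ht'x' hsx'
      have q1 := hsym s t hst
      have q2 := hsym s t' hst'
      have e : r x t * r t x' = r x s * r s x' := by
        rw [← c1, ← c2]
        linear_combination (r x s * r s x') * q1
      have e' : r x t' * r t' x' = r x s * r s x' := by
        rw [← c1', ← c2']
        linear_combination (r x s * r s x') * q2
      rw [e, e']
    · have htt' : f {t'} ≠ f {t} := fun h => htt h.symm
      have c1 := hcoc x t' t ht'x.symm htx.symm htt'
      have c2 := hcoc t' t x' htt' ht'x' htx'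
      calc r x t * r t x' = r x t' * (r t' t * r t x') := by rw [← c1]; ring
        _ = r x t' * r t' x' := by rw [c2]
  obtain ⟨x₀, -⟩ := hext 0 0
  obtain ⟨y₀, hy₀'⟩ := hext (f {x₀}) (f {x₀})
  have hy₀ : f {y₀} ≠ f {x₀} := fun h => hy₀' (h ▸ left_mem_affineSpan_pair ℝ _ _)
  set w : X → ℝ := fun x => if f {x} = f {x₀} then r x y₀ * r y₀ x₀ else r x x₀ with hwdef
  have hwpos : ∀ x, 0 < w x := by
    intro x
    simp only [hwdef]
    by_cases h : f {x} = f {x₀}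
    · rw [if_pos h]
      exact mul_pos (hrpos x y₀ (fun he => hy₀ (by rw [← he, h])))
        (hrpos y₀ x₀ (hneel y₀ x₀ hy₀))
    · rw [if_neg h]
      exact hrpos x x₀ (hneel x x₀ h)
  have hr : ∀ x y : X, f {x} ≠ f {y} → r x y * w y = w x := by
    intro x y hv
    by_cases hx0 : f {x} = f {x₀} <;> by_cases hy0 : f {y} = f {x₀}
    · exact absurd (hx0.trans hy0.symm) hv
    · simp only [hwdef]
      simp only [if_pos hx0, if_neg hy0]
      exact hWd x x₀ y y₀ hx0 hv.symm (fun h => hy₀ (h.trans hx0))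
    · simp only [hwdef]
      simp only [if_neg hx0, if_pos hy0]
      have e1 : r y y₀ * r y₀ x₀ = r y x * r x x₀ :=
        hWd y x₀ y₀ x hy0 (fun h => hy₀ (h.trans hy0)) hv
      rw [e1]
      have q := hsym x y hv
      linear_combination (r x x₀) * q
    · simp only [hwdef]
      simp only [if_neg hx0, if_neg hy0]
      exact hcoc x y x₀ hv hx0 hy0
  refine ⟨w, hwpos, ?_⟩
  intro x y hv
  have hxy := hneel x y hv
  have hc := (hL x y hxy).2
  have hrr := hr x y hv
  have hIoo := hLIoo x y hxy
  have d1 : (1 - L x y) ≠ 0 := ne_of_gt (by linarith [hIoo.2])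
  have hL1 : L x y * (w x + w y) = w x := by
    simp only [hrdef] at hrr
    rw [div_mul_eq_mul_div, div_eq_iff d1] at hrr
    linear_combination hrr
  have hwx := hwpos x
  have hwy := hwpos y
  have dw : w x + w y ≠ 0 := by positivity
  rw [hc]
  match_scalars
  · field_simp
    linear_combination hL1
  · field_simp
    linear_combination -hL1
private lemma swa_cluster (f : Finset X → H) (hswa : StrictWA f)
    (hext : ∀ p q : H, ∃ t : X, f {t} ∉ affineSpan ℝ ({p, q} : Set H))
    (w : X → ℝ) (hw : ∀ x, 0 < w x)
    (hP2 : ∀ x y : X, f {x} ≠ f {y} →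
      f ({x} ∪ {y}) = (w x + w y)⁻¹ • (w x • f {x} + w y • f {y}))
    (p : H) :
    ∀ (n : ℕ) (B : Finset X), B.card = n → B.Nonempty → (∀ x ∈ B, f {x} = p) →
      ∀ u : X, u ∉ B → f {u} ≠ p →
        f (B ∪ {u}) = ((∑ x ∈ B, w x) + w u)⁻¹ • ((∑ x ∈ B, w x) • p + w u • f {u}) := by
  intro n
  induction n using Nat.strong_induction_on with
  | _ n ih =>
    intro B hcard hB hcl u huB hup
    by_cases h1 : B.card = 1
    · obtain ⟨b, rfl⟩ := Finset.card_eq_one.mp h1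
      have hbu : f {b} ≠ f {u} := by
        rw [hcl b (Finset.mem_singleton_self b)]; exact fun h => hup h.symm
      rw [hP2 b u hbu, Finset.sum_singleton, hcl b (Finset.mem_singleton_self b)]
    · have h2 : 2 ≤ B.card := by
        have := Finset.one_le_card.mpr hB; omega
      obtain ⟨b, hbB⟩ := hB
      have hBne : B.Nonempty := ⟨b, hbB⟩
      set B' := B.erase b with hB'def
      have hB' : B'.Nonempty := by
        rw [← Finset.card_pos, hB'def, Finset.card_erase_of_mem hbB]; omega
      have hclB' : ∀ x ∈ B', f {x} = p := fun x hx => hcl x (Finset.mem_of_mem_erase hx)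
      obtain ⟨s, hs⟩ := hext p (f {u})
      have hsp : f {s} ≠ p := fun h => hs (h ▸ left_mem_affineSpan_pair ℝ _ _)
      have hsu : f {s} ≠ f {u} := fun h => hs (h ▸ right_mem_affineSpan_pair ℝ _ _)
      have hsB : s ∉ B := fun h => hsp (hcl s h)
      have hsB' : s ∉ B' := fun h => hsB (Finset.mem_of_mem_erase h)
      have hsu' : s ≠ u := fun h => hsu (by rw [h])
      have hsb : s ≠ b := fun h => hsp (by rw [h]; exact hcl b hbB)
      have hbu_el : b ≠ u := fun h => huB (h ▸ hbB)
      have hnc : ¬ Collinear ℝ ({p, f {u}, f {s}} : Set H) := by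
        intro hc
        exact hs (hc.mem_affineSpan_of_mem_of_ne (by simp) (by simp) (by simp)
          (fun h => hup h.symm))
      set W' : ℝ := ∑ x ∈ B', w x with hW'
      have hW'pos : 0 < W' := Finset.sum_pos (fun i _ => hw i) hB'
      have hWB : ∑ x ∈ B, w x = W' + w b := by
        rw [hW', hB'def]
        exact (Finset.sum_erase_add B w hbB).symm
      -- abbreviations
      have hwb := hw b; have hwu := hw u; have hws := hw s
      have hdus : (0:ℝ) < w u + w s := by linarith
      have hdbu : (0:ℝ) < w b + w u := by linarith
      have hdWs : (0:ℝ) < W' + w s := by linarith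
      set D : ℝ := (w u + w s) * ((W' + w s) * (w b + w u)) with hD
      have hDpos : 0 < D := by positivity
      -- known representations
      have K1 : f (B' ∪ {s}) = (W' + w s)⁻¹ • (W' • p + w s • f {s}) := by
        have := ih B'.card (by rw [hB'def, Finset.card_erase_of_mem hbB]; omega)
          B' rfl hB' hclB' s hsB' hsp
        rw [← hW'] at this
        exact this
      have K2 : f ({b} ∪ {u}) = (w b + w u)⁻¹ • (w b • p + w u • f {u}) := by
        rw [hP2 b u (by rw [hcl b hbB]; exact fun h => hup h.symm), hcl b hbB]
      have K3 : f ({u} ∪ {s}) = (w u + w s)⁻¹ • (w u • f {u} + w s • f {s}) :=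
        hP2 u s (fun h => hsu h.symm)
      have K4 : f B = p := swa_cl f hswa p B.card B rfl ⟨b, hbB⟩ hcl
      -- lambdas from SWA
      obtain ⟨lam, hlam, hglam⟩ := hswa B {u} hBne (Finset.singleton_nonempty u)
        (Finset.disjoint_singleton_right.mpr huB)
      obtain ⟨sig, hsig, hgsig⟩ := hswa (B ∪ {u}) {s}
        (hBne.mono Finset.subset_union_left) (Finset.singleton_nonempty s)
        (Finset.disjoint_singleton_right.mpr (by
          simp only [Finset.mem_union, Finset.mem_singleton]
          rintro (h | h); exact hsB h; exact hsu' h))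
      obtain ⟨kap, hkap, hgkap⟩ := hswa B ({u} ∪ {s}) hBne
        ((Finset.singleton_nonempty u).mono Finset.subset_union_left)
        (Finset.disjoint_union_right.mpr ⟨Finset.disjoint_singleton_right.mpr huB,
          Finset.disjoint_singleton_right.mpr hsB⟩)
      obtain ⟨rho, hrho, hgrho⟩ := hswa (B' ∪ {s}) ({b} ∪ {u})
        (hB'.mono Finset.subset_union_left)
        ((Finset.singleton_nonempty b).mono Finset.subset_union_left)
        (Finset.disjoint_union_left.mpr ⟨Finset.disjoint_union_right.mpr
            ⟨Finset.disjoint_singleton_right.mpr (Finset.notMem_erase b B),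
             Finset.disjoint_singleton_right.mpr (fun h => huB (Finset.mem_of_mem_erase h))⟩,
          Finset.disjoint_union_right.mpr ⟨Finset.disjoint_singleton.mpr hsb,
            Finset.disjoint_singleton.mpr hsu'⟩⟩)
      -- set equalities
      have hu1 : B ∪ ({u} ∪ {s}) = (B ∪ {u}) ∪ {s} := (Finset.union_assoc B {u} {s}).symm
      have hu2 : (B' ∪ {s}) ∪ ({b} ∪ {u}) = (B ∪ {u}) ∪ {s} := by
        ext z
        simp only [hB'def, Finset.mem_union, Finset.mem_erase, Finset.mem_singleton]
        by_cases hzb : z = b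
        · subst hzb; simp [hbB]
        · simp [hzb]; tauto
      rw [hu1] at hgkap
      rw [hu2] at hgrho
      -- frame coordinate forms
      have F1 : D • f ((B ∪ {u}) ∪ {s}) = (D * (sig * lam)) • p
          + (D * (sig * (1 - lam))) • f {u} + (D * (1 - sig)) • f {s} := by
        rw [hgsig, hglam, K4]; module
      have F3 : D • f ((B ∪ {u}) ∪ {s}) = (D * kap) • p
          + ((1 - kap) * w u * ((W' + w s) * (w b + w u))) • f {u}
          + ((1 - kap) * w s * ((W' + w s) * (w b + w u))) • f {s} := by
        rw [hgkap, K3, K4]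
        match_scalars
        · field_simp
        · field_simp; ring
        · field_simp; ring
      have F2 : D • f ((B ∪ {u}) ∪ {s}) =
          (rho * W' * ((w u + w s) * (w b + w u))
            + (1 - rho) * w b * ((w u + w s) * (W' + w s))) • p
          + ((1 - rho) * w u * ((w u + w s) * (W' + w s))) • f {u}
          + (rho * w s * ((w u + w s) * (w b + w u))) • f {s} := by
        rw [hgrho, K1, K2]
        match_scalars
        · field_simp; ring
        · field_simp; ring
        · field_simp; ring
      obtain ⟨q1, q2, q3⟩ := swa_aff3 hnc (by rw [hD]; ring) (F3.symm.trans F2)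
      obtain ⟨r1, r2, r3⟩ := swa_aff3 hnc (by rw [hD]; ring) (F1.symm.trans F2)
      -- scalar algebra
      have e2 : (1 - kap) * (w b + w u) = (1 - rho) * (w u + w s) :=
        mul_right_cancel₀ (ne_of_gt (mul_pos hwu hdWs)) (by linear_combination q2)
      have e3 : (1 - kap) * (W' + w s) = rho * (w u + w s) :=
        mul_right_cancel₀ (ne_of_gt (mul_pos hws hdbu)) (by linear_combination q3)
      have e4 : (1 - rho) * (W' + w s) = rho * (w b + w u) :=
        mul_right_cancel₀ (ne_of_gt hdus)
          (by linear_combination (-(W' + w s)) * e2 + (w b + w u) * e3)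
      have r1' : (D * (sig * lam)) = rho * (W' + w b) * ((w u + w s) * (w b + w u)) := by
        rw [hD] at r1 ⊢
        linear_combination r1 + w b * (w u + w s) * e4
      have r2' : (D * (sig * (1 - lam))) = rho * w u * ((w u + w s) * (w b + w u)) := by
        rw [hD] at r2 ⊢
        linear_combination r2 + w u * (w u + w s) * e4
      have hsigD : sig * D ≠ 0 := ne_of_gt (mul_pos hsig.1 hDpos)
      have key : (sig * D) * (lam * w u) = (sig * D) * ((1 - lam) * (W' + w b)) := by
        linear_combination w u * r1' - (W' + w b) * r2'
      have hfin : lam * w u = (1 - lam) * (W' + w b) := mul_left_cancel₀ hsigD key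
      have hlamval : lam * ((W' + w b) + w u) = W' + w b := by linear_combination hfin
      -- conclude
      rw [hglam, K4, hWB]
      have hT : (0:ℝ) < W' + w b + w u := by linarith
      match_scalars
      · field_simp
        linear_combination hlamval
      · field_simp
        linear_combination (-(1:ℝ)) * hlamval
private lemma swa_flat (f : Finset X → H) (hswa : StrictWA f)
    (hext : ∀ p q : H, ∃ t : X, f {t} ∉ affineSpan ℝ ({p, q} : Set H))
    (w : X → ℝ) (hw : ∀ x, 0 < w x)
    (hP2 : ∀ x y : X, f {x} ≠ f {y} →
      f ({x} ∪ {y}) = (w x + w y)⁻¹ • (w x • f {x} + w y • f {y})) :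
    ∀ (n : ℕ) (B : Finset X), B.card = n → B.Nonempty →
      (∀ C : Finset X, C.Nonempty → C ⊆ B →
        f C = (∑ x ∈ C, w x)⁻¹ • ∑ x ∈ C, w x • f {x}) →
      ∀ t : X, f {t} ∉ affineSpan ℝ ((fun x => f {x}) '' (B : Set X)) →
        f (B ∪ {t}) = ((∑ x ∈ B, w x) + w t)⁻¹ • ((∑ x ∈ B, w x) • f B + w t • f {t}) := by
  intro n
  induction n using Nat.strong_induction_on with
  | _ n ih =>
    intro B hcard hB hrep t htB
    have hmemS : ∀ x ∈ B, f {x} ∈ affineSpan ℝ ((fun x => f {x}) '' (B : Set X)) :=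
      fun x hx => subset_affineSpan ℝ _ ⟨x, hx, rfl⟩
    have htne : ∀ x ∈ B, f {t} ≠ f {x} := fun x hx h => htB (h ▸ hmemS x hx)
    have htBel : t ∉ B := fun h => (htne t h) rfl
    by_cases h1 : B.card = 1
    · obtain ⟨b, rfl⟩ := Finset.card_eq_one.mp h1
      rw [hP2 b t (fun h => htne b (Finset.mem_singleton_self b) h.symm),
        Finset.sum_singleton]
    · have h2 : 2 ≤ B.card := by
        have := Finset.one_le_card.mpr hB; omega
      by_cases hcl : ∀ b ∈ B, f (B.erase b) = f {b}
      · -- cluster case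
        have hpB : ∀ b ∈ B, f {b} = f B := by
          intro b hb
          have hBe : (B.erase b).Nonempty := by
            rw [← Finset.card_pos, Finset.card_erase_of_mem hb]; omega
          obtain ⟨l, hl, hc⟩ := hswa (B.erase b) {b} hBe (Finset.singleton_nonempty b)
            (Finset.disjoint_singleton_right.mpr (Finset.notMem_erase b B))
          have hu : B.erase b ∪ {b} = B := by
            rw [Finset.union_comm, ← Finset.insert_eq, Finset.insert_erase hb]
          rw [hu, hcl b hb] at hc
          rw [hc]; module
        obtain ⟨b0, hb0⟩ := hB
        exact swa_cluster f hswa hext w hw hP2 (f B) B.card B rfl ⟨b0, hb0⟩ hpB t htBel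
          (fun h => htne b0 hb0 (h.trans (hpB b0 hb0).symm))
      · push_neg at hcl
        obtain ⟨b, hbB, hne⟩ := hcl
        have hBne : B.Nonempty := ⟨b, hbB⟩
        set B' := B.erase b with hB'def
        have hB' : B'.Nonempty := by
          rw [← Finset.card_pos, hB'def, Finset.card_erase_of_mem hbB]; omega
        set W' : ℝ := ∑ x ∈ B', w x with hW'
        set Wb : ℝ := ∑ x ∈ B, w x with hWb
        have hW'pos : 0 < W' := Finset.sum_pos (fun i _ => hw i) hB'
        have hWbpos : 0 < Wb := Finset.sum_pos (fun i _ => hw i) hBne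
        have hwb := hw b; have hwt := hw t
        have hWB : Wb = W' + w b := by
          rw [hWb, hW', hB'def]
          exact (Finset.sum_erase_add B w hbB).symm
        have hdWt : (0:ℝ) < W' + w t := by linarith
        have hrepB := hrep B hBne (subset_refl B)
        have hrepB' := hrep B' hB' (Finset.erase_subset b B)
        have hsumB' : W' • f B' = ∑ x ∈ B', w x • f {x} := by
          rw [hrepB', smul_smul, mul_inv_cancel₀ (ne_of_gt hW'pos), one_smul]
        have hfB : f B = Wb⁻¹ • (W' • f B' + w b • f {b}) := by
          rw [hrepB]
          congr 1
          rw [hsumB', hB'def]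
          exact (Finset.sum_erase_add B _ hbB).symm
        have hfB'mem : f B' ∈ affineSpan ℝ ((fun x => f {x}) '' (B : Set X)) :=
          swa_mem f hswa _ B'.card B' rfl hB'
            (fun x hx => hmemS x (Finset.mem_of_mem_erase hx))
        have hfbmem := hmemS b hbB
        have hfne : f B' ≠ f {b} := hne
        have hnc : ¬ Collinear ℝ ({f B', f {b}, f {t}} : Set H) := by
          intro hc
          have hm1 : f {t} ∈ line[ℝ, f B', f {b}] :=
            hc.mem_affineSpan_of_mem_of_ne (by simp) (by simp) (by simp) hfne
          exact htB (affineSpan_pair_le_of_mem_of_mem hfB'mem hfbmem hm1)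
        have hspanle : affineSpan ℝ ((fun x => f {x}) '' (B' : Set X))
            ≤ affineSpan ℝ ((fun x => f {x}) '' (B : Set X)) := by
          apply affineSpan_mono
          exact Set.image_mono (Finset.coe_subset.mpr (Finset.erase_subset b B))
        have K1 : f (B' ∪ {t}) = (W' + w t)⁻¹ • (W' • f B' + w t • f {t}) := by
          have hKr := ih B'.card (by rw [hB'def, Finset.card_erase_of_mem hbB]; omega)
            B' rfl hB' (fun C hC hCB => hrep C hC (hCB.trans (Finset.erase_subset b B)))
            t (fun h => htB (hspanle h))
          rw [← hW'] at hKr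
          exact hKr
        obtain ⟨lam, hlam, hglam⟩ := hswa B {t} hBne (Finset.singleton_nonempty t)
          (Finset.disjoint_singleton_right.mpr htBel)
        have hbt : b ≠ t := fun h => htBel (h ▸ hbB)
        obtain ⟨mu, hmu, hgmu⟩ := hswa (B' ∪ {t}) {b} (hB'.mono Finset.subset_union_left)
          (Finset.singleton_nonempty b)
          (Finset.disjoint_singleton_right.mpr (by
            simp only [Finset.mem_union, Finset.mem_singleton, hB'def]
            rintro (h | h)
            · exact Finset.notMem_erase b B h
            · exact hbt h))
        have hu2 : (B' ∪ {t}) ∪ {b} = B ∪ {t} := by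
          ext z
          simp only [hB'def, Finset.mem_union, Finset.mem_erase, Finset.mem_singleton]
          by_cases hzb : z = b
          · subst hzb; simp [hbB]
          · simp [hzb] <;> tauto
        rw [hu2] at hgmu
        have F1 : (Wb * (W' + w t)) • f (B ∪ {t})
            = (lam * W' * (W' + w t)) • f B' + (lam * w b * (W' + w t)) • f {b}
              + ((1 - lam) * (Wb * (W' + w t))) • f {t} := by
          rw [hglam, hfB]
          match_scalars <;> field_simp <;> ring
        have F2 : (Wb * (W' + w t)) • f (B ∪ {t})
            = (mu * W' * Wb) • f B' + ((1 - mu) * (Wb * (W' + w t))) • f {b}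
              + (mu * w t * Wb) • f {t} := by
          rw [hgmu, K1]
          match_scalars <;> field_simp <;> ring
        obtain ⟨q1, q2, q3⟩ := swa_aff3 hnc (by rw [hWB]; ring) (F1.symm.trans F2)
        have e1 : lam * (W' + w t) = mu * Wb :=
          mul_right_cancel₀ (ne_of_gt hW'pos) (by linear_combination q1)
        have e3 : (1 - lam) * (W' + w t) = mu * w t :=
          mul_right_cancel₀ (ne_of_gt hWbpos) (by linear_combination q3)
        have key : ((1 - lam) * Wb) * (W' + w t) = (lam * w t) * (W' + w t) := by
          linear_combination Wb * e3 - w t * e1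
        have hfin : (1 - lam) * Wb = lam * w t :=
          mul_right_cancel₀ (ne_of_gt hdWt) key
        have hlamval : lam * (Wb + w t) = Wb := by
          linear_combination (-1 : ℝ) * hfin
        rw [hglam]
        have hWbt : (0:ℝ) < Wb + w t := by linarith
        match_scalars
        · field_simp
          linear_combination hlamval
        · field_simp
          linear_combination (-1 : ℝ) * hlamval
private lemma swa_rep (f : Finset X → H) (hswa : StrictWA f)
    (hext : ∀ p q : H, ∃ t : X, f {t} ∉ affineSpan ℝ ({p, q} : Set H))
    (w : X → ℝ) (hw : ∀ x, 0 < w x)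
    (hP2 : ∀ x y : X, f {x} ≠ f {y} →
      f ({x} ∪ {y}) = (w x + w y)⁻¹ • (w x • f {x} + w y • f {y})) :
    ∀ (n : ℕ) (A : Finset X), A.card = n → A.Nonempty →
      f A = (∑ x ∈ A, w x)⁻¹ • ∑ x ∈ A, w x • f {x} := by
  intro n
  induction n using Nat.strong_induction_on with
  | _ n ih =>
    intro A hcard hA
    by_cases h1 : A.card = 1
    · obtain ⟨a, rfl⟩ := Finset.card_eq_one.mp h1
      rw [Finset.sum_singleton, Finset.sum_singleton, smul_smul,
        inv_mul_cancel₀ (ne_of_gt (hw a)), one_smul]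
    · have h2 : 2 ≤ A.card := by
        have := Finset.one_le_card.mpr hA; omega
      have hWApos : 0 < ∑ x ∈ A, w x := Finset.sum_pos (fun i _ => hw i) hA
      by_contra hcon
      have herase : ∀ a ∈ A, (A.erase a).Nonempty ∧
          f (A.erase a) = (∑ x ∈ A.erase a, w x)⁻¹ • ∑ x ∈ A.erase a, w x • f {x} := by
        intro a ha
        have hne : (A.erase a).Nonempty := by
          rw [← Finset.card_pos, Finset.card_erase_of_mem ha]; omega
        refine ⟨hne, ih (A.erase a).card ?_ _ rfl hne⟩
        rw [Finset.card_erase_of_mem ha]; omega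
      have hvcombo : ∀ a ∈ A,
          (∑ x ∈ A, w x)⁻¹ • ∑ x ∈ A, w x • f {x}
            = ((∑ x ∈ A.erase a, w x) / (∑ x ∈ A, w x)) • f (A.erase a)
              + (w a / (∑ x ∈ A, w x)) • f {a} := by
        intro a ha
        obtain ⟨hne, hrepE⟩ := herase a ha
        have hW'pos : 0 < ∑ x ∈ A.erase a, w x := Finset.sum_pos (fun i _ => hw i) hne
        have hsum : ∑ x ∈ A, w x • f {x}
            = (∑ x ∈ A.erase a, w x • f {x}) + w a • f {a} :=
          (Finset.sum_erase_add A _ ha).symm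
        have hsub' : (0:ℝ) < ∑ x ∈ A, w x - w a := by
          have := Finset.sum_erase_add A w ha
          linarith
        rw [hsum, hrepE]
        match_scalars <;> field_simp [hsub'.ne', hWApos.ne'] <;> ring
      have hu : ∀ a ∈ A, A.erase a ∪ {a} = A := by
        intro a ha
        rw [Finset.union_comm, ← Finset.insert_eq, Finset.insert_erase ha]
      by_cases hex : ∃ a ∈ A, f (A.erase a) = f {a}
      · obtain ⟨a, ha, heq⟩ := hex
        obtain ⟨hne, hrepE⟩ := herase a ha
        obtain ⟨l, hl, hc⟩ := hswa (A.erase a) {a} hne (Finset.singleton_nonempty a)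
          (Finset.disjoint_singleton_right.mpr (Finset.notMem_erase a A))
        rw [hu a ha, heq] at hc
        refine hcon ?_
        rw [hc, hvcombo a ha, heq]
        have hWsplit := Finset.sum_erase_add A w ha
        match_scalars <;> field_simp <;> linarith [hWsplit]
      · push_neg at hex
        have hflat : ∀ a ∈ A, f {a} ∈
            line[ℝ, f A, (∑ x ∈ A, w x)⁻¹ • ∑ x ∈ A, w x • f {x}] := by
          intro a ha
          obtain ⟨hne, hrepE⟩ := herase a ha
          have hW'pos : 0 < ∑ x ∈ A.erase a, w x := Finset.sum_pos (fun i _ => hw i) hne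
          obtain ⟨l, hl, hc⟩ := hswa (A.erase a) {a} hne (Finset.singleton_nonempty a)
            (Finset.disjoint_singleton_right.mpr (Finset.notMem_erase a A))
          rw [hu a ha] at hc
          set m := (∑ x ∈ A.erase a, w x) / (∑ x ∈ A, w x) with hm
          have hWsplit := Finset.sum_erase_add A w ha
          have hm1 : w a / (∑ x ∈ A, w x) = 1 - m := by
            rw [hm, eq_sub_iff_add_eq, ← add_div, div_eq_one_iff_eq hWApos.ne']
            linarith [hWsplit]
          have hvc : (∑ x ∈ A, w x)⁻¹ • ∑ x ∈ A, w x • f {x}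
              = m • f (A.erase a) + (1 - m) • f {a} := by
            rw [hvcombo a ha, hm1]
          have hlm : l ≠ m := by
            intro h
            exact hcon (by rw [hc, h, ← hvc])
          have hdiff : ((∑ x ∈ A, w x)⁻¹ • ∑ x ∈ A, w x • f {x}) - f A
              = (m - l) • (f (A.erase a) - f {a}) := by
            rw [hc, hvc]; module
          have hlmne : l - m ≠ 0 := sub_ne_zero.mpr hlm
          have hpt : f {a} = (l / (l - m)) •
              (((∑ x ∈ A, w x)⁻¹ • ∑ x ∈ A, w x • f {x}) -ᵥ f A) +ᵥ f A := by
            rw [vsub_eq_sub, vadd_eq_add, hdiff, hc]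
            match_scalars
            · field_simp; ring
            · field_simp; ring
          rw [hpt]
          exact AffineSubspace.smul_vsub_vadd_mem _ _
            (right_mem_affineSpan_pair ℝ _ _) (left_mem_affineSpan_pair ℝ _ _)
            (left_mem_affineSpan_pair ℝ _ _)
        obtain ⟨t, ht⟩ := hext (f A) ((∑ x ∈ A, w x)⁻¹ • ∑ x ∈ A, w x • f {x})
        obtain ⟨a, ha⟩ := hA
        obtain ⟨hneE, hrepE⟩ := herase a ha
        have htnotA : t ∉ A := fun h => ht (hflat t h)
        have hta : t ≠ a := fun h => htnotA (h ▸ ha)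
        have hsub : affineSpan ℝ ((fun x => f {x}) '' ((A.erase a) : Set X))
            ≤ line[ℝ, f A, (∑ x ∈ A, w x)⁻¹ • ∑ x ∈ A, w x • f {x}] := by
          rw [affineSpan_le]
          rintro _ ⟨x, hx, rfl⟩
          exact hflat x (Finset.mem_of_mem_erase hx)
        have htE : f {t} ∉ affineSpan ℝ ((fun x => f {x}) '' ((A.erase a) : Set X)) :=
          fun h => ht (hsub h)
        have K1 := swa_flat f hswa hext w hw hP2 (A.erase a).card (A.erase a) rfl hneE
          (fun C hC hCA => ih C.card ((Finset.card_le_card hCA).trans_lt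
            (by rw [Finset.card_erase_of_mem ha]; omega)) C rfl hC) t htE
        have hfA'mem : f (A.erase a) ∈
            line[ℝ, f A, (∑ x ∈ A, w x)⁻¹ • ∑ x ∈ A, w x • f {x}] :=
          swa_mem f hswa _ (A.erase a).card _ rfl hneE
            (fun x hx => hflat x (Finset.mem_of_mem_erase hx))
        have hfamem := hflat a ha
        have hfne : f (A.erase a) ≠ f {a} := hex a ha
        have hnc : ¬ Collinear ℝ ({f (A.erase a), f {a}, f {t}} : Set H) := by
          intro hc
          exact ht (affineSpan_pair_le_of_mem_of_mem hfA'mem hfamem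
            (hc.mem_affineSpan_of_mem_of_ne (by simp) (by simp) (by simp) hfne))
        obtain ⟨l1, hl1, hc1⟩ := hswa (A.erase a) {a} hneE (Finset.singleton_nonempty a)
          (Finset.disjoint_singleton_right.mpr (Finset.notMem_erase a A))
        set W' : ℝ := ∑ x ∈ A.erase a, w x with hW'
        have hW'pos : 0 < W' := Finset.sum_pos (fun i _ => hw i) hneE
        have hwa := hw a; have hwt := hw t
        have hdWt : (0:ℝ) < W' + w t := by linarith
        have hdWa : (0:ℝ) < W' + w a := by linarith
        have hdat : (0:ℝ) < w a + w t := by linarith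
        have hl3Ioo : W' / (W' + w t) ∈ Set.Ioo (0:ℝ) 1 := by
          constructor
          · positivity
          · rw [div_lt_one hdWt]; linarith
        have hc3 : f (A.erase a ∪ {t}) = (W' / (W' + w t)) • f (A.erase a)
            + (1 - W' / (W' + w t)) • f {t} := by
          rw [K1]
          match_scalars <;> field_simp <;> ring
        have hfat : f {a} ≠ f {t} := fun h => ht (h ▸ hfamem)
        have hl5Ioo : w a / (w a + w t) ∈ Set.Ioo (0:ℝ) 1 := by
          constructor
          · positivity
          · rw [div_lt_one hdat]; linarith
        have hc5 : f ({a} ∪ {t}) = (w a / (w a + w t)) • f {a}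
            + (1 - w a / (w a + w t)) • f {t} := by
          rw [hP2 a t hfat]
          match_scalars <;> field_simp <;> ring
        obtain ⟨aa, bb, cc, hap, hbp, hcp, E1, E2, E3⟩ := swa_L3 f hswa hneE
          (Finset.singleton_nonempty a) (Finset.singleton_nonempty t)
          (Finset.disjoint_singleton_right.mpr (Finset.notMem_erase a A))
          (Finset.disjoint_singleton_right.mpr
            (fun h => htnotA (Finset.mem_of_mem_erase h)))
          (Finset.disjoint_singleton.mpr (fun h => hta h.symm))
          hnc hl1 hc1 hl3Ioo hc3 hl5Ioo hc5
        have hccne : cc ≠ 0 := ne_of_gt hcp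
        have hwtne : w t ≠ 0 := ne_of_gt hwt
        have g2 : aa * w t = W' * cc := by
          rw [div_mul_eq_mul_div, div_eq_iff (ne_of_gt hdWt)] at E2
          linear_combination (-1 : ℝ) * E2
        have g3 : bb * w t = w a * cc := by
          rw [div_mul_eq_mul_div, div_eq_iff (ne_of_gt hdat)] at E3
          linear_combination (-1 : ℝ) * E3
        have hl1v : l1 * (W' + w a) = W' := by
          have key : (l1 * (W' + w a)) * (cc * w t) = W' * (cc * w t) := by
            linear_combination w t * w t * E1 + (1 - l1) * w t * g2 - l1 * w t * g3
          exact mul_right_cancel₀ (by positivity) key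
        refine hcon ?_
        rw [hu a ha] at hc1
        have hWsplit : W' + w a = ∑ x ∈ A, w x := Finset.sum_erase_add A w ha
        rw [hc1, hvcombo a ha, ← hW']
        have hl1eq : l1 = W' / (W' + w a) := by
          rw [eq_div_iff (ne_of_gt hdWa)]; exact hl1v
        rw [hl1eq]
        rw [← hWsplit]
        match_scalars <;> field_simp <;> ring

end SWAAux
theorem stmt3 {X : Type*} [DecidableEq X] {H : Type*} [NormedAddCommGroup H] [InnerProductSpace ℝ H]
    (f : Finset X → H)
    (hrich : ¬ Collinear ℝ (f '' {A : Finset X | A.Nonempty}))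
    (hswa : StrictWA f) :
    ∃ w : X → ℝ, (∀ x, 0 < w x) ∧
      (∀ A : Finset X, A.Nonempty →
        f A = (∑ x ∈ A, w x)⁻¹ • ∑ x ∈ A, w x • f {x}) ∧
      ∀ w' : X → ℝ, (∀ x, 0 < w' x) →
        (∀ A : Finset X, A.Nonempty →
          f A = (∑ x ∈ A, w' x)⁻¹ • ∑ x ∈ A, w' x • f {x}) →
        ∃ α : ℝ, 0 < α ∧ ∀ x, w' x = α * w x := by
  classical
  have hext : ∀ p q : H, ∃ t : X, f {t} ∉ affineSpan ℝ ({p, q} : Set H) := by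
    intro p q
    by_contra hno
    push_neg at hno
    apply hrich
    rw [collinear_iff_exists_forall_eq_smul_vadd]
    refine ⟨p, q -ᵥ p, ?_⟩
    rintro _ ⟨A, hA, rfl⟩
    have hmem : f A ∈ affineSpan ℝ ({p, q} : Set H) :=
      swa_mem f hswa _ A.card A rfl hA (fun x _ => hno x)
    have h2 : (f A -ᵥ p) +ᵥ p ∈ line[ℝ, p, q] := by
      simpa [vsub_vadd] using hmem
    obtain ⟨r, hr⟩ := vadd_left_mem_affineSpan_pair.mp h2
    exact ⟨r, by rw [hr, vsub_vadd]⟩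
  obtain ⟨w, hwpos, hP2⟩ := swa_exists_w f hswa hext
  have hrep : ∀ A : Finset X, A.Nonempty →
      f A = (∑ x ∈ A, w x)⁻¹ • ∑ x ∈ A, w x • f {x} :=
    fun A hA => swa_rep f hswa hext w hwpos hP2 A.card A rfl hA
  refine ⟨w, hwpos, hrep, ?_⟩
  intro w' hw' hrep'
  obtain ⟨x₀, -⟩ := hext 0 0
  obtain ⟨y₀, hy₀'⟩ := hext (f {x₀}) (f {x₀})
  have hy₀ : f {y₀} ≠ f {x₀} := fun h => hy₀' (h ▸ left_mem_affineSpan_pair ℝ _ _)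
  have hU : ∀ x y : X, f {x} ≠ f {y} → w' x * w y = w x * w' y := by
    intro x y hv
    have hxy : x ≠ y := fun h => hv (by rw [h])
    have h1 := hrep {x, y} ⟨x, by simp⟩
    have h2 := hrep' {x, y} ⟨x, by simp⟩
    rw [Finset.sum_pair hxy, Finset.sum_pair hxy] at h1 h2
    have hwx := hwpos x; have hwy := hwpos y
    have hwx' := hw' x; have hwy' := hw' y
    have hd1 : (0:ℝ) < w x + w y := by linarith
    have hd2 : (0:ℝ) < w' x + w' y := by linarith
    have e1 : f {x, y} = (w x / (w x + w y)) • f {x}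
        + (1 - w x / (w x + w y)) • f {y} := by
      rw [h1]; match_scalars <;> field_simp <;> ring
    have e2 : f {x, y} = (w' x / (w' x + w' y)) • f {x}
        + (1 - w' x / (w' x + w' y)) • f {y} := by
      rw [h2]; match_scalars <;> field_simp <;> ring
    have hEq := swa_aff2 hv (e1.symm.trans e2)
    rw [div_eq_div_iff hd1.ne' hd2.ne'] at hEq
    linear_combination (-1 : ℝ) * hEq
  refine ⟨w' x₀ / w x₀, div_pos (hw' x₀) (hwpos x₀), ?_⟩
  intro x
  by_cases hx : f {x} = f {x₀}
  · have h1 := hU x y₀ (by rw [hx]; exact fun h => hy₀ h.symm)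
    have h2 := hU y₀ x₀ hy₀
    have key : (w' x * w x₀) * w y₀ = (w' x₀ * w x) * w y₀ := by
      linear_combination w x₀ * h1 + w x * h2
    have hkey := mul_right_cancel₀ (ne_of_gt (hwpos y₀)) key
    rw [div_mul_eq_mul_div, eq_div_iff (ne_of_gt (hwpos x₀))]
    linear_combination hkey
  · have h1 := hU x x₀ hx
    rw [div_mul_eq_mul_div, eq_div_iff (ne_of_gt (hwpos x₀))]
    linear_combination h1
end

section
/- Suppose f : X* → H is rich (range not contained in a line) and has two weighted-average representations: there exist strictly positive weight functions w₁, w₂ : X → ℝ₊₊ with f(A) = ∑_{x∈A} w_i(x) f({x}) / ∑_{x∈A} w_i(x) for all finite nonempty A ⊆ X and i = 1,2. Then there exists α > 0 with w₁(x) = α w₂(x) for all x ∈ X. -/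
open Finset

lemma subsingleton_collinear_aux {H : Type*} [NormedAddCommGroup H]
    [InnerProductSpace ℝ H] {s : Set H} (hs : s.Subsingleton) : Collinear ℝ s := by
  rcases s.eq_empty_or_nonempty with rfl | ⟨p, hp⟩
  · exact collinear_empty ℝ H
  · exact Collinear.subset (fun q hq => hs hq hp) (collinear_singleton ℝ p)

lemma coeff_eq_aux {H : Type*} [NormedAddCommGroup H] [InnerProductSpace ℝ H]
    {u v : H} {a a' b b' : ℝ} (h : a • u + a' • v = b • u + b' • v)
    (ha : a + a' = 1) (hb : b + b' = 1) (huv : u ≠ v) : a = b := by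
  have ha' : a' = 1 - a := by linarith
  have hb' : b' = 1 - b := by linarith
  subst ha' hb'
  have key : (a - b) • (u - v) = 0 := by
    linear_combination (norm := module) h
  rcases smul_eq_zero.mp key with h1 | h2
  · linarith [sub_eq_zero.mp h1]
  · exact absurd (sub_eq_zero.mp h2) huv

theorem stmt4 {X : Type*} {H : Type*} [NormedAddCommGroup H] [InnerProductSpace ℝ H]
    (f : Finset X → H)
    (hrich : ¬ Collinear ℝ (f '' {A : Finset X | A.Nonempty}))
    (w₁ w₂ : X → ℝ) (hw₁ : ∀ x, 0 < w₁ x) (hw₂ : ∀ x, 0 < w₂ x)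
    (hrep₁ : ∀ A : Finset X, A.Nonempty →
      f A = (∑ x ∈ A, w₁ x)⁻¹ • ∑ x ∈ A, w₁ x • f {x})
    (hrep₂ : ∀ A : Finset X, A.Nonempty →
      f A = (∑ x ∈ A, w₂ x)⁻¹ • ∑ x ∈ A, w₂ x • f {x}) :
    ∃ α : ℝ, 0 < α ∧ ∀ x, w₁ x = α * w₂ x := by
  classical
  -- Step 1: there exist two points with different singleton values
  have hex : ∃ x y : X, f {x} ≠ f {y} := by
    by_contra h
    push_neg at h
    apply hrich
    apply subsingleton_collinear_aux
    have key : ∀ A : Finset X, ∀ x₀ : X, A.Nonempty → f A = f {x₀} := by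
      intro A x₀ hA
      have hs : 0 < ∑ x ∈ A, w₁ x := Finset.sum_pos (fun x _ => hw₁ x) hA
      rw [hrep₁ A hA]
      have hsum : ∑ x ∈ A, w₁ x • f {x} = (∑ x ∈ A, w₁ x) • f {x₀} := by
        rw [Finset.sum_smul]
        exact Finset.sum_congr rfl (fun x _ => by rw [h x x₀])
      rw [hsum, smul_smul, inv_mul_cancel₀ hs.ne', one_smul]
    rintro p ⟨A, hA, rfl⟩ q ⟨B, hB, rfl⟩
    obtain ⟨x₀, _⟩ := id hA
    rw [key A x₀ hA, key B x₀ hB]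
  -- Step 2: ratio equality for pairs with distinct singleton values
  have ratio : ∀ x y : X, f {x} ≠ f {y} → w₁ x * w₂ y = w₂ x * w₁ y := by
    intro x y hfxy
    have hxy : x ≠ y := fun h => hfxy (by rw [h])
    have hA : ({x, y} : Finset X).Nonempty := Finset.insert_nonempty x {y}
    have hs₁ : 0 < w₁ x + w₁ y := add_pos (hw₁ x) (hw₁ y)
    have hs₂ : 0 < w₂ x + w₂ y := add_pos (hw₂ x) (hw₂ y)
    have h₁ := hrep₁ {x, y} hA
    have h₂ := hrep₂ {x, y} hA
    rw [Finset.sum_pair hxy, Finset.sum_pair hxy] at h₁ h₂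
    rw [smul_add, smul_smul, smul_smul] at h₁ h₂
    have heq : ((w₁ x + w₁ y)⁻¹ * w₁ x) • f {x} + ((w₁ x + w₁ y)⁻¹ * w₁ y) • f {y}
        = ((w₂ x + w₂ y)⁻¹ * w₂ x) • f {x} + ((w₂ x + w₂ y)⁻¹ * w₂ y) • f {y} := by
      rw [← h₁, ← h₂]
    have hcoeff : (w₁ x + w₁ y)⁻¹ * w₁ x = (w₂ x + w₂ y)⁻¹ * w₂ x := by
      apply coeff_eq_aux heq _ _ hfxy
      · rw [← mul_add, inv_mul_cancel₀ hs₁.ne']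
      · rw [← mul_add, inv_mul_cancel₀ hs₂.ne']
    rw [inv_mul_eq_div, inv_mul_eq_div, div_eq_div_iff hs₁.ne' hs₂.ne'] at hcoeff
    linear_combination hcoeff
  obtain ⟨x₀, y₀, hxy₀⟩ := hex
  refine ⟨w₁ x₀ / w₂ x₀, div_pos (hw₁ x₀) (hw₂ x₀), fun x => ?_⟩
  have hr₀ : w₁ x₀ * w₂ y₀ = w₂ x₀ * w₁ y₀ := ratio x₀ y₀ hxy₀
  have h2 := (hw₂ x₀).ne'
  by_cases hx : f {x} = f {x₀}
  · have hxne : f {x} ≠ f {y₀} := by rw [hx]; exact hxy₀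
    have hr := ratio x y₀ hxne
    have h3 := (hw₂ y₀).ne'
    have key : w₁ x * w₂ x₀ = w₁ x₀ * w₂ x := by
      have h4 : w₁ x * w₂ x₀ * w₂ y₀ = w₁ x₀ * w₂ x * w₂ y₀ := by
        linear_combination w₂ x₀ * hr - w₂ x * hr₀
      exact mul_right_cancel₀ h3 h4
    field_simp
    linarith [key]
  · have hr := ratio x x₀ hx
    field_simp
    linarith [hr]
end

section
/- Let ⪰ be a weak order (complete, transitive, reflexive relation) on X, w : X → ℝ₊₊ a strictly positive weight function, and g : X → H. Define f : X* → H by f(A) = ∑_{x ∈ M(A,⪰)} (w(x)/∑_{y∈M(A,⪰)} w(y)) g(x), where M(A,⪰) is the set of ⪰-maximal elements of A. Then f satisfies the weighted averaging property: for all disjoint nonempty finite A,B ⊆ X there exists λ ∈ [0,1] with f(A∪B) = λ f(A) + (1−λ) f(B). -/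
open Finset
open Classical in
theorem stmt6 {X : Type*} {H : Type*} [AddCommGroup H] [Module ℝ H]
    (r : X → X → Prop) (hrefl : ∀ x, r x x)
    (htrans : ∀ x y z, r x y → r y z → r x z)
    (htotal : ∀ x y, r x y ∨ r y x)
    (w : X → ℝ) (hw : ∀ x, 0 < w x) (g : X → H)
    (M : Finset X → Finset X)
    (hM : ∀ A : Finset X, M A = A.filter (fun x => ∀ y ∈ A, r x y))
    (f : Finset X → H)
    (hf : ∀ A : Finset X, f A = (∑ x ∈ M A, w x)⁻¹ • ∑ x ∈ M A, w x • g x)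
    (A B : Finset X) (hA : A.Nonempty) (hB : B.Nonempty) (hAB : Disjoint A B) :
    ∃ l : ℝ, l ∈ Set.Icc (0:ℝ) 1 ∧ f (A ∪ B) = l • f A + (1 - l) • f B := by
  -- membership in M
  have hmem : ∀ (C : Finset X) (x : X), x ∈ M C ↔ x ∈ C ∧ ∀ y ∈ C, r x y := by
    intro C x; rw [hM]; simp [Finset.mem_filter]
  -- existence of a maximal element
  have hmax : ∀ C : Finset X, C.Nonempty → ∃ x ∈ C, ∀ y ∈ C, r x y := by
    intro C
    induction C using Finset.induction_on with
    | empty => intro h; simp at h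
    | @insert a s ha ih =>
      intro _
      rcases s.eq_empty_or_nonempty with hs | hs
      · subst hs
        exact ⟨a, by simp, by intro y hy; simp at hy; subst hy; exact hrefl _⟩
      · obtain ⟨x, hx, hxmax⟩ := ih hs
        rcases htotal a x with h | h
        · refine ⟨a, by simp, ?_⟩
          intro y hy
          rcases Finset.mem_insert.mp hy with rfl | hy
          · exact hrefl _
          · exact htrans _ _ _ h (hxmax y hy)
        · refine ⟨x, by simp [hx], ?_⟩
          intro y hy
          rcases Finset.mem_insert.mp hy with rfl | hy
          · exact h
          · exact hxmax y hy
  have hMne : ∀ C : Finset X, C.Nonempty → (M C).Nonempty := by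
    intro C hC
    obtain ⟨x, hx, h⟩ := hmax C hC
    exact ⟨x, (hmem C x).mpr ⟨hx, h⟩⟩
  have hpos : ∀ C : Finset X, C.Nonempty → 0 < ∑ x ∈ M C, w x := by
    intro C hC
    exact Finset.sum_pos (fun x _ => hw x) (hMne C hC)
  by_cases h1 : ∃ x ∈ M A, ∀ y ∈ B, r x y
  · by_cases h2 : ∃ x ∈ M B, ∀ y ∈ A, r x y
    · -- M (A ∪ B) = M A ∪ M B
      obtain ⟨xa, hxa, hxaB⟩ := h1
      obtain ⟨xb, hxb, hxbA⟩ := h2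
      rw [hmem] at hxa hxb
      have hMU : M (A ∪ B) = M A ∪ M B := by
        ext x
        constructor
        · intro hx
          obtain ⟨hx1, hx2⟩ := (hmem _ x).mp hx
          rcases Finset.mem_union.mp hx1 with h | h
          · exact Finset.mem_union_left _ ((hmem A x).mpr
              ⟨h, fun y hy => hx2 y (Finset.mem_union_left _ hy)⟩)
          · exact Finset.mem_union_right _ ((hmem B x).mpr
              ⟨h, fun y hy => hx2 y (Finset.mem_union_right _ hy)⟩)
        · intro hx
          rcases Finset.mem_union.mp hx with h | h
          · obtain ⟨hx1, hx2⟩ := (hmem A x).mp h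
            refine (hmem _ x).mpr ⟨Finset.mem_union_left _ hx1, fun y hy => ?_⟩
            rcases Finset.mem_union.mp hy with hy | hy
            · exact hx2 y hy
            · exact htrans _ _ _ (hx2 xa hxa.1) (hxaB y hy)
          · obtain ⟨hx1, hx2⟩ := (hmem B x).mp h
            refine (hmem _ x).mpr ⟨Finset.mem_union_right _ hx1, fun y hy => ?_⟩
            rcases Finset.mem_union.mp hy with hy | hy
            · exact htrans _ _ _ (hx2 xb hxb.1) (hxbA y hy)
            · exact hx2 y hy
      have hMsub : ∀ C : Finset X, M C ⊆ C := by
        intro C x hx; exact ((hmem C x).mp hx).1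
      have hdisj : Disjoint (M A) (M B) := hAB.mono (hMsub A) (hMsub B)
      set sA := ∑ x ∈ M A, w x with hsA
      set sB := ∑ x ∈ M B, w x with hsB
      have hsApos := hpos A hA
      have hsBpos := hpos B hB
      have hne : sA + sB ≠ 0 := by positivity
      refine ⟨sA / (sA + sB), ⟨by positivity, by
        rw [div_le_one (by positivity)]; linarith⟩, ?_⟩
      rw [hf, hf, hf, hMU, Finset.sum_union hdisj, Finset.sum_union hdisj]
      have e1 : sA / (sA + sB) * sA⁻¹ = (sA + sB)⁻¹ := by
        field_simp; exact mul_inv_cancel₀ hsApos.ne'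
      have e2 : (1 - sA / (sA + sB)) * sB⁻¹ = (sA + sB)⁻¹ := by
        have h : 1 - sA / (sA + sB) = sB / (sA + sB) := by field_simp; ring
        rw [h]; field_simp; exact mul_inv_cancel₀ hsBpos.ne'
      rw [smul_add, smul_smul, smul_smul, e1, e2]
    · -- M (A ∪ B) = M A
      obtain ⟨xa, hxa, hxaB⟩ := h1
      rw [hmem] at hxa
      have hMU : M (A ∪ B) = M A := by
        ext x
        rw [hmem, hmem]
        constructor
        · rintro ⟨hx, hxall⟩
          rcases Finset.mem_union.mp hx with hx | hx
          · exact ⟨hx, fun y hy => hxall y (Finset.mem_union_left _ hy)⟩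
          · exact absurd ⟨x, (hmem B x).mpr ⟨hx, fun y hy => hxall y (Finset.mem_union_right _ hy)⟩,
              fun y hy => hxall y (Finset.mem_union_left _ hy)⟩ h2
        · rintro ⟨hx, hxall⟩
          refine ⟨Finset.mem_union_left _ hx, fun y hy => ?_⟩
          rcases Finset.mem_union.mp hy with hy | hy
          · exact hxall y hy
          · exact htrans _ _ _ (hxall xa hxa.1) (hxaB y hy)
      exact ⟨1, ⟨by norm_num, by norm_num⟩, by rw [hf (A ∪ B), hMU, ← hf A]; simp⟩
  · -- M (A ∪ B) = M B
    have hMU : M (A ∪ B) = M B := by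
      have key : ∀ x ∈ M (A ∪ B), x ∈ B := by
        intro x hx
        rw [hmem] at hx
        obtain ⟨hx1, hx2⟩ := hx
        rcases Finset.mem_union.mp hx1 with hx1 | hx1
        · exact absurd ⟨x, (hmem A x).mpr ⟨hx1, fun y hy => hx2 y (Finset.mem_union_left _ hy)⟩,
            fun y hy => hx2 y (Finset.mem_union_right _ hy)⟩ h1
        · exact hx1
      ext x
      rw [hmem]
      constructor
      · intro hx
        rcases hx with ⟨hx1, hx2⟩
        exact (hmem B x).mpr ⟨key x ((hmem _ x).mpr ⟨hx1, hx2⟩),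
          fun y hy => hx2 y (Finset.mem_union_right _ hy)⟩
      · intro hx
        obtain ⟨x0, hx0⟩ := hMne (A ∪ B) (hA.mono (Finset.subset_union_left))
        have hx0B : x0 ∈ B := key x0 hx0
        rw [hmem] at hx hx0
        refine ⟨Finset.mem_union_right _ hx.1, fun y hy => ?_⟩
        exact htrans _ _ _ (hx.2 x0 hx0B) (hx0.2 y hy)
    exact ⟨0, ⟨by norm_num, by norm_num⟩, by rw [hf (A ∪ B), hMU, ← hf B]; simp⟩
end

section
/- Let H be a real Hilbert space with inner product ⟨·,·⟩, ν ∈ H, N_ν = {h ∈ H : ⟨h,ν⟩ = 1}, and S ⊆ H convex. Let f : X* → N_ν be an aggregation rule. Then f is consistent (for all disjoint A,B ∈ X* and all s₁,s₂ ∈ S: ⟨f(A), s₁−s₂⟩ ≥ 0 and ⟨f(B), s₁−s₂⟩ ≥ 0 imply ⟨f(A∪B), s₁−s₂⟩ ≥ 0, and additionally strict inequality in the first together with weak inequality in the second implies strict inequality in the conclusion, provided S−S spans H) if and only if f satisfies the strict weighted averaging property. -/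
open Finset RealInnerProductSpace

lemma span_scale {H : Type*} [NormedAddCommGroup H] [InnerProductSpace ℝ H]
    (D : Set H) (hD : Convex ℝ D) (hsym : ∀ d ∈ D, -d ∈ D)
    (hspan : Submodule.span ℝ D = ⊤) (x : H) :
    x = 0 ∨ ∃ t : ℝ, 0 < t ∧ t • x ∈ D := by
  have hx : x ∈ Submodule.span ℝ D := hspan ▸ Submodule.mem_top
  induction hx using Submodule.span_induction with
  | mem d hd => exact Or.inr ⟨1, one_pos, by simpa using hd⟩
  | zero => exact Or.inl rfl
  | add x y hx hy ihx ihy =>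
    rcases ihx with rfl | ⟨t₁, ht₁, hm₁⟩
    · simpa using ihy
    rcases ihy with rfl | ⟨t₂, ht₂, hm₂⟩
    · exact Or.inr ⟨t₁, ht₁, by simpa using hm₁⟩
    refine Or.inr ⟨t₁ * t₂ / (t₁ + t₂), by positivity, ?_⟩
    have hsum : 0 < t₁ + t₂ := by linarith
    have := hD hm₁ hm₂ (a := t₂ / (t₁ + t₂)) (b := t₁ / (t₁ + t₂))
      (by positivity) (by positivity) (by field_simp; ring)
    have heq : (t₂ / (t₁ + t₂)) • (t₁ • x) + (t₁ / (t₁ + t₂)) • (t₂ • y)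
        = (t₁ * t₂ / (t₁ + t₂)) • (x + y) := by
      rw [smul_smul, smul_smul, smul_add]; ring_nf
    rwa [heq] at this
  | smul c x hx ihx =>
    rcases ihx with rfl | ⟨t, ht, hm⟩
    · exact Or.inl (by simp)
    rcases lt_trichotomy c 0 with hc | rfl | hc
    · refine Or.inr ⟨t / (-c), div_pos ht (neg_pos.mpr hc), ?_⟩
      have h1 : t / -c * c = -t := by
        rw [div_mul_eq_mul_div, div_neg, mul_div_assoc, div_self hc.ne, mul_one]
      rw [smul_smul, h1, neg_smul]
      exact hsym _ hm
    · exact Or.inl (by simp)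
    · refine Or.inr ⟨t / c, div_pos ht hc, ?_⟩
      have h1 : t / c * c = t := by field_simp
      rw [smul_smul, h1]; exact hm

lemma key_lemma {H : Type*} [NormedAddCommGroup H] [InnerProductSpace ℝ H]
    (ν u v w : H) (hu : ⟪u, ν⟫ = 1) (hv : ⟪v, ν⟫ = 1) (hw : ⟪w, ν⟫ = 1)
    (hc1 : ∀ d : H, 0 ≤ ⟪u, d⟫ → 0 ≤ ⟪v, d⟫ → 0 ≤ ⟪w, d⟫)
    (hc2 : ∀ d : H, 0 < ⟪u, d⟫ → 0 ≤ ⟪v, d⟫ → 0 < ⟪w, d⟫)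
    (hc3 : ∀ d : H, 0 ≤ ⟪u, d⟫ → 0 < ⟪v, d⟫ → 0 < ⟪w, d⟫) :
    ∃ l : ℝ, l ∈ Set.Ioo (0:ℝ) 1 ∧ w = l • u + (1 - l) • v := by
  classical
  set K : Submodule ℝ H := Submodule.span ℝ {u, v} with hK
  haveI : FiniteDimensional ℝ K :=
    FiniteDimensional.span_of_finite ℝ ((Set.finite_singleton v).insert u)
  obtain ⟨y, hy, z, hz, hwyz⟩ := K.exists_add_mem_mem_orthogonal w
  have huK : u ∈ K := Submodule.subset_span (by simp)
  have hvK : v ∈ K := Submodule.subset_span (by simp)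
  have hyz : ⟪y, z⟫ = 0 := (Submodule.mem_orthogonal K z).mp hz y hy
  have huz : ⟪u, z⟫ = 0 := (Submodule.mem_orthogonal K z).mp hz u huK
  have hvz : ⟪v, z⟫ = 0 := (Submodule.mem_orthogonal K z).mp hz v hvK
  have hwz : ⟪w, z⟫ = ‖z‖ ^ 2 := by
    rw [hwyz, inner_add_left, hyz, real_inner_self_eq_norm_sq]; ring
  have hz0 : z = 0 := by
    have h1 : 0 ≤ ⟪w, z⟫ := hc1 z (le_of_eq huz.symm) (le_of_eq hvz.symm)
    have h2 : 0 ≤ ⟪w, -z⟫ := by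
      refine hc1 (-z) ?_ ?_ <;> rw [inner_neg_right] <;> simp [huz, hvz]
    rw [inner_neg_right] at h2
    have h3 : ‖z‖ ^ 2 = 0 := by rw [← hwz]; linarith
    have h4 : ‖z‖ = 0 := by nlinarith [norm_nonneg z]
    exact norm_eq_zero.mp h4
  have hwK : w ∈ K := by rw [hwyz, hz0, add_zero]; exact hy
  obtain ⟨a, b, hab⟩ := Submodule.mem_span_pair.mp hwK
  have habs : a + b = 1 := by
    have h5 : ⟪a • u + b • v, ν⟫ = 1 := by rw [hab]; exact hw
    rw [inner_add_left, real_inner_smul_left, real_inner_smul_left, hu, hv] at h5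
    linarith
  by_cases huv : u = v
  · refine ⟨1/2, by norm_num, ?_⟩
    rw [← hab, huv, ← add_smul, ← add_smul, habs]; norm_num
  · have hvne : v ≠ 0 := fun h => by simp [h] at hv
    have hune : u ≠ 0 := fun h => by simp [h] at hu
    have hvn : ‖v‖ ≠ 0 := norm_ne_zero_iff.mpr hvne
    have hun : ‖u‖ ≠ 0 := norm_ne_zero_iff.mpr hune
    -- a > 0
    set c : ℝ := ⟪u, v⟫ / ‖v‖ ^ 2 with hcdef
    set d : H := u - c • v with hddef
    have hvd : ⟪v, d⟫ = 0 := by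
      rw [hddef, inner_sub_right, inner_smul_right, real_inner_self_eq_norm_sq, hcdef,
        real_inner_comm]
      field_simp; ring
    have hdne : d ≠ 0 := by
      intro h
      have heq : u = c • v := by rwa [hddef, sub_eq_zero] at h
      have h2 : ⟪c • v, ν⟫ = 1 := heq ▸ hu
      rw [real_inner_smul_left, hv, mul_one] at h2
      exact huv (by rw [heq, h2, one_smul])
    have hu' : u = d + c • v := by rw [hddef]; abel
    have hud : ⟪u, d⟫ = ‖d‖ ^ 2 := by
      rw [hu', inner_add_left, real_inner_smul_left, hvd, real_inner_self_eq_norm_sq]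
      ring
    have hudpos : 0 < ⟪u, d⟫ := by rw [hud]; exact pow_pos (norm_pos_iff.mpr hdne) 2
    have hwd : 0 < ⟪w, d⟫ := hc2 d hudpos (le_of_eq hvd.symm)
    have ha : 0 < a := by
      rw [← hab, inner_add_left, real_inner_smul_left, real_inner_smul_left, hvd, hud] at hwd
      nlinarith [pow_pos (norm_pos_iff.mpr hdne) 2]
    -- b > 0
    set c' : ℝ := ⟪v, u⟫ / ‖u‖ ^ 2 with hcdef'
    set e : H := v - c' • u with hedef
    have hue : ⟪u, e⟫ = 0 := by
      rw [hedef, inner_sub_right, inner_smul_right, real_inner_self_eq_norm_sq, hcdef',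
        real_inner_comm]
      field_simp; ring
    have hene : e ≠ 0 := by
      intro h
      have heq : v = c' • u := by rwa [hedef, sub_eq_zero] at h
      have h2 : ⟪c' • u, ν⟫ = 1 := heq ▸ hv
      rw [real_inner_smul_left, hu, mul_one] at h2
      have hvu : v = u := by rw [heq, h2, one_smul]
      exact huv hvu.symm
    have hv' : v = e + c' • u := by rw [hedef]; abel
    have hve : ⟪v, e⟫ = ‖e‖ ^ 2 := by
      rw [hv', inner_add_left, real_inner_smul_left, hue, real_inner_self_eq_norm_sq]
      ring
    have hvepos : 0 < ⟪v, e⟫ := by rw [hve]; exact pow_pos (norm_pos_iff.mpr hene) 2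
    have hwe : 0 < ⟪w, e⟫ := hc3 e (le_of_eq hue.symm) hvepos
    have hb : 0 < b := by
      rw [← hab, inner_add_left, real_inner_smul_left, real_inner_smul_left, hue, hve] at hwe
      nlinarith [pow_pos (norm_pos_iff.mpr hene) 2]
    have hb' : b = 1 - a := by linarith
    exact ⟨a, ⟨ha, by linarith⟩, by rw [← hab, hb']⟩

theorem stmt8 {X H : Type*} [DecidableEq X] [NormedAddCommGroup H] [InnerProductSpace ℝ H]
    (ν : H) (S : Set H) (hS : Convex ℝ S)
    (hspan : Submodule.span ℝ {d : H | ∃ s₁ ∈ S, ∃ s₂ ∈ S, d = s₁ - s₂} = ⊤)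
    (f : Finset X → H)
    (hN : ∀ A : Finset X, A.Nonempty → ⟪f A, ν⟫ = 1) :
    (∀ A B : Finset X, A.Nonempty → B.Nonempty → Disjoint A B →
        ∀ s₁ ∈ S, ∀ s₂ ∈ S,
          ((0 ≤ ⟪f A, s₁ - s₂⟫ → 0 ≤ ⟪f B, s₁ - s₂⟫ → 0 ≤ ⟪f (A ∪ B), s₁ - s₂⟫) ∧
           (0 < ⟪f A, s₁ - s₂⟫ → 0 ≤ ⟪f B, s₁ - s₂⟫ → 0 < ⟪f (A ∪ B), s₁ - s₂⟫)))
      ↔ StrictWA f := by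
  constructor
  · intro hcons A B hA hB hAB
    set D : Set H := {d : H | ∃ s₁ ∈ S, ∃ s₂ ∈ S, d = s₁ - s₂} with hDdef
    have hDconv : Convex ℝ D := by
      intro x hx y hy p q hp hq hpq
      obtain ⟨x₁, hx₁, x₂, hx₂, rfl⟩ := hx
      obtain ⟨y₁, hy₁, y₂, hy₂, rfl⟩ := hy
      exact ⟨p • x₁ + q • y₁, hS hx₁ hy₁ hp hq hpq,
        p • x₂ + q • y₂, hS hx₂ hy₂ hp hq hpq, by
          rw [smul_sub, smul_sub]; abel⟩
    have hDsym : ∀ d ∈ D, -d ∈ D := by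
      rintro d ⟨s₁, hs₁, s₂, hs₂, rfl⟩
      exact ⟨s₂, hs₂, s₁, hs₁, by abel⟩
    have hAB' : (A ∪ B).Nonempty := hA.inl
    have hall : ∀ d : H,
        (0 ≤ ⟪f A, d⟫ → 0 ≤ ⟪f B, d⟫ → 0 ≤ ⟪f (A ∪ B), d⟫) ∧
        (0 < ⟪f A, d⟫ → 0 ≤ ⟪f B, d⟫ → 0 < ⟪f (A ∪ B), d⟫) ∧
        (0 ≤ ⟪f A, d⟫ → 0 < ⟪f B, d⟫ → 0 < ⟪f (A ∪ B), d⟫) := by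
      intro d
      rcases span_scale D hDconv hDsym hspan d with rfl | ⟨t, ht, hm⟩
      · refine ⟨fun _ _ => ?_, fun h _ => ?_, fun _ h => ?_⟩ <;>
          simp_all [inner_zero_right]
      · obtain ⟨s₁, hs₁, s₂, hs₂, hds⟩ := hm
        have h1 := hcons A B hA hB hAB s₁ hs₁ s₂ hs₂
        have h2 := hcons B A hB hA hAB.symm s₁ hs₁ s₂ hs₂
        rw [← hds] at h1 h2
        rw [union_comm B A] at h2
        rw [real_inner_smul_right, real_inner_smul_right, real_inner_smul_right] at h1 h2
        refine ⟨fun ha hb => ?_, fun ha hb => ?_, fun ha hb => ?_⟩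
        · have := h1.1 (by positivity) (by positivity)
          nlinarith
        · have := h1.2 (by positivity) (by positivity)
          nlinarith
        · have := h2.2 (by positivity) (by positivity)
          nlinarith
    exact key_lemma ν (f A) (f B) (f (A ∪ B)) (hN A hA) (hN B hB) (hN _ hAB')
      (fun d => (hall d).1) (fun d => (hall d).2.1) (fun d => (hall d).2.2)
  · intro hswa A B hA hB hAB s₁ _ s₂ _
    obtain ⟨l, ⟨hl0, hl1⟩, heq⟩ := hswa A B hA hB hAB
    rw [heq, inner_add_left, real_inner_smul_left, real_inner_smul_left]
    constructor
    · intro ha hb; nlinarith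
    · intro ha hb; nlinarith [mul_pos hl0 ha]
end

section
/- Let Ω = {1,…,n} be a finite state space and X a finite set of signals with X* the nonempty subsets of X. A belief formation process f : X* → Δ(Ω) that is rich (range not contained in a line in ℝⁿ) satisfies the strict weighted averaging property if and only if it is Bayesian: there exists a probability measure P on Ω × X with strictly positive marginal P_X on X such that for every A ∈ X* and B ⊆ Ω, (f(A))(B) = P(B × A)/P_X(A). -/
open Finset

set_option maxHeartbeats 2000000 in
theorem exists_weights {n : ℕ} {X : Type*} [Fintype X] [DecidableEq X]
    (f : Finset X → (Fin n → ℝ))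
    (hrich : ¬ Collinear ℝ (f '' {A : Finset X | A.Nonempty}))
    (hwa : StrictWA f) :
    ∃ w : X → ℝ, (∀ x, 0 < w x) ∧
      ∀ A : Finset X, A.Nonempty → (∑ x ∈ A, w x) • f A = ∑ x ∈ A, w x • f {x} := by
  classical
  -- choice of the weighted-averaging coefficients
  obtain ⟨l, hl01, hleq⟩ : ∃ l : Finset X → Finset X → ℝ,
      (∀ A B, 0 < l A B ∧ l A B < 1) ∧
      (∀ A B : Finset X, A.Nonempty → B.Nonempty → Disjoint A B →
        f (A ∪ B) = l A B • f A + (1 - l A B) • f B) := by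
    have h : ∀ AB : Finset X × Finset X, ∃ lv : ℝ, (0 < lv ∧ lv < 1) ∧
        (AB.1.Nonempty → AB.2.Nonempty → Disjoint AB.1 AB.2 →
          f (AB.1 ∪ AB.2) = lv • f AB.1 + (1 - lv) • f AB.2) := by
      rintro ⟨A, B⟩
      by_cases hc : A.Nonempty ∧ B.Nonempty ∧ Disjoint A B
      · obtain ⟨lv, hmem, heq⟩ := hwa A B hc.1 hc.2.1 hc.2.2
        exact ⟨lv, ⟨hmem.1, hmem.2⟩, fun _ _ _ => heq⟩
      · exact ⟨1/2, by norm_num, fun h1 h2 h3 => absurd ⟨h1, h2, h3⟩ hc⟩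
    choose g hg1 hg2 using h
    exact ⟨fun A B => g (A, B), fun A B => hg1 (A, B), fun A B hA hB hD => hg2 (A, B) hA hB hD⟩
  -- every f-value lies on a line through the singleton values
  have hFline : ∀ (p₀ dd : Fin n → ℝ) (A : Finset X), A.Nonempty →
      (∀ x ∈ A, ∃ ρ : ℝ, f {x} = p₀ + ρ • dd) → ∃ ρ : ℝ, f A = p₀ + ρ • dd := by
    intro p₀ dd A
    induction A using Finset.strongInduction with
    | _ A ihA =>
      intro hA hmem
      obtain ⟨x, hx⟩ := hA
      by_cases hsing : A = {x}
      · subst hsing; exact hmem x (by simp)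
      · have herase : (A.erase x).Nonempty := by
          rw [Finset.erase_nonempty hx]
          exact (Finset.nontrivial_iff_ne_singleton hx).mpr hsing
        obtain ⟨ρ₂, h₂⟩ := ihA (A.erase x) (Finset.erase_ssubset hx) herase
          (fun u hu => hmem u (Finset.mem_of_mem_erase hu))
        obtain ⟨ρ₁, h₁⟩ := hmem x hx
        have hdisj : Disjoint ({x} : Finset X) (A.erase x) := by
          simp [Finset.disjoint_singleton_left]
        have heq := hleq {x} (A.erase x) ⟨x, by simp⟩ herase hdisj
        rw [← Finset.insert_eq, Finset.insert_erase hx] at heq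
        refine ⟨l {x} (A.erase x) * ρ₁ + (1 - l {x} (A.erase x)) * ρ₂, ?_⟩
        rw [heq, h₁, h₂]; module
  -- richness: no line contains all singleton values
  have hLZ : ∀ (p₀ dd : Fin n → ℝ), (∀ x : X, ∃ ρ : ℝ, f {x} = p₀ + ρ • dd) → False := by
    intro p₀ dd hall
    apply hrich
    rw [collinear_iff_exists_forall_eq_smul_vadd]
    refine ⟨p₀, dd, ?_⟩
    rintro q ⟨A, hA, rfl⟩
    obtain ⟨ρ, hρ⟩ := hFline p₀ dd A hA (fun x _ => hall x)
    exact ⟨ρ, by rw [hρ, vadd_eq_add, add_comm]⟩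
  -- pair decomposition
  have hpair : ∀ x y : X, x ≠ y →
      f {x, y} = l {x} {y} • f {x} + (1 - l {x} {y}) • f {y} := by
    intro x y hxy
    have h := hleq {x} {y} ⟨x, by simp⟩ ⟨y, by simp⟩ (Finset.disjoint_singleton.mpr hxy)
    rwa [← Finset.insert_eq] at h
  -- the ratio function
  set r : X → X → ℝ := fun x y => (1 - l {x} {y}) / l {x} {y} with hrdef
  have hrpos : ∀ x y : X, 0 < r x y := fun x y =>
    div_pos (by linarith [(hl01 {x} {y}).2]) (hl01 {x} {y}).1
  -- inverse relation for ratios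
  have hrmul : ∀ x y : X, f {x} ≠ f {y} → r x y * r y x = 1 := by
    intro x y hv
    have hxy : x ≠ y := fun h => hv (by rw [h])
    have h1 := hpair x y hxy
    have h2 := hpair y x hxy.symm
    rw [Finset.pair_comm y x] at h2
    have h3 : (l {x} {y} - (1 - l {y} {x})) • (f {x} - f {y}) =
        (l {x} {y} • f {x} + (1 - l {x} {y}) • f {y}) -
          (l {y} {x} • f {y} + (1 - l {y} {x}) • f {x}) := by module
    rw [← h1, ← h2, sub_self] at h3
    rcases smul_eq_zero.mp h3 with h | h
    · have hsym : l {y} {x} = 1 - l {x} {y} := by linarith [sub_eq_zero.mp h]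
      have e0 := (hl01 {x} {y}).1
      have e1 := (hl01 {x} {y}).2
      have e2 : l {x} {y} ≠ 0 := ne_of_gt e0
      have e3 : (1:ℝ) - l {x} {y} ≠ 0 := by linarith
      rw [hrdef]; simp only [hsym]
      field_simp
      ring
    · exact absurd (sub_eq_zero.mp h) hv
  -- cocycle for affinely independent triples
  have T1 : ∀ x y z : X,
      (∀ s t : ℝ, s • (f {y} - f {x}) + t • (f {z} - f {x}) = 0 → s = 0 ∧ t = 0) →
      r x y * r y z = r x z := by
    intro x y z hind
    have hvxy : f {x} ≠ f {y} := fun h => one_ne_zero (hind 1 0 (by simp [h])).1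
    have hvyz : f {y} ≠ f {z} := fun h => one_ne_zero (hind 1 (-1) (by rw [h]; module)).1
    have hvxz : f {x} ≠ f {z} := fun h => one_ne_zero (hind 0 1 (by simp [h])).2
    have hxy : x ≠ y := fun h => hvxy (by rw [h])
    have hyz : y ≠ z := fun h => hvyz (by rw [h])
    have hxz : x ≠ z := fun h => hvxz (by rw [h])
    have huniq : ∀ a₂ a₃ b₂ b₃ : ℝ,
        (1 - a₂ - a₃) • f {x} + a₂ • f {y} + a₃ • f {z} =
          (1 - b₂ - b₃) • f {x} + b₂ • f {y} + b₃ • f {z} → a₂ = b₂ ∧ a₃ = b₃ := by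
      intro a₂ a₃ b₂ b₃ heq
      have h0 : (a₂ - b₂) • (f {y} - f {x}) + (a₃ - b₃) • (f {z} - f {x}) = 0 := by
        linear_combination (norm := module) heq
      obtain ⟨h1, h2⟩ := hind _ _ h0
      exact ⟨by linarith [h1], by linarith [h2]⟩
    -- the three groupings of {x,y,z}
    have hg1 : f {x, y, z} =
        (1 - (l {x, y} {z} * (1 - l {x} {y})) - (1 - l {x, y} {z})) • f {x} +
        (l {x, y} {z} * (1 - l {x} {y})) • f {y} + (1 - l {x, y} {z}) • f {z} := by
      have hu : ({x, y} : Finset X) ∪ {z} = {x, y, z} := by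
        ext a; simp [or_assoc]
      have h := hleq {x, y} {z} ⟨x, by simp⟩ ⟨z, by simp⟩
        (by simp [Finset.disjoint_left]; exact ⟨fun h => hxz (h.symm ▸ rfl) |>.elim, fun h => hyz (h.symm ▸ rfl) |>.elim⟩)
      rw [hu] at h
      rw [h, hpair x y hxy]; module
    have hg2 : f {x, y, z} =
        (1 - ((1 - l {x} {y, z}) * l {y} {z}) - ((1 - l {x} {y, z}) * (1 - l {y} {z}))) • f {x} +
        ((1 - l {x} {y, z}) * l {y} {z}) • f {y} +
        ((1 - l {x} {y, z}) * (1 - l {y} {z})) • f {z} := by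
      have hu : ({x} : Finset X) ∪ {y, z} = {x, y, z} := by
        rw [← Finset.insert_eq]
      have h := hleq {x} {y, z} ⟨x, by simp⟩ ⟨y, by simp⟩
        (by simp [Finset.disjoint_left]; exact ⟨hxy, hxz⟩)
      rw [hu] at h
      rw [h, hpair y z hyz]; module
    have hg3 : f {x, y, z} =
        (1 - (l {y} {x, z}) - ((1 - l {y} {x, z}) * (1 - l {x} {z}))) • f {x} +
        (l {y} {x, z}) • f {y} + ((1 - l {y} {x, z}) * (1 - l {x} {z})) • f {z} := by
      have hu : ({y} : Finset X) ∪ {x, z} = {x, y, z} := by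
        rw [← Finset.insert_eq]; ext a; simp; tauto
      have h := hleq {y} {x, z} ⟨y, by simp⟩ ⟨x, by simp⟩
        (by simp [Finset.disjoint_left]; exact ⟨fun h => hxy (h.symm ▸ rfl) |>.elim, fun h => hyz (h ▸ rfl) |>.elim⟩)
      rw [hu] at h
      rw [h, hpair x z hxz]; module
    obtain ⟨E1, E2⟩ := huniq _ _ _ _ (hg1.symm.trans hg2)
    obtain ⟨E3, E4⟩ := huniq _ _ _ _ (hg1.symm.trans hg3)
    obtain ⟨hm₁0, hm₁1⟩ := hl01 ({x, y} : Finset X) ({z} : Finset X)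
    obtain ⟨hl₁0, hl₁1⟩ := hl01 ({x} : Finset X) ({y} : Finset X)
    obtain ⟨hl₂0, hl₂1⟩ := hl01 ({y} : Finset X) ({z} : Finset X)
    obtain ⟨hl₃0, hl₃1⟩ := hl01 ({x} : Finset X) ({z} : Finset X)
    have E5 : l {x, y} {z} * l {x} {y} = (1 - l {y} {x, z}) * l {x} {z} := by
      linear_combination (-1 : ℝ) * E3 + (-1 : ℝ) * E4
    have E5' : l {x, y} {z} * ((1 - l {x} {y}) * (1 - l {y} {z})) =
        (1 - l {x, y} {z}) * l {y} {z} := by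
      linear_combination (1 - l {y} {z}) * E1 + (-(l {y} {z})) * E2
    have E6' : l {x, y} {z} * (l {x} {y} * (1 - l {x} {z})) =
        (1 - l {x, y} {z}) * l {x} {z} := by
      linear_combination (1 - l {x} {z}) * E5 + (-(l {x} {z})) * E4
    have key : (1 - l {x} {y}) * (1 - l {y} {z}) * l {x} {z} =
        (1 - l {x} {z}) * (l {x} {y} * l {y} {z}) := by
      have := mul_left_cancel₀ (ne_of_gt hm₁0) (a := l {x, y} {z})
        (b := (1 - l {x} {y}) * (1 - l {y} {z}) * l {x} {z})
        (c := (1 - l {x} {z}) * (l {x} {y} * l {y} {z}))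
      apply this
      linear_combination l {x} {z} * E5' + (-(l {y} {z})) * E6'
    rw [hrdef]
    rw [div_mul_div_comm, div_eq_div_iff (by positivity) (ne_of_gt hl₃0)]
    linear_combination key
  -- full cocycle for pairwise distinct values
  have COC : ∀ x y z : X, f {x} ≠ f {y} → f {y} ≠ f {z} → f {x} ≠ f {z} →
      r x y * r y z = r x z := by
    intro x y z hxy hyz hxz
    by_cases hind : ∀ s t : ℝ, s • (f {y} - f {x}) + t • (f {z} - f {x}) = 0 → s = 0 ∧ t = 0
    · exact T1 x y z hind
    · push_neg at hind
      obtain ⟨s, t, hst, hnz⟩ := hind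
      have hd : f {y} - f {x} ≠ 0 := sub_ne_zero.mpr hxy.symm
      have ht : t ≠ 0 := by
        intro h0
        rw [h0] at hst; simp only [zero_smul, add_zero] at hst
        rcases smul_eq_zero.mp hst with h | h
        · exact (hnz h) h0
        · exact hd h
      have hk : f {z} = f {x} + (-(t⁻¹ * s)) • (f {y} - f {x}) := by
        have h4 : t • (f {z} - f {x}) = (-s) • (f {y} - f {x}) := by
          linear_combination (norm := module) hst
        have h5 : f {z} - f {x} = (-(t⁻¹ * s)) • (f {y} - f {x}) := by
          rw [← inv_smul_smul₀ ht (f {z} - f {x}), h4, smul_smul]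
          module
        linear_combination (norm := module) h5
      set k : ℝ := -(t⁻¹ * s) with hkdef
      have hk0 : k ≠ 0 := by
        intro h0; rw [h0] at hk; simp at hk; exact hxz hk.symm
      have hk1 : k ≠ 1 := by
        intro h1; rw [h1] at hk
        apply hyz; rw [hk]; module
      obtain ⟨u, hu⟩ : ∃ u : X, ∀ ρ : ℝ, f {u} ≠ f {x} + ρ • (f {y} - f {x}) := by
        by_contra hcon; push_neg at hcon
        exact hLZ (f {x}) (f {y} - f {x}) hcon
      have hux : f {x} ≠ f {u} := fun h => hu 0 (by rw [← h]; module)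
      have huy : f {y} ≠ f {u} := fun h => hu 1 (by rw [← h]; module)
      have huz : f {z} ≠ f {u} := fun h => hu k (by rw [← h]; exact hk)
      have hIxuy : ∀ s' t' : ℝ, s' • (f {u} - f {x}) + t' • (f {y} - f {x}) = 0 →
          s' = 0 ∧ t' = 0 := by
        intro s' t' h
        by_cases hs : s' = 0
        · refine ⟨hs, ?_⟩
          rw [hs] at h; simp only [zero_smul, zero_add] at h
          rcases smul_eq_zero.mp h with h' | h'
          · exact h'
          · exact absurd h' hd
        · exfalso
          have h4 : s' • (f {u} - f {x}) = (-t') • (f {y} - f {x}) := by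
            linear_combination (norm := module) h
          have h5 : f {u} - f {x} = (-(s'⁻¹ * t')) • (f {y} - f {x}) := by
            rw [← inv_smul_smul₀ hs (f {u} - f {x}), h4, smul_smul]; module
          exact hu (-(s'⁻¹ * t')) (by linear_combination (norm := module) h5)
      have hIyuz : ∀ s' t' : ℝ, s' • (f {u} - f {y}) + t' • (f {z} - f {y}) = 0 →
          s' = 0 ∧ t' = 0 := by
        intro s' t' h
        have h2 : s' • (f {u} - f {x}) + (t' * (k - 1) - s') • (f {y} - f {x}) = 0 := by
          rw [hk] at h
          linear_combination (norm := module) h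
        by_cases hs : s' = 0
        · refine ⟨hs, ?_⟩
          rw [hs] at h2; simp only [zero_smul, zero_add, sub_zero] at h2
          rcases smul_eq_zero.mp h2 with h' | h'
          · rcases mul_eq_zero.mp h' with h'' | h''
            · exact h''
            · exact absurd (by linarith [h''] : k = 1) hk1
          · exact absurd h' hd
        · exfalso
          have h4 : s' • (f {u} - f {x}) = (-(t' * (k - 1) - s')) • (f {y} - f {x}) := by
            linear_combination (norm := module) h2
          have h5 : f {u} - f {x} = (-(s'⁻¹ * (t' * (k - 1) - s'))) • (f {y} - f {x}) := by
            rw [← inv_smul_smul₀ hs (f {u} - f {x}), h4, smul_smul]; module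
          exact hu (-(s'⁻¹ * (t' * (k - 1) - s'))) (by linear_combination (norm := module) h5)
      have hIxuz : ∀ s' t' : ℝ, s' • (f {u} - f {x}) + t' • (f {z} - f {x}) = 0 →
          s' = 0 ∧ t' = 0 := by
        intro s' t' h
        have h2 : s' • (f {u} - f {x}) + (t' * k) • (f {y} - f {x}) = 0 := by
          rw [hk] at h
          linear_combination (norm := module) h
        by_cases hs : s' = 0
        · refine ⟨hs, ?_⟩
          rw [hs] at h2; simp only [zero_smul, zero_add] at h2
          rcases smul_eq_zero.mp h2 with h' | h'
          · rcases mul_eq_zero.mp h' with h'' | h''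
            · exact h''
            · exact absurd h'' hk0
          · exact absurd h' hd
        · exfalso
          have h4 : s' • (f {u} - f {x}) = (-(t' * k)) • (f {y} - f {x}) := by
            linear_combination (norm := module) h2
          have h5 : f {u} - f {x} = (-(s'⁻¹ * (t' * k))) • (f {y} - f {x}) := by
            rw [← inv_smul_smul₀ hs (f {u} - f {x}), h4, smul_smul]; module
          exact hu (-(s'⁻¹ * (t' * k))) (by linear_combination (norm := module) h5)
      have t1 := T1 x u y hIxuy
      have t2 := T1 y u z hIyuz
      have t3 := T1 x u z hIxuz
      have hiuy : r u y * r y u = 1 := hrmul u y huy.symm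
      calc r x y * r y z = (r x u * r u y) * (r y u * r u z) := by rw [t1, t2]
        _ = (r x u * r u z) * (r u y * r y u) := by ring
        _ = r x z := by rw [hiuy, mul_one, t3]
  -- base points a, b, c with affinely independent values
  have hXne : Nonempty X :=
    not_isEmpty_iff.mp (fun h => hLZ 0 0 (fun x => (h.false x).elim))
  obtain ⟨a⟩ := hXne
  obtain ⟨b, hb⟩ : ∃ b : X, f {b} ≠ f {a} := by
    by_contra h; push_neg at h
    exact hLZ (f {a}) 0 (fun x => ⟨0, by simp [h x]⟩)
  obtain ⟨c, hc⟩ : ∃ c : X, ∀ ρ : ℝ, f {c} ≠ f {a} + ρ • (f {b} - f {a}) := by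
    by_contra h; push_neg at h
    exact hLZ _ _ h
  have hca : f {c} ≠ f {a} := fun h => hc 0 (by rw [h]; module)
  have hcb : f {c} ≠ f {b} := fun h => hc 1 (by rw [h]; module)
  -- the weight function
  set w : X → ℝ := fun x => if f {x} = f {a} then r a b * r b x else r a x with hwdef
  have hwpos : ∀ x : X, 0 < w x := by
    intro x; rw [hwdef]; dsimp only
    split
    · exact mul_pos (hrpos a b) (hrpos b x)
    · exact hrpos a x
  -- edge relation
  have hedge1 : ∀ x y : X, f {x} = f {a} → f {x} ≠ f {y} → w y = w x * r x y := by
    intro x y hxa hxy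
    have hya : f {y} ≠ f {a} := fun h => hxy (hxa.trans h.symm)
    have hbx : f {b} ≠ f {x} := by rw [hxa]; exact hb
    rw [hwdef]; dsimp only
    rw [if_pos hxa, if_neg hya]
    by_cases hyb : f {y} = f {b}
    · have hcx : f {c} ≠ f {x} := by rw [hxa]; exact hca
      have hcy : f {c} ≠ f {y} := by rw [hyb]; exact hcb
      have h1 : r b c * r c x = r b x := COC b c x hcb.symm hcx hbx
      have h2 : r c x * r x y = r c y := COC c x y hcx hxy hcy
      have h3 : r a b * r b c = r a c := COC a b c hb.symm hcb.symm hca.symm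
      have h4 : r a c * r c y = r a y := COC a c y hca.symm hcy hya.symm
      rw [← h4, ← h2, ← h1, ← h3]; ring
    · have hby : f {b} ≠ f {y} := fun h => hyb h.symm
      have h1 : r b x * r x y = r b y := COC b x y hbx hxy hby
      have h2 : r a b * r b y = r a y := COC a b y hb.symm hby hya.symm
      rw [← h2, ← h1]; ring
  have hedge : ∀ x y : X, f {x} ≠ f {y} → w y = w x * r x y := by
    intro x y hxy
    by_cases hxa : f {x} = f {a}
    · exact hedge1 x y hxa hxy
    · by_cases hya : f {y} = f {a}
      · have hstep := hedge1 y x hya hxy.symm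
        rw [hstep, mul_assoc, hrmul y x hxy.symm, mul_one]
      · rw [hwdef]; dsimp only
        rw [if_neg hxa, if_neg hya]
        exact (COC a x y (fun h => hxa h.symm) hxy (fun h => hya h.symm)).symm
  -- pair representation
  have P2 : ∀ x y : X, x ≠ y → (w x + w y) • f {x, y} = w x • f {x} + w y • f {y} := by
    intro x y hxy
    by_cases hv : f {x} = f {y}
    · rw [hpair x y hxy, ← hv]; module
    · have hE := hedge x y hv
      obtain ⟨hl0, hl1⟩ := hl01 ({x} : Finset X) ({y} : Finset X)
      have hkey : w y * l {x} {y} = w x * (1 - l {x} {y}) := by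
        rw [hE, hrdef]; dsimp only; field_simp
      rw [hpair x y hxy]
      match_scalars
      · linear_combination hkey
      · linear_combination (-1 : ℝ) * hkey
  -- global weight sums and normalized barycenters
  have hWpos : ∀ B : Finset X, B.Nonempty → 0 < ∑ x ∈ B, w x :=
    fun B hB => Finset.sum_pos (fun i _ => hwpos i) hB
  set p : Finset X → (Fin n → ℝ) := fun B => (∑ x ∈ B, w x)⁻¹ • ∑ x ∈ B, w x • f {x}
    with hpdef
  have hpsing : ∀ x : X, p {x} = f {x} := by
    intro x; simp only [hpdef]
    rw [Finset.sum_singleton, Finset.sum_singleton, inv_smul_smul₀ (ne_of_gt (hwpos x))]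
  have hPS : ∀ S T : Finset X, S.Nonempty → T.Nonempty → Disjoint S T →
      p (S ∪ T) = ((∑ x ∈ S, w x) / (∑ x ∈ S ∪ T, w x)) • p S +
        ((∑ x ∈ T, w x) / (∑ x ∈ S ∪ T, w x)) • p T := by
    intro S T hS hT hST
    have hWS := hWpos S hS; have hWT := hWpos T hT
    simp only [hpdef]
    rw [Finset.sum_union hST, Finset.sum_union hST]
    have h1 : (∑ x ∈ S, w x) ≠ 0 := ne_of_gt hWS
    have h2 : (∑ x ∈ T, w x) ≠ 0 := ne_of_gt hWT
    have h3 : (∑ x ∈ S, w x) + (∑ x ∈ T, w x) ≠ 0 := by positivity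
    match_scalars
    · field_simp
    · field_simp
  -- main induction
  have hREP : ∀ A : Finset X, A.Nonempty → (∑ x ∈ A, w x) • f A = ∑ x ∈ A, w x • f {x} := by
    suffices H : ∀ k : ℕ, ∀ A : Finset X, A.card = k → A.Nonempty →
        (∑ x ∈ A, w x) • f A = ∑ x ∈ A, w x • f {x} by
      exact fun A hA => H A.card A rfl hA
    intro k
    induction k using Nat.strong_induction_on with
    | _ k ih =>
    intro A hcard hA
    have IH : ∀ B : Finset X, B.Nonempty → B.card < k → f B = p B := by
      intro B h1 h2
      have h3 := ih B.card h2 B rfl h1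
      simp only [hpdef]
      rw [← h3, inv_smul_smul₀ (ne_of_gt (hWpos B h1))]
    have hgoal : f A = p A → (∑ x ∈ A, w x) • f A = ∑ x ∈ A, w x • f {x} := by
      intro h; rw [h]; simp only [hpdef]
      rw [smul_inv_smul₀ (ne_of_gt (hWpos A hA))]
    rcases lt_or_ge k 3 with hk3 | hk3
    · interval_cases k
      · exact absurd (Finset.card_eq_zero.mp hcard) (Finset.nonempty_iff_ne_empty.mp hA)
      · obtain ⟨x, rfl⟩ := Finset.card_eq_one.mp hcard
        simp
      · obtain ⟨x, y, hxy, rfl⟩ := Finset.card_eq_two.mp hcard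
        rw [Finset.sum_pair hxy, Finset.sum_pair hxy]
        exact P2 x y hxy
    · -- main case: k ≥ 3
      apply hgoal
      obtain ⟨x₀, hx₀⟩ := id hA
      have heraseNE : ∀ x ∈ A, (A.erase x).Nonempty := by
        intro x hx; rw [Finset.erase_nonempty hx]
        exact Finset.one_lt_card_iff_nontrivial.mp (by omega)
      have heraseCard : ∀ x ∈ A, (A.erase x).card < k := by
        intro x hx; rw [Finset.card_erase_of_mem hx, hcard]; omega
      by_cases hcol : Collinear ℝ ((fun x => f {x}) '' (A : Set X))
      · by_cases hall : ∀ x ∈ A, f {x} = f {x₀}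
        · -- all singleton values equal
          have herase := heraseNE x₀ hx₀
          have hsig : ∀ B : Finset X, B ⊆ A →
              ∑ x ∈ B, w x • f {x} = (∑ x ∈ B, w x) • f {x₀} := by
            intro B hBA
            rw [Finset.sum_smul]
            exact Finset.sum_congr rfl (fun u hu => by rw [hall u (hBA hu)])
          have hfe : f (A.erase x₀) = f {x₀} := by
            rw [IH _ herase (heraseCard x₀ hx₀)]
            simp only [hpdef]
            rw [hsig _ (Finset.erase_subset _ _), inv_smul_smul₀ (ne_of_gt (hWpos _ herase))]
          have heq := hleq {x₀} (A.erase x₀) ⟨x₀, by simp⟩ herase (by simp)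
          rw [← Finset.insert_eq, Finset.insert_erase hx₀] at heq
          have hfa : f A = f {x₀} := by rw [heq, hfe]; module
          simp only [hpdef]
          rw [hfa, hsig A subset_rfl, inv_smul_smul₀ (ne_of_gt (hWpos A hA))]
        · -- collinear, at least two distinct values
          push_neg at hall
          obtain ⟨y₀, hy₀A, hy₀⟩ := hall
          set d := f {y₀} - f {x₀} with hddef
          have hd0 : d ≠ 0 := sub_ne_zero.mpr hy₀
          obtain ⟨tf, htf⟩ : ∃ tf : X → ℝ, ∀ x ∈ A, f {x} = f {x₀} + tf x • d := by
            have hmem : f {x₀} ∈ (fun x => f {x}) '' (A : Set X) := ⟨x₀, hx₀, rfl⟩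
            rw [collinear_iff_of_mem hmem] at hcol
            obtain ⟨dir, hdir⟩ := hcol
            obtain ⟨ry, hry⟩ := hdir (f {y₀}) ⟨y₀, hy₀A, rfl⟩
            have hry0 : ry ≠ 0 := by
              intro h0; rw [h0] at hry; simp at hry; exact hy₀ hry
            have hparam : ∀ x ∈ A, ∃ t : ℝ, f {x} = f {x₀} + t • d := by
              intro x hx
              obtain ⟨rx, hrx⟩ := hdir (f {x}) ⟨x, hx, rfl⟩
              refine ⟨rx / ry, ?_⟩
              have hdry : d = ry • dir := by rw [hddef, hry, vadd_eq_add]; module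
              rw [hrx, vadd_eq_add, hdry, smul_smul, div_mul_cancel₀ _ hry0]
              module
            choose g hg using hparam
            exact ⟨fun x => if h : x ∈ A then g x h else 0,
              fun x hx => by dsimp only; rw [dif_pos hx]; exact hg x hx⟩
          obtain ⟨z, hz⟩ : ∃ z : X, ∀ t : ℝ, f {z} ≠ f {x₀} + t • d := by
            by_contra h; push_neg at h; exact hLZ _ _ h
          have hzA : z ∉ A := fun h => hz (tf z) (htf z h)
          set dz := f {z} - f {x₀} with hdzdef
          have hfz : f {z} = f {x₀} + dz := by rw [hdzdef]; module
          have hindep : ∀ α β : ℝ, α • d + β • dz = 0 → α = 0 ∧ β = 0 := by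
            intro α β h
            by_cases hβ : β = 0
            · refine ⟨?_, hβ⟩
              rw [hβ] at h; simp only [zero_smul, add_zero] at h
              rcases smul_eq_zero.mp h with h' | h'
              · exact h'
              · exact absurd h' hd0
            · exfalso
              apply hz (-(β⁻¹ * α))
              have h4 : β • dz = (-α) • d := by linear_combination (norm := module) h
              have h5 : dz = (-(β⁻¹ * α)) • d := by
                rw [← inv_smul_smul₀ hβ dz, h4, smul_smul]; module
              rw [hfz, h5]
          have hpOnM : ∀ B : Finset X, B ⊆ A → B.Nonempty →
              ∃ t : ℝ, p B = f {x₀} + t • d := by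
            intro B hBA hB
            have hWB := hWpos B hB
            refine ⟨(∑ u ∈ B, w u)⁻¹ * (∑ u ∈ B, w u * tf u), ?_⟩
            simp only [hpdef]
            have hσ : ∑ u ∈ B, w u • f {u} =
                (∑ u ∈ B, w u) • f {x₀} + (∑ u ∈ B, w u * tf u) • d := by
              rw [Finset.sum_smul, Finset.sum_smul, ← Finset.sum_add_distrib]
              exact Finset.sum_congr rfl (fun u hu => by rw [htf u (hBA hu)]; module)
            rw [hσ, smul_add, inv_smul_smul₀ (ne_of_gt hWB), smul_smul]
          set D := insert z A with hDdef
          have hDne : D.Nonempty := ⟨z, by rw [hDdef]; exact Finset.mem_insert_self z A⟩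
          have hWD : ∑ u ∈ D, w u = w z + ∑ u ∈ A, w u := Finset.sum_insert hzA
          obtain ⟨aA, haA⟩ : ∃ t : ℝ, f A = f {x₀} + t • d :=
            hFline _ _ A ⟨x₀, hx₀⟩ (fun x hx => ⟨tf x, htf x hx⟩)
          obtain ⟨aP, haP⟩ : ∃ t : ℝ, p A = f {x₀} + t • d := hpOnM A subset_rfl ⟨x₀, hx₀⟩
          -- subclaim : f D = p D
          have hfD : f D = p D := by
            by_contra hne
            set e := f D - p D with hedef
            have hene : e ≠ 0 := sub_ne_zero.mpr hne
            have hxstep : ∀ x ∈ A, ∃ c γ : ℝ, p (A.erase x) = f D - c • e ∧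
                e = γ • (p (insert z {x}) - p (A.erase x)) ∧ γ ≠ 0 := by
              intro x hx
              have herase := heraseNE x hx
              have hSne : (insert z {x} : Finset X).Nonempty := ⟨z, by simp⟩
              have hzx : z ≠ x := fun h => hzA (h ▸ hx)
              have hdisj : Disjoint (insert z {x}) (A.erase x) := by
                rw [Finset.disjoint_left]
                intro a ha
                rcases Finset.mem_insert.mp ha with rfl | ha'
                · exact fun h => hzA (Finset.mem_of_mem_erase h)
                · rw [Finset.mem_singleton.mp ha']
                  exact Finset.notMem_erase x A
              have hunion : insert z {x} ∪ A.erase x = D := by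
                rw [hDdef]; ext u
                simp only [Finset.mem_union, Finset.mem_insert, Finset.mem_singleton,
                  Finset.mem_erase]
                constructor
                · rintro ((rfl | rfl) | ⟨h1, h2⟩)
                  · exact Or.inl rfl
                  · exact Or.inr hx
                  · exact Or.inr h2
                · rintro (rfl | hu)
                  · exact Or.inl (Or.inl rfl)
                  · by_cases hux : u = x
                    · exact Or.inl (Or.inr hux)
                    · exact Or.inr ⟨hux, hu⟩
              have hfDeq := hleq (insert z {x}) (A.erase x) hSne herase hdisj
              rw [hunion] at hfDeq
              have hScard : (insert z {x} : Finset X).card = 2 := by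
                rw [Finset.card_insert_of_notMem (by simp [hzx]), Finset.card_singleton]
              have hfS : f (insert z {x}) = p (insert z {x}) :=
                IH _ hSne (by rw [hScard]; omega)
              have hfA' : f (A.erase x) = p (A.erase x) := IH _ herase (heraseCard x hx)
              rw [hfS, hfA'] at hfDeq
              have hpDeq := hPS (insert z {x}) (A.erase x) hSne herase hdisj
              rw [hunion] at hpDeq
              have hWDpos := hWpos D hDne
              have hWsum2 : ∑ u ∈ A.erase x, w u =
                  (∑ u ∈ D, w u) - (∑ u ∈ insert z {x}, w u) := by
                have h1 : ∑ u ∈ insert z {x}, w u + ∑ u ∈ A.erase x, w u = ∑ u ∈ D, w u := by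
                  rw [← Finset.sum_union hdisj, hunion]
                linarith
              have hτ2 : (∑ u ∈ A.erase x, w u) / (∑ u ∈ D, w u) =
                  1 - (∑ u ∈ insert z {x}, w u) / (∑ u ∈ D, w u) := by
                rw [hWsum2]; field_simp
              rw [hτ2] at hpDeq
              set m := l (insert z {x}) (A.erase x) with hmdef
              set τ := (∑ u ∈ insert z {x}, w u) / (∑ u ∈ D, w u) with hτdef
              have he2 : e = (m - τ) • (p (insert z {x}) - p (A.erase x)) := by
                rw [hedef, hfDeq, hpDeq]; module
              have hmτ : m - τ ≠ 0 := fun h0 => hene (by rw [he2, h0, zero_smul])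
              refine ⟨m / (m - τ), m - τ, ?_, he2, hmτ⟩
              rw [he2, smul_smul, div_mul_cancel₀ _ hmτ, hfDeq]
              module
            -- coordinates of e via x₀
            obtain ⟨c₀, γ₀, hc₀, hγ₀e, hγ₀⟩ := hxstep x₀ hx₀
            have hzx₀ : z ≠ x₀ := fun h => hzA (h ▸ hx₀)
            have hwzx₀ : (0:ℝ) < w z + w x₀ := add_pos (hwpos z) (hwpos x₀)
            have hpS0 : p (insert z {x₀}) = f {x₀} + ((w z + w x₀)⁻¹ * w z) • dz := by
              simp only [hpdef]
              rw [Finset.sum_insert (by simp [hzx₀]), Finset.sum_singleton,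
                Finset.sum_insert (by simp [hzx₀]), Finset.sum_singleton, hfz]
              have hne2 : w z + w x₀ ≠ 0 := ne_of_gt hwzx₀
              match_scalars
              · field_simp; ring
              · field_simp
            obtain ⟨t₁, ht₁⟩ := hpOnM (A.erase x₀) (Finset.erase_subset _ _) (heraseNE x₀ hx₀)
            have hecoords : e = (γ₀ * (-t₁)) • d + (γ₀ * ((w z + w x₀)⁻¹ * w z)) • dz := by
              rw [hγ₀e, hpS0, ht₁]; module
            have hβ : γ₀ * ((w z + w x₀)⁻¹ * w z) ≠ 0 := by
              have hpos : (0:ℝ) < (w z + w x₀)⁻¹ * w z := mul_pos (inv_pos.mpr hwzx₀) (hwpos z)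
              exact mul_ne_zero hγ₀ (ne_of_gt hpos)
            have hallpe : ∀ x ∈ A, p (A.erase x) = p (A.erase x₀) := by
              intro x hx
              obtain ⟨cx, γx, hcx, _, _⟩ := hxstep x hx
              obtain ⟨tx, htx⟩ := hpOnM (A.erase x) (Finset.erase_subset _ _) (heraseNE x hx)
              have hdiff : (c₀ - cx) • e = (tx - t₁) • d := by
                have h1 : p (A.erase x) - p (A.erase x₀) = (c₀ - cx) • e := by
                  rw [hcx, hc₀]; module
                rw [← h1, htx, ht₁]; module
              have h2 : ((c₀ - cx) * (γ₀ * (-t₁)) - (tx - t₁)) • d +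
                  ((c₀ - cx) * (γ₀ * ((w z + w x₀)⁻¹ * w z))) • dz = 0 := by
                have h3 := hdiff
                rw [hecoords] at h3
                linear_combination (norm := module) h3
              obtain ⟨h4, h5⟩ := hindep _ _ h2
              have hcc : cx = c₀ := by
                rcases mul_eq_zero.mp h5 with h | h
                · linarith
                · exact absurd h hβ
              rw [hcx, hc₀, hcc]
            -- averaging contradiction
            set m' := p (A.erase x₀) with hm'def
            have hconst : ∀ x ∈ A, w x • f {x} - w x • m' =
                (∑ u ∈ A, w u • f {u}) - (∑ u ∈ A, w u) • m' := by
              intro x hx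
              have h1 : p (A.erase x) = m' := hallpe x hx
              have hWe := hWpos _ (heraseNE x hx)
              have h2 : ∑ u ∈ A.erase x, w u • f {u} = (∑ u ∈ A.erase x, w u) • m' := by
                rw [← h1]; simp only [hpdef]
                rw [smul_inv_smul₀ (ne_of_gt hWe)]
              have h3 : ∑ u ∈ A.erase x, w u • f {u} =
                  (∑ u ∈ A, w u • f {u}) - w x • f {x} := by
                rw [← Finset.sum_erase_add A _ hx]; rw [add_sub_cancel_right]
              have h4 : ∑ u ∈ A.erase x, w u = (∑ u ∈ A, w u) - w x := by
                rw [← Finset.sum_erase_add A _ hx]; ring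
              rw [h3, h4] at h2
              linear_combination (norm := module) (-1 : ℝ) • h2
            have hsum : (∑ u ∈ A, w u • f {u}) - (∑ u ∈ A, w u) • m' =
                (A.card : ℝ) • ((∑ u ∈ A, w u • f {u}) - (∑ u ∈ A, w u) • m') := by
              calc (∑ u ∈ A, w u • f {u}) - (∑ u ∈ A, w u) • m'
                  = ∑ x ∈ A, (w x • f {x} - w x • m') := by
                    rw [Finset.sum_sub_distrib, ← Finset.sum_smul]
                _ = ∑ _x ∈ A, ((∑ u ∈ A, w u • f {u}) - (∑ u ∈ A, w u) • m') :=
                    Finset.sum_congr rfl hconst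
                _ = (A.card : ℝ) • ((∑ u ∈ A, w u • f {u}) - (∑ u ∈ A, w u) • m') := by
                    rw [Finset.sum_const, ← Nat.cast_smul_eq_nsmul ℝ]
            have hC0 : (∑ u ∈ A, w u • f {u}) - (∑ u ∈ A, w u) • m' = 0 := by
              have h6 : ((A.card : ℝ) - 1) •
                  ((∑ u ∈ A, w u • f {u}) - (∑ u ∈ A, w u) • m') = 0 := by
                rw [sub_smul, one_smul, ← hsum, sub_self]
              rcases smul_eq_zero.mp h6 with h | h
              · exfalso
                have hc3 : (3:ℝ) ≤ (A.card : ℝ) := by exact_mod_cast (hcard ▸ hk3)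
                have := sub_eq_zero.mp h
                linarith
              · exact h
            have hveq : ∀ x ∈ A, f {x} = m' := by
              intro x hx
              have h7 := hconst x hx
              rw [hC0] at h7
              have h8 : w x • (f {x} - m') = 0 := by
                linear_combination (norm := module) h7
              rcases smul_eq_zero.mp h8 with h | h
              · exact absurd h (ne_of_gt (hwpos x))
              · exact sub_eq_zero.mp h
            exact hy₀ (by rw [hveq y₀ hy₀A, hveq x₀ hx₀])
          -- final step
          have hdisjA : Disjoint A ({z} : Finset X) :=
            Finset.disjoint_singleton_right.mpr hzA
          have hfinal := hleq A {z} ⟨x₀, hx₀⟩ ⟨z, by simp⟩ hdisjA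
          have hAz : A ∪ {z} = D := by
            rw [Finset.union_comm, ← Finset.insert_eq, hDdef]
          rw [hAz] at hfinal
          obtain ⟨hlA0, hlA1⟩ := hl01 A ({z} : Finset X)
          have hpDsplit := hPS A {z} ⟨x₀, hx₀⟩ ⟨z, by simp⟩ hdisjA
          rw [hAz, hpsing z, Finset.sum_singleton] at hpDsplit
          have hWDpos := hWpos D hDne
          have hWApos := hWpos A ⟨x₀, hx₀⟩
          have hWAz : w z + ∑ u ∈ A, w u ≠ 0 := ne_of_gt (add_pos (hwpos z) hWApos)
          have hτz : w z / (∑ u ∈ D, w u) = 1 - (∑ u ∈ A, w u) / (∑ u ∈ D, w u) := by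
            rw [hWD]; field_simp; ring
          rw [hτz] at hpDsplit
          set lA := l A ({z} : Finset X) with hlAdef
          set τA := (∑ u ∈ A, w u) / (∑ u ∈ D, w u) with hτAdef
          have hmain : lA • f A + (1 - lA) • f {z} = τA • p A + (1 - τA) • f {z} := by
            rw [← hfinal, ← hpDsplit, hfD]
          have hcomb : (lA * aA - τA * aP) • d + (τA - lA) • dz = 0 := by
            have h9 := hmain
            rw [haA, haP, hfz] at h9
            linear_combination (norm := module) h9
          obtain ⟨h10, h11⟩ := hindep _ _ hcomb
          have hτAlA : τA = lA := by
            have := sub_eq_zero.mp h11; linarith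
          rw [hτAlA] at h10
          have haAP : aA = aP := by
            have h12 : lA * (aA - aP) = 0 := by linarith
            rcases mul_eq_zero.mp h12 with h | h
            · exact absurd h (ne_of_gt hlA0)
            · linarith [h]
          rw [haA, haP, haAP]
      · -- non-collinear case
        by_contra hne
        apply hcol
        rw [collinear_iff_exists_forall_eq_smul_vadd]
        refine ⟨f A, f A - p A, ?_⟩
        rintro q ⟨x, hxA, rfl⟩
        have hx : x ∈ A := hxA
        have herase : (A.erase x).Nonempty := by
          rw [Finset.erase_nonempty hx]
          exact Finset.one_lt_card_iff_nontrivial.mp (by omega)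
        have hIHe : f (A.erase x) = p (A.erase x) :=
          IH _ herase (by rw [Finset.card_erase_of_mem hx, hcard]; omega)
        have heqf := hleq {x} (A.erase x) ⟨x, by simp⟩ herase (by simp)
        rw [← Finset.insert_eq, Finset.insert_erase hx, hIHe] at heqf
        have hWA := hWpos A hA
        have hpA : p A = (w x / ∑ u ∈ A, w u) • f {x} +
            (1 - w x / ∑ u ∈ A, w u) • p (A.erase x) := by
          have h1 := hPS {x} (A.erase x) ⟨x, by simp⟩ herase (by simp)
          rw [← Finset.insert_eq, Finset.insert_erase hx, hpsing x,
            Finset.sum_singleton] at h1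
          have h2 : ∑ u ∈ A.erase x, w u = (∑ u ∈ A, w u) - w x := by
            rw [← Finset.sum_erase_add A _ hx]; ring
          have h3 : (∑ u ∈ A.erase x, w u) / (∑ u ∈ A, w u) =
              1 - w x / (∑ u ∈ A, w u) := by
            rw [h2]; field_simp
          rw [h3] at h1
          exact h1
        set m := l {x} (A.erase x) with hmdef
        set τ := w x / ∑ u ∈ A, w u with hτdef
        have he : f A - p A = (m - τ) • (f {x} - p (A.erase x)) := by
          rw [heqf, hpA]; module
        have hmτ : m - τ ≠ 0 := by
          intro h0
          apply hne
          have h1 : f A - p A = 0 := by rw [he, h0, zero_smul]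
          exact sub_eq_zero.mp h1
        refine ⟨(1 - m) / (m - τ), ?_⟩
        rw [vadd_eq_add, he, smul_smul, div_mul_cancel₀ _ hmτ, heqf]
        module
  exact ⟨w, hwpos, hREP⟩

set_option maxHeartbeats 1000000 in
theorem stmt13 {n : ℕ} {X : Type*} [Fintype X] [DecidableEq X]
    (f : Finset X → (Fin n → ℝ))
    (hsimplex : ∀ A : Finset X, A.Nonempty → (∀ ω, 0 ≤ f A ω) ∧ ∑ ω, f A ω = 1)
    (hrich : ¬ Collinear ℝ (f '' {A : Finset X | A.Nonempty})) :
    StrictWA f ↔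
      ∃ P : Fin n → X → ℝ, (∀ ω x, 0 ≤ P ω x) ∧ (∑ ω, ∑ x, P ω x = 1) ∧
        (∀ x : X, 0 < ∑ ω, P ω x) ∧
        ∀ A : Finset X, A.Nonempty → ∀ B : Finset (Fin n),
          ∑ ω ∈ B, f A ω = (∑ ω ∈ B, ∑ x ∈ A, P ω x) / (∑ x ∈ A, ∑ ω, P ω x) := by
  constructor
  · -- forward direction
    intro hwa
    obtain ⟨w, hwpos, hrep⟩ := exists_weights f hrich hwa
    have hXne : Nonempty X := by
      rcases isEmpty_or_nonempty X with h | h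
      · exfalso; apply hrich
        have hempty : {A : Finset X | A.Nonempty} = ∅ := by
          ext A; simp only [Set.mem_setOf_eq, Set.mem_empty_iff_false, iff_false]
          intro ⟨x, _⟩; exact h.false x
        rw [hempty, Set.image_empty]; exact collinear_empty ℝ _
      · exact h
    have hWtot : (0:ℝ) < ∑ x : X, w x :=
      Finset.sum_pos (fun i _ => hwpos i) Finset.univ_nonempty
    have hWtot0 : (∑ x : X, w x) ≠ 0 := ne_of_gt hWtot
    refine ⟨fun ω x => w x * f {x} ω / (∑ x : X, w x), ?_, ?_, ?_, ?_⟩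
    · intro ω x
      have h1 := (hsimplex {x} ⟨x, by simp⟩).1 ω
      have h2 := (hwpos x).le
      positivity
    · rw [Finset.sum_comm]
      have hx : ∀ x : X, ∑ ω, w x * f {x} ω / (∑ x : X, w x)
          = w x / (∑ x : X, w x) := by
        intro x
        rw [← Finset.sum_div, ← Finset.mul_sum, (hsimplex {x} ⟨x, by simp⟩).2, mul_one]
      rw [Finset.sum_congr rfl (fun x _ => hx x), ← Finset.sum_div, div_self hWtot0]
    · intro x
      have hx : ∑ ω, w x * f {x} ω / (∑ x : X, w x) = w x / (∑ x : X, w x) := by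
        rw [← Finset.sum_div, ← Finset.mul_sum, (hsimplex {x} ⟨x, by simp⟩).2, mul_one]
      rw [hx]
      exact div_pos (hwpos x) hWtot
    · intro A hA B
      have hWA : (0:ℝ) < ∑ x ∈ A, w x :=
        Finset.sum_pos (fun i _ => hwpos i) hA
      have hden : (∑ x ∈ A, ∑ ω, w x * f {x} ω / (∑ x : X, w x))
          = (∑ x ∈ A, w x) / (∑ x : X, w x) := by
        have hx : ∀ x : X, ∑ ω, w x * f {x} ω / (∑ x : X, w x)
            = w x / (∑ x : X, w x) := fun x => by
          rw [← Finset.sum_div, ← Finset.mul_sum, (hsimplex {x} ⟨x, by simp⟩).2, mul_one]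
        rw [Finset.sum_congr rfl (fun x _ => hx x), ← Finset.sum_div]
      have hnum : (∑ ω ∈ B, ∑ x ∈ A, w x * f {x} ω / (∑ x : X, w x))
          = (∑ ω ∈ B, ∑ x ∈ A, w x * f {x} ω) / (∑ x : X, w x) := by
        have hω : ∀ ω, ∑ x ∈ A, w x * f {x} ω / (∑ x : X, w x)
            = (∑ x ∈ A, w x * f {x} ω) / (∑ x : X, w x) := fun ω => by
          rw [← Finset.sum_div]
        rw [Finset.sum_congr rfl (fun ω _ => hω ω), ← Finset.sum_div]
      rw [hden, hnum, div_div_div_comm, div_self hWtot0, div_one]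
      -- now: ∑ ω ∈ B, f A ω = (∑ ω ∈ B, ∑ x ∈ A, w x * f {x} ω) / (∑ x ∈ A, w x)
      rw [eq_div_iff (ne_of_gt hWA), Finset.sum_mul]
      refine Finset.sum_congr rfl (fun ω _ => ?_)
      have h1 := congrFun (hrep A hA) ω
      simp only [Pi.smul_apply, Finset.sum_apply, smul_eq_mul] at h1
      rw [mul_comm] at h1
      exact h1
  · -- backward direction
    rintro ⟨P, hP0, hPsum, hPmarg, hPf⟩ A B hA hB hAB
    have hval : ∀ (C : Finset X), C.Nonempty → ∀ ω : Fin n,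
        f C ω = (∑ x ∈ C, P ω x) / (∑ x ∈ C, ∑ ω', P ω' x) := by
      intro C hC ω
      have := hPf C hC {ω}
      simpa using this
    have hTA : (0:ℝ) < ∑ x ∈ A, ∑ ω', P ω' x :=
      Finset.sum_pos (fun i _ => hPmarg i) hA
    have hTB : (0:ℝ) < ∑ x ∈ B, ∑ ω', P ω' x :=
      Finset.sum_pos (fun i _ => hPmarg i) hB
    refine ⟨(∑ x ∈ A, ∑ ω', P ω' x) / ((∑ x ∈ A, ∑ ω', P ω' x) + (∑ x ∈ B, ∑ ω', P ω' x)),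
      ⟨div_pos hTA (by linarith), (div_lt_one (by linarith)).mpr (by linarith)⟩, ?_⟩
    have hABne : (A ∪ B).Nonempty := by
      obtain ⟨x, hx⟩ := hA
      exact ⟨x, Finset.mem_union_left _ hx⟩
    funext ω
    have h1 := hval (A ∪ B) hABne ω
    have h2 := hval A hA ω
    have h3 := hval B hB ω
    simp only [Pi.add_apply, Pi.smul_apply, smul_eq_mul]
    rw [h1, h2, h3, Finset.sum_union hAB, Finset.sum_union hAB]
    have hne : (∑ x ∈ A, ∑ ω', P ω' x) + (∑ x ∈ B, ∑ ω', P ω' x) ≠ 0 := by linarith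
    field_simp
    ring
end

section
/- Uniqueness in subjective state-dependent expected utility: Let Ω be a finite state space, M a finite outcome set, L = Δ(M). Suppose (P₁,u₁) and (P₂,u₂) both represent the same family of conditional preferences {⪰_A : ∅ ≠ A ⊆ Ω} via x ⪰_A y ⟺ ∑_{ω∈A} P_i(ω|A) E^x[u_i(ω,·)] ≥ ∑_{ω∈A} P_i(ω|A) E^y[u_i(ω,·)], where P₁, P₂ are strictly positive probability measures on Ω. Assume the family satisfies the richness axiom and strong minimal agreement (there exist lotteries x̄, x̲ with x̄ ≻_ω x̲ for all ω, and u_i(ω, x̄) and u_i(ω, x̲) each independent of ω for i = 1,2). Then P₁ = P₂ and there exist α > 0, β ∈ ℝ with u₂(ω, m) = α u₁(ω, m) + β for all ω ∈ Ω, m ∈ M. -/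
open Finset

/-- Expected utility of a lottery `x` in state `ω` for state-dependent utility `u`. -/
def EU {Ω M : Type*} [Fintype M] (u : Ω → M → ℝ) (ω : Ω) (x : M → ℝ) : ℝ :=
  ∑ m, x m * u ω m

/-- Conditional expected value of lottery `x` given event `A`, with prior `P` and
state-dependent utility `u`. -/
noncomputable def CondVal {Ω M : Type*} [Fintype M] (P : Ω → ℝ) (u : Ω → M → ℝ)
    (A : Finset Ω) (x : M → ℝ) : ℝ :=
  ∑ ω ∈ A, (P ω / ∑ ω' ∈ A, P ω') * EU u ω x

/-- A lottery over outcomes. -/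
def IsLottery {M : Type*} [Fintype M] (x : M → ℝ) : Prop :=
  (∀ m, 0 ≤ x m) ∧ ∑ m, x m = 1

/-!
Both representations rank lotteries the same way given any event `A`, and conditional values are
linear in the lottery. A linear functional `g` that is constant on the level sets of another one,
`f`, on a convex set is an affine function of `f` there: a lottery whose `f`-value lies between two
others is `f`-indifferent, hence `g`-indifferent, to a mixture of them. Since `x̄` and `x̲` have
state-independent values, the affine map taking `CondVal P₁ u₁ A` to `CondVal P₂ u₂ A` does not
depend on `A`. Singleton events give `u₂ = α u₁ + β`, so `(P₁, u₁)` and `(P₂, u₁)` assign equal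
conditional values on every pair `{ω, ω'}`, which pins down `P(ω) / P(ω')` as soon as `u₁ ω` and
`u₁ ω'` differ at some lottery. Richness supplies two states that differ, and every state differs
from at least one of them.
-/

section Collinear

variable {E : Type*} [AddCommGroup E] [Module ℝ E] {S : Set E} (f g : E →ₗ[ℝ] ℝ)

theorem collinear_of_le_of_le (hS : Convex ℝ S) (hfg : ∀ x ∈ S, ∀ y ∈ S, f x = f y → g x = g y)
    {x y z : E} (hx : x ∈ S) (hy : y ∈ S) (hz : z ∈ S) (hxz : f x ≤ f z) (hzy : f z ≤ f y) :
    (g z - g x) * (f y - f x) = (g y - g x) * (f z - f x) := by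
  set s := (f z - f x) / (f y - f x)
  have hs : s * (f y - f x) = f z - f x := by
    rcases (hxz.trans hzy).eq_or_lt with hxy | hxy
    · simp [← hxy, le_antisymm hzy (hxy ▸ hxz)]
    · exact div_mul_cancel₀ _ (sub_pos.2 hxy).ne'
  have hs₀ : 0 ≤ s := div_nonneg (sub_nonneg.2 hxz) (sub_nonneg.2 (hxz.trans hzy))
  have hs₁ : s ≤ 1 := div_le_one_of_le₀ (by linarith) (sub_nonneg.2 (hxz.trans hzy))
  have hw : s • y + (1 - s) • x ∈ S := hS hy hx hs₀ (by linarith) (by ring)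
  have hgw : g (s • y + (1 - s) • x) = g z :=
    hfg _ hw z hz (by simp only [map_add, map_smul, smul_eq_mul]; linear_combination hs)
  simp only [map_add, map_smul, smul_eq_mul] at hgw
  linear_combination (f y - f x) * hgw.symm + (g y - g x) * hs

theorem collinear_of_lt (hS : Convex ℝ S) (hfg : ∀ x ∈ S, ∀ y ∈ S, f x = f y → g x = g y)
    {x y z : E} (hx : x ∈ S) (hy : y ∈ S) (hz : z ∈ S) (hxy : f x < f y) :
    (g z - g x) * (f y - f x) = (g y - g x) * (f z - f x) := by
  rcases lt_or_ge (f z) (f x) with hzx | hxz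
  · have := collinear_of_le_of_le f g hS hfg hz hy hx hzx.le hxy.le
    linear_combination -this
  rcases le_or_gt (f z) (f y) with hzy | hyz
  · exact collinear_of_le_of_le f g hS hfg hx hy hz hxz hzy
  · have := collinear_of_le_of_le f g hS hfg hx hz hy hxy.le hyz.le
    linear_combination -this

end Collinear

section Lottery

variable {Ω M : Type*} [Fintype M]

theorem convex_setOf_isLottery : Convex ℝ {x : M → ℝ | IsLottery x} :=
  convex_stdSimplex ℝ M

theorem isLottery_single [DecidableEq M] (m : M) : IsLottery (Pi.single m (1 : ℝ)) :=
  ⟨fun m' => by rw [Pi.single_apply]; split_ifs <;> norm_num, by simp⟩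

theorem eu_single [DecidableEq M] (u : Ω → M → ℝ) (ω : Ω) (m : M) :
    EU u ω (Pi.single m 1) = u ω m := by
  simp [EU, Pi.single_apply]

theorem eu_of_affine {u v : Ω → M → ℝ} {ω : Ω} {α β : ℝ} (h : ∀ m, v ω m = α * u ω m + β)
    {x : M → ℝ} (hx : ∑ m, x m = 1) : EU v ω x = α * EU u ω x + β := by
  simp only [EU, h, mul_add, sum_add_distrib, ← sum_mul, hx, one_mul, mul_sum]
  exact congrArg (· + β) (sum_congr rfl fun _ _ => by ring)

noncomputable def condValₗ (P : Ω → ℝ) (u : Ω → M → ℝ) (A : Finset Ω) :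
    (M → ℝ) →ₗ[ℝ] ℝ where
  toFun := CondVal P u A
  map_add' x y := by
    simp only [CondVal, EU, Pi.add_apply, add_mul, sum_add_distrib, mul_add]
  map_smul' c x := by
    simp only [CondVal, EU, Pi.smul_apply, smul_eq_mul, mul_sum, RingHom.id_apply]
    exact sum_congr rfl fun _ _ => sum_congr rfl fun _ _ => by ring

@[simp]
theorem condValₗ_apply (P : Ω → ℝ) (u : Ω → M → ℝ) (A : Finset Ω) (x : M → ℝ) :
    condValₗ P u A x = CondVal P u A x := rfl

theorem sum_div_sum_self {P : Ω → ℝ} {A : Finset Ω} (hA : ∑ ω ∈ A, P ω ≠ 0) :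
    ∑ ω ∈ A, P ω / ∑ ω' ∈ A, P ω' = 1 := by
  rw [← sum_div, div_self hA]

theorem condVal_of_eu_affine {P : Ω → ℝ} {u v : Ω → M → ℝ} {A : Finset Ω} {x : M → ℝ}
    {α β : ℝ} (h : ∀ ω ∈ A, EU v ω x = α * EU u ω x + β) (hA : ∑ ω ∈ A, P ω ≠ 0) :
    CondVal P v A x = α * CondVal P u A x + β := by
  calc CondVal P v A x
      = ∑ ω ∈ A, (α * ((P ω / ∑ ω' ∈ A, P ω') * EU u ω x) + β * (P ω / ∑ ω' ∈ A, P ω')) :=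
        sum_congr rfl fun ω hω => by rw [h ω hω]; ring
    _ = α * CondVal P u A x + β := by
        rw [sum_add_distrib, ← mul_sum, ← mul_sum, sum_div_sum_self hA, mul_one, CondVal]

theorem condVal_of_eu_const {P : Ω → ℝ} {u : Ω → M → ℝ} {A : Finset Ω} {x : M → ℝ} {c : ℝ}
    (h : ∀ ω ∈ A, EU u ω x = c) (hA : ∑ ω ∈ A, P ω ≠ 0) : CondVal P u A x = c := by
  rw [CondVal, sum_congr rfl fun ω hω => by rw [h ω hω], ← sum_mul, sum_div_sum_self hA,
    one_mul]

theorem condVal_singleton {P : Ω → ℝ} (u : Ω → M → ℝ) {ω : Ω} (x : M → ℝ) (hP : P ω ≠ 0) :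
    CondVal P u {ω} x = EU u ω x := by
  simp [CondVal, div_self hP]

theorem condVal_pair [DecidableEq Ω] (P : Ω → ℝ) (u : Ω → M → ℝ) {ω ω' : Ω} (x : M → ℝ)
    (hne : ω ≠ ω') :
    CondVal P u {ω, ω'} x =
      (P ω * EU u ω x + P ω' * EU u ω' x) / (P ω + P ω') := by
  rw [CondVal, sum_pair hne, sum_pair hne]
  ring

end Lottery

theorem eq_of_forall_mul_eq_mul_of_sum_eq_one {ι : Type*} [Fintype ι] {P Q : ι → ℝ} {i₀ : ι}
    (h : ∀ i, P i * Q i₀ = Q i * P i₀) (hP : ∑ i, P i = 1) (hQ : ∑ i, Q i = 1) (h₀ : Q i₀ ≠ 0) :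
    P = Q := by
  have hi₀ : Q i₀ = P i₀ := by
    simpa only [← sum_mul, hP, hQ, one_mul] using sum_congr rfl fun i (_ : i ∈ univ) => h i
  funext i
  exact mul_right_cancel₀ h₀ (by rw [h i, hi₀])

section Identification

variable {Ω M : Type*} [Fintype M]

theorem exists_condVal_eq_affine {P₁ P₂ : Ω → ℝ} {u₁ u₂ : Ω → M → ℝ}
    (hP₁ : ∀ ω, 0 < P₁ ω) (hP₂ : ∀ ω, 0 < P₂ ω)
    (hsame : ∀ A : Finset Ω, A.Nonempty → ∀ x y : M → ℝ, IsLottery x → IsLottery y →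
      (CondVal P₁ u₁ A y ≤ CondVal P₁ u₁ A x ↔ CondVal P₂ u₂ A y ≤ CondVal P₂ u₂ A x))
    {xb xl : M → ℝ} (hxb : IsLottery xb) (hxl : IsLottery xl) {a₁ b₁ a₂ b₂ : ℝ}
    (h₁ : a₁ < b₁) (h₂ : a₂ < b₂) (hb₁ : ∀ ω, EU u₁ ω xb = b₁) (ha₁ : ∀ ω, EU u₁ ω xl = a₁)
    (hb₂ : ∀ ω, EU u₂ ω xb = b₂) (ha₂ : ∀ ω, EU u₂ ω xl = a₂) :
    ∃ α β : ℝ, 0 < α ∧ ∀ A : Finset Ω, A.Nonempty → ∀ z : M → ℝ, IsLottery z →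
      CondVal P₂ u₂ A z = α * CondVal P₁ u₁ A z + β := by
  refine ⟨(b₂ - a₂) / (b₁ - a₁), a₂ - (b₂ - a₂) / (b₁ - a₁) * a₁,
    div_pos (sub_pos.2 h₂) (sub_pos.2 h₁), fun A hA z hz => ?_⟩
  have hA₁ : ∑ ω ∈ A, P₁ ω ≠ 0 := (sum_pos (fun ω _ => hP₁ ω) hA).ne'
  have hA₂ : ∑ ω ∈ A, P₂ ω ≠ 0 := (sum_pos (fun ω _ => hP₂ ω) hA).ne'
  have hindiff : ∀ x ∈ {x : M → ℝ | IsLottery x}, ∀ y ∈ {x : M → ℝ | IsLottery x},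
      condValₗ P₁ u₁ A x = condValₗ P₁ u₁ A y → condValₗ P₂ u₂ A x = condValₗ P₂ u₂ A y :=
    fun x hx y hy hxy =>
      le_antisymm ((hsame A hA y x hy hx).1 hxy.le) ((hsame A hA x y hx hy).1 hxy.ge)
  have key := collinear_of_lt (condValₗ P₁ u₁ A) (condValₗ P₂ u₂ A) convex_setOf_isLottery
    hindiff hxl hxb hz
  simp only [condValₗ_apply, condVal_of_eu_const (fun ω _ => hb₁ ω) hA₁,
    condVal_of_eu_const (fun ω _ => ha₁ ω) hA₁, condVal_of_eu_const (fun ω _ => hb₂ ω) hA₂,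
    condVal_of_eu_const (fun ω _ => ha₂ ω) hA₂] at key
  have hB : b₁ - a₁ ≠ 0 := (sub_pos.2 h₁).ne'
  field_simp
  linear_combination key h₁

theorem cross_mul_eq_of_condVal_pair_eq [DecidableEq Ω] {P Q : Ω → ℝ} {u : Ω → M → ℝ}
    {ω ω' : Ω} {z : M → ℝ} (hz : EU u ω z ≠ EU u ω' z) (hP : P ω + P ω' ≠ 0)
    (hQ : Q ω + Q ω' ≠ 0) (h : CondVal P u {ω, ω'} z = CondVal Q u {ω, ω'} z) :
    P ω * Q ω' = Q ω * P ω' := by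
  have hne : ω ≠ ω' := by rintro rfl; exact hz rfl
  rw [condVal_pair _ _ _ hne, condVal_pair _ _ _ hne, div_eq_div_iff hP hQ] at h
  have hprod : (P ω * Q ω' - Q ω * P ω') * (EU u ω z - EU u ω' z) = 0 := by
    linear_combination h
  exact sub_eq_zero.1 ((mul_eq_zero.1 hprod).resolve_right (sub_ne_zero.2 hz))

theorem eq_of_condVal_pair_eq [Fintype Ω] [DecidableEq Ω] {P₁ P₂ : Ω → ℝ} {u : Ω → M → ℝ}
    (hP₁ : ∀ ω, 0 < P₁ ω) (hP₂ : ∀ ω, 0 < P₂ ω) (hP₁sum : ∑ ω, P₁ ω = 1)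
    (hP₂sum : ∑ ω, P₂ ω = 1) {ωa ωb : Ω} {z : M → ℝ} (hz : EU u ωa z ≠ EU u ωb z)
    (h : ∀ ω ω', CondVal P₁ u {ω, ω'} z = CondVal P₂ u {ω, ω'} z) : P₁ = P₂ := by
  have cross : ∀ ω ω', EU u ω z ≠ EU u ω' z → P₁ ω * P₂ ω' = P₂ ω * P₁ ω' :=
    fun ω ω' hne => cross_mul_eq_of_condVal_pair_eq hne
      (add_pos (hP₁ ω) (hP₁ ω')).ne' (add_pos (hP₂ ω) (hP₂ ω')).ne' (h ω ω')
  refine eq_of_forall_mul_eq_mul_of_sum_eq_one (i₀ := ωa) (fun ω => ?_) hP₁sum hP₂sum (hP₂ ωa).ne'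
  by_cases hω : EU u ω z = EU u ωa z
  · have e₁ := cross ω ωb (hω ▸ hz)
    have e₂ := cross ωa ωb hz
    refine mul_right_cancel₀ (hP₂ ωb).ne' ?_
    linear_combination P₂ ωa * e₁ - P₂ ω * e₂
  · exact cross ω ωa hω

end Identification

theorem stmt18 {Ω M : Type*} [Fintype Ω] [Fintype M] [DecidableEq Ω]
    (P₁ P₂ : Ω → ℝ) (u₁ u₂ : Ω → M → ℝ)
    (hP₁pos : ∀ ω, 0 < P₁ ω) (hP₂pos : ∀ ω, 0 < P₂ ω)
    (hP₁sum : ∑ ω, P₁ ω = 1) (hP₂sum : ∑ ω, P₂ ω = 1)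
    (hsame : ∀ A : Finset Ω, A.Nonempty → ∀ x y : M → ℝ, IsLottery x → IsLottery y →
      (CondVal P₁ u₁ A y ≤ CondVal P₁ u₁ A x ↔ CondVal P₂ u₂ A y ≤ CondVal P₂ u₂ A x))
    (hrich : ∃ ω₁ ω₂ ω₃ : Ω, ω₁ ≠ ω₂ ∧ ω₁ ≠ ω₃ ∧ ω₂ ≠ ω₃ ∧
      ∀ ω ∈ ({ω₁, ω₂, ω₃} : Finset Ω), ∃ x y : M → ℝ, IsLottery x ∧ IsLottery y ∧
        EU u₁ ω y < EU u₁ ω x ∧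
        ∀ ω' ∈ ({ω₁, ω₂, ω₃} : Finset Ω), ω' ≠ ω → EU u₁ ω' x ≤ EU u₁ ω' y)
    (hsma : ∃ xbar xlow : M → ℝ, IsLottery xbar ∧ IsLottery xlow ∧
      (∀ ω, EU u₁ ω xlow < EU u₁ ω xbar) ∧ (∀ ω, EU u₂ ω xlow < EU u₂ ω xbar) ∧
      (∀ ω ω', EU u₁ ω xbar = EU u₁ ω' xbar) ∧ (∀ ω ω', EU u₁ ω xlow = EU u₁ ω' xlow) ∧
      (∀ ω ω', EU u₂ ω xbar = EU u₂ ω' xbar) ∧ (∀ ω ω', EU u₂ ω xlow = EU u₂ ω' xlow)) :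
    P₁ = P₂ ∧ ∃ α β : ℝ, 0 < α ∧ ∀ ω m, u₂ ω m = α * u₁ ω m + β := by
  classical
  obtain ⟨xb, xl, hxb, hxl, hlt₁, hlt₂, hb₁, hl₁, hb₂, hl₂⟩ := hsma
  obtain ⟨ω₁, ω₂, ω₃, h₁₂, -, -, hR⟩ := hrich
  obtain ⟨α, β, hα, hrep⟩ := exists_condVal_eq_affine hP₁pos hP₂pos hsame hxb hxl
    (hlt₁ ω₁) (hlt₂ ω₁) (hb₁ · ω₁) (hl₁ · ω₁) (hb₂ · ω₁) (hl₂ · ω₁)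
  have hu : ∀ ω m, u₂ ω m = α * u₁ ω m + β := fun ω m => by
    simpa only [condVal_singleton _ _ (hP₁pos ω).ne', condVal_singleton _ _ (hP₂pos ω).ne',
      eu_single] using hrep {ω} (singleton_nonempty ω) _ (isLottery_single m)
  have hcond : ∀ A : Finset Ω, A.Nonempty → ∀ z, IsLottery z →
      CondVal P₁ u₁ A z = CondVal P₂ u₁ A z := fun A hA z hz => by
    have h := hrep A hA z hz
    rw [condVal_of_eu_affine (fun ω _ => eu_of_affine (hu ω) hz.2)
      (sum_pos (fun ω _ => hP₂pos ω) hA).ne'] at h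
    exact (mul_left_cancel₀ hα.ne' (add_right_cancel h)).symm
  obtain ⟨z, hz, hne⟩ : ∃ z, IsLottery z ∧ EU u₁ ω₁ z ≠ EU u₁ ω₂ z := by
    obtain ⟨x, y, hx, hy, hlt, hle⟩ := hR ω₁ (by simp)
    have hle := hle ω₂ (by simp) h₁₂.symm
    by_contra! h
    linarith [h x hx, h y hy]
  exact ⟨eq_of_condVal_pair_eq hP₁pos hP₂pos hP₁sum hP₂sum hne
    fun ω ω' => hcond _ (insert_nonempty _ _) z hz, α, β, hα, hu⟩
end

section
/- Let f : X^T → Δ(Ω) be a rich, stationary belief formation process over timed signal sets satisfying the strict weighted averaging property. Then there exist a unique q ∈ (0,∞) and a weight function w : X → ℝ₊₊, unique up to positive scaling, such that for all (A, T_A) ∈ X^T, f(A, T_A) = (∑_{x∈A} q^{T_A(x)} w(x) f({x}, x↦1)) / (∑_{x∈A} q^{T_A(x)} w(x)). -/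
open Finset

namespace Stmt19Aux

set_option linter.unusedSectionVars false

variable {X : Type*} [DecidableEq X] {n : ℕ}

/-- linear independence of two vectors, concretely. -/
def Indep (v w : Fin n → ℝ) : Prop := ∀ c e : ℝ, c • v + e • w = 0 → c = 0 ∧ e = 0

lemma Indep.ne_zero_left {v w : Fin n → ℝ} (h : Indep v w) : v ≠ 0 := by
  intro hv
  have := h 1 0 (by rw [hv]; module)
  simp at this

lemma Indep.ne_zero_right {v w : Fin n → ℝ} (h : Indep v w) : w ≠ 0 := by
  intro hv
  have := h 0 1 (by rw [hv]; module)
  simp at this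

lemma Indep.symm {v w : Fin n → ℝ} (h : Indep v w) : Indep w v := by
  intro c e he
  have := h e c (by linear_combination (norm := module) he)
  exact ⟨this.2, this.1⟩

lemma Indep.shear {v w : Fin n → ℝ} (h : Indep v w) (c : ℝ) : Indep v (w + c • v) := by
  intro a b he
  have := h (a + b * c) b (by linear_combination (norm := module) he)
  obtain ⟨h1, h2⟩ := this
  subst h2
  constructor
  · linarith
  · rfl

lemma not_indep {v w : Fin n → ℝ} (h : ¬ Indep v w) (hw : w ≠ 0) : ∃ r : ℝ, v = r • w := by
  unfold Indep at h
  push_neg at h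
  obtain ⟨c, e, hce, hne⟩ := h
  by_cases hc : c = 0
  · subst hc
    exfalso
    simp only [zero_smul, zero_add] at hce
    rcases smul_eq_zero.1 hce with he | he
    · exact hne rfl he
    · exact hw he
  · refine ⟨-e / c, ?_⟩
    have : c • v = (-e) • w := by linear_combination (norm := module) hce
    have := congrArg (fun z => c⁻¹ • z) this
    simp only [smul_smul, inv_mul_cancel₀ hc, one_smul] at this
    rw [this]
    congr 1
    field_simp

lemma two_point_unique {bx by' : Fin n → ℝ} (h : bx ≠ by') {l l' : ℝ}
    (he : l • bx + (1 - l) • by' = l' • bx + (1 - l') • by') : l = l' := by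
  by_contra hne
  apply h
  have h2 : (l - l') • (bx - by') = 0 := by linear_combination (norm := module) he
  rcases smul_eq_zero.1 h2 with h3 | h3
  · exact absurd (by linarith [sub_eq_zero.1 (by exact_mod_cast h3)] : l = l') hne
  · exact sub_eq_zero.1 h3

/-- Bundled hypotheses. -/
structure Hyp (X : Type*) [DecidableEq X] (n : ℕ) where
  f : Finset X → (X → ℕ) → (Fin n → ℝ)
  hrestrict : ∀ (A : Finset X) (T T' : X → ℕ), (∀ x ∈ A, T x = T' x) → f A T = f A T'
  hstat : ∀ (A : Finset X) (T : X → ℕ) (c : ℕ), f A (fun x => T x + c) = f A T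
  hswa : ∀ (A B : Finset X) (T : X → ℕ), A.Nonempty → B.Nonempty → Disjoint A B →
      ∃ l ∈ Set.Ioo (0:ℝ) 1, f (A ∪ B) T = l • f A T + (1 - l) • f B T

variable (h : Hyp X n)

/-- belief from a single signal -/
noncomputable def Hyp.b (x : X) : Fin n → ℝ := h.f {x} (fun _ => 1)

lemma Hyp.single_eq (x : X) (T : X → ℕ) : h.f {x} T = h.b x := by
  have key : ∀ c : ℕ, h.f {x} (fun _ => c) = h.f {x} (fun _ => 0) := by
    intro c
    have := h.hstat {x} (fun _ => 0) c
    simpa using this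
  have h1 : h.f {x} T = h.f {x} (fun _ => T x) :=
    h.hrestrict _ _ _ (by intro z hz; simp at hz; subst hz; rfl)
  rw [h1, key (T x), Hyp.b, ← key 1]

/-- canonical timing function for a pair -/
def pT (x : X) (t u : ℕ) : X → ℕ := fun z => if z = x then t else u

lemma Hyp.pair_decomp {x y : X} (hxy : x ≠ y) (T : X → ℕ) :
    ∃ l ∈ Set.Ioo (0:ℝ) 1, h.f {x, y} T = l • h.b x + (1 - l) • h.b y := by
  obtain ⟨l, hl, he⟩ := h.hswa {x} {y} T (singleton_nonempty x) (singleton_nonempty y)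
    (by simp [Finset.disjoint_singleton_right, hxy.symm, hxy])
  refine ⟨l, hl, ?_⟩
  have hu : ({x} : Finset X) ∪ {y} = {x, y} := rfl
  rw [hu, h.single_eq, h.single_eq] at he
  exact he

/-- the canonical pair coefficient -/
noncomputable def Hyp.lam (x y : X) (t u : ℕ) : ℝ :=
  if hxy : x = y then 1/2 else Classical.choose (h.pair_decomp hxy (pT x t u))

lemma Hyp.lam_spec {x y : X} (hxy : x ≠ y) (t u : ℕ) :
    h.lam x y t u ∈ Set.Ioo (0:ℝ) 1 ∧
      h.f {x, y} (pT x t u) = h.lam x y t u • h.b x + (1 - h.lam x y t u) • h.b y := by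
  rw [Hyp.lam, dif_neg hxy]
  obtain ⟨hmem, heq⟩ := Classical.choose_spec (h.pair_decomp hxy (pT x t u))
  exact ⟨hmem, heq⟩

lemma Hyp.lam_pos {x y : X} (hxy : x ≠ y) (t u : ℕ) : 0 < h.lam x y t u :=
  ((h.lam_spec hxy t u).1).1

lemma Hyp.lam_lt_one {x y : X} (hxy : x ≠ y) (t u : ℕ) : h.lam x y t u < 1 :=
  ((h.lam_spec hxy t u).1).2

lemma Hyp.pair_formula {x y : X} (hxy : x ≠ y) (T : X → ℕ) :
    h.f {x, y} T = h.lam x y (T x) (T y) • h.b x + (1 - h.lam x y (T x) (T y)) • h.b y := by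
  have hT : h.f {x, y} T = h.f {x, y} (pT x (T x) (T y)) := by
    apply h.hrestrict
    intro z hz
    simp only [mem_insert, mem_singleton] at hz
    rcases hz with rfl | rfl
    · simp [pT]
    · simp [pT, hxy.symm]
    -- note: if z = y and y ≠ x, pT gives T y
  rw [hT]
  exact (h.lam_spec hxy (T x) (T y)).2

lemma Hyp.lam_unique {x y : X} (hxy : x ≠ y) (hb : h.b x ≠ h.b y) (T : X → ℕ) {l : ℝ}
    (he : h.f {x, y} T = l • h.b x + (1 - l) • h.b y) : l = h.lam x y (T x) (T y) := by
  apply two_point_unique hb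
  rw [← he]
  exact h.pair_formula hxy T

lemma Hyp.lam_symm {x y : X} (hxy : x ≠ y) (hb : h.b x ≠ h.b y) (t u : ℕ) :
    h.lam y x u t = 1 - h.lam x y t u := by
  have h1 : h.f {y, x} (pT y u t) = h.lam y x u t • h.b y + (1 - h.lam y x u t) • h.b x :=
    (h.lam_spec hxy.symm u t).2
  have hpair : ({y, x} : Finset X) = {x, y} := by ext z; simp [or_comm]
  rw [hpair] at h1
  have h2 : h.f {x, y} (pT y u t) = (1 - h.lam y x u t) • h.b x + (1 - (1 - h.lam y x u t)) • h.b y := by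
    rw [h1]
    module
  have := h.lam_unique hxy hb (pT y u t) h2
  have hx : pT y u t x = t := by simp [pT, hxy]
  have hy : pT y u t y = u := by simp [pT]
  rw [hx, hy] at this
  linarith

lemma Hyp.lam_shift {x y : X} (hxy : x ≠ y) (hb : h.b x ≠ h.b y) (t u c : ℕ) :
    h.lam x y (t + c) (u + c) = h.lam x y t u := by
  have hfun : (fun z => pT x t u z + c) = pT x (t + c) (u + c) := by
    funext z
    simp only [pT]
    split <;> rfl
  have h1 : h.f {x, y} (pT x (t+c) (u+c)) = h.f {x, y} (pT x t u) := by
    rw [← hfun]; exact h.hstat {x, y} (pT x t u) c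
  have h2 : h.f {x, y} (pT x (t+c) (u+c))
      = h.lam x y t u • h.b x + (1 - h.lam x y t u) • h.b y := by
    rw [h1]; exact (h.lam_spec hxy t u).2
  have := h.lam_unique hxy hb (pT x (t+c) (u+c)) h2
  have hx : pT x (t+c) (u+c) x = t + c := by simp [pT]
  have hy : pT x (t+c) (u+c) y = u + c := by simp [pT, hxy.symm]
  rw [hx, hy] at this
  exact this.symm

/-- relative weight of `(x,t)` vs `(y,u)` -/
noncomputable def Hyp.R (x y : X) (t u : ℕ) : ℝ :=
  h.lam x y t u / (1 - h.lam x y t u)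

lemma Hyp.R_pos {x y : X} (hxy : x ≠ y) (t u : ℕ) : 0 < h.R x y t u :=
  div_pos (h.lam_pos hxy t u) (by linarith [h.lam_lt_one hxy t u])

lemma Hyp.R_mul_R {x y : X} (hxy : x ≠ y) (hb : h.b x ≠ h.b y) (t u : ℕ) :
    h.R x y t u * h.R y x u t = 1 := by
  rw [Hyp.R, Hyp.R, h.lam_symm hxy hb]
  have h1 := h.lam_pos hxy t u
  have h2 := h.lam_lt_one hxy t u
  rw [div_mul_div_comm]
  rw [div_eq_one_iff_eq (by nlinarith)]
  ring

lemma Hyp.R_shift {x y : X} (hxy : x ≠ y) (hb : h.b x ≠ h.b y) (t u c : ℕ) :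
    h.R x y (t + c) (u + c) = h.R x y t u := by
  rw [Hyp.R, Hyp.R, h.lam_shift hxy hb]

lemma tri_unique {bx by' bz : Fin n → ℝ} (hi : Indep (by' - bx) (bz - bx))
    {a b c a' b' c' : ℝ} (hs : a + b + c = 1) (hs' : a' + b' + c' = 1)
    (he : a • bx + b • by' + c • bz = a' • bx + b' • by' + c' • bz) :
    a = a' ∧ b = b' ∧ c = c' := by
  have key := hi (b - b') (c - c')
    (by linear_combination (norm := module) he + (hs' - hs) • bx)
  obtain ⟨k1, k2⟩ := key
  refine ⟨by linarith, by linarith, by linarith⟩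

/-- canonical timing function for a triple -/
def tT (x y : X) (t u v : ℕ) : X → ℕ := fun z => if z = x then t else if z = y then u else v

lemma Hyp.triple_formula {x y z : X} (hxy : x ≠ y) (hxz : x ≠ z) (hyz : y ≠ z)
    (t u v : ℕ) :
    ∃ l ∈ Set.Ioo (0:ℝ) 1, h.f {x, y, z} (tT x y t u v)
      = (l * h.lam x y t u) • h.b x + (l * (1 - h.lam x y t u)) • h.b y + (1 - l) • h.b z := by
  obtain ⟨l, hl, he⟩ := h.hswa {x, y} {z} (tT x y t u v)
    (insert_nonempty x {y}) (singleton_nonempty z)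
    (by simp [Finset.disjoint_singleton_right, hxz.symm, hyz.symm])
  have hu : ({x, y} : Finset X) ∪ {z} = {x, y, z} := by ext w; simp [or_assoc]
  rw [hu, h.single_eq] at he
  have hp : h.f {x, y} (tT x y t u v) = h.lam x y t u • h.b x + (1 - h.lam x y t u) • h.b y := by
    have := h.pair_formula hxy (tT x y t u v)
    have hx : tT x y t u v x = t := by simp [tT]
    have hy : tT x y t u v y = u := by simp [tT, hxy.symm]
    rw [hx, hy] at this
    exact this
  rw [hp] at he
  exact ⟨l, hl, by rw [he]; module⟩

/-- consistency of weight ratios for an affinely independent triple -/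
lemma Hyp.R_chain_indep {x y z : X} (hxy : x ≠ y) (hxz : x ≠ z) (hyz : y ≠ z)
    (hi : Indep (h.b y - h.b x) (h.b z - h.b x)) (t u v : ℕ) :
    h.R x y t u * h.R y z u v = h.R x z t v := by
  have hbxy : h.b x ≠ h.b y := by
    intro hb
    have := hi 1 0 (by rw [hb]; module)
    simpa using this.1
  have hbxz : h.b x ≠ h.b z := by
    intro hb
    have := hi 0 1 (by rw [hb]; module)
    simpa using this.2
  have hbyz : h.b y ≠ h.b z := by
    intro hb
    have := hi 1 (-1) (by rw [hb]; module)
    simpa using this.1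
  -- three decompositions of the same point
  obtain ⟨l1, hl1, e1⟩ := h.triple_formula hxy hxz hyz t u v
  obtain ⟨l2, hl2, e2⟩ := h.triple_formula hyz hxy.symm hxz.symm u v t
  obtain ⟨l3, hl3, e3⟩ := h.triple_formula hxz hxy hyz.symm t v u
  -- identify the sets and timing functions
  have hset2 : ({y, z, x} : Finset X) = {x, y, z} := by ext w; simp; tauto
  have hset3 : ({x, z, y} : Finset X) = {x, y, z} := by ext w; simp; tauto
  rw [hset2] at e2
  rw [hset3] at e3
  have hT2 : h.f {x, y, z} (tT y z u v t) = h.f {x, y, z} (tT x y t u v) := by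
    apply h.hrestrict
    intro w hw
    simp only [mem_insert, mem_singleton] at hw
    rcases hw with rfl | rfl | rfl
    · simp [tT, hxy, hxz]
    · simp [tT, hxy.symm, hyz]
    · simp [tT, hxz.symm, hyz.symm]
  have hT3 : h.f {x, y, z} (tT x z t v u) = h.f {x, y, z} (tT x y t u v) := by
    apply h.hrestrict
    intro w hw
    simp only [mem_insert, mem_singleton] at hw
    rcases hw with rfl | rfl | rfl
    · simp [tT]
    · simp [tT, hxy.symm, hyz]
    · simp [tT, hxz.symm, hyz.symm]
  rw [hT2] at e2
  rw [hT3] at e3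
  -- rewrite e2, e3 in the (x, y, z) order
  have e2' : h.f {x, y, z} (tT x y t u v)
      = (1 - l2) • h.b x + (l2 * h.lam y z u v) • h.b y + (l2 * (1 - h.lam y z u v)) • h.b z := by
    rw [e2]; module
  have e3' : h.f {x, y, z} (tT x y t u v)
      = (l3 * h.lam x z t v) • h.b x + (1 - l3) • h.b y + (l3 * (1 - h.lam x z t v)) • h.b z := by
    rw [e3]; module
  obtain ⟨p1, p2, p3⟩ := tri_unique hi (by ring) (by ring) (e1.symm.trans e2')
  obtain ⟨q1, q2, q3⟩ := tri_unique hi (by ring) (by ring) (e1.symm.trans e3')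
  -- now pure algebra
  set a := h.lam x y t u with ha
  set b := h.lam y z u v with hb
  set c := h.lam x z t v with hc
  have hapos : 0 < a := h.lam_pos hxy t u
  have halt : a < 1 := h.lam_lt_one hxy t u
  have hbpos : 0 < b := h.lam_pos hyz u v
  have hblt : b < 1 := h.lam_lt_one hyz u v
  have hcpos : 0 < c := h.lam_pos hxz t v
  have hclt : c < 1 := h.lam_lt_one hxz t v
  have hl1p := hl1.1
  have hl2p := hl2.1
  have hl3p := hl3.1
  rw [Hyp.R, Hyp.R, Hyp.R, ← ha, ← hb, ← hc]
  have hR1 : a / (1 - a) = (l1 * a) / (l1 * (1 - a)) := by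
    rw [mul_div_mul_left _ _ (ne_of_gt hl1p)]
  have hR2 : b / (1 - b) = (l1 * (1 - a)) / (1 - l1) := by
    rw [p2, p3, mul_div_mul_left _ _ (ne_of_gt hl2p)]
  have hR3 : c / (1 - c) = (l1 * a) / (1 - l1) := by
    rw [q1, q3, mul_div_mul_left _ _ (ne_of_gt hl3p)]
  rw [hR1, hR2, hR3]
  have hne1 : l1 * (1 - a) ≠ 0 := ne_of_gt (mul_pos hl1p (by linarith))
  have hne2 : (1 - l1) ≠ 0 := ne_of_gt (by linarith [hl1.2])
  field_simp
  exact div_self (sub_ne_zero.2 (ne_of_gt halt))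

lemma Hyp.collinear_of_forall (x0 : X) (d : Fin n → ℝ)
    (hl : ∀ u : X, ∃ r : ℝ, h.b u - h.b x0 = r • d) : Collinear ℝ (Set.range h.b) := by
  rw [collinear_iff_exists_forall_eq_smul_vadd]
  refine ⟨h.b x0, d, ?_⟩
  rintro p ⟨u, rfl⟩
  obtain ⟨r, hr⟩ := hl u
  refine ⟨r, ?_⟩
  have : h.b u = r • d + h.b x0 := by linear_combination (norm := module) hr
  simpa [vadd_eq_add] using this

lemma Hyp.exists_offline (hrich : ¬ Collinear ℝ (Set.range h.b)) (x0 : X) (d : Fin n → ℝ)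
    (hd : d ≠ 0) : ∃ u : X, Indep d (h.b u - h.b x0) := by
  by_contra hno
  push_neg at hno
  apply hrich
  apply h.collinear_of_forall x0 d
  intro u
  exact not_indep (fun hi => hno u hi.symm) hd

lemma Hyp.exists_triple (hrich : ¬ Collinear ℝ (Set.range h.b)) :
    ∃ p0 p1 p2 : X, Indep (h.b p1 - h.b p0) (h.b p2 - h.b p0) := by
  by_cases hex : ∃ x0 x1 : X, h.b x1 - h.b x0 ≠ 0
  · obtain ⟨x0, x1, hd⟩ := hex
    obtain ⟨u, hu⟩ := h.exists_offline hrich x0 _ hd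
    exact ⟨x0, x1, u, hu⟩
  · exfalso
    push_neg at hex
    apply hrich
    rcases isEmpty_or_nonempty X with hX | hX
    · haveI := hX
      rw [Set.range_eq_empty]
      exact collinear_empty ℝ _
    · obtain ⟨x0⟩ := hX
      apply h.collinear_of_forall x0 0
      intro u
      exact ⟨0, by rw [zero_smul]; exact hex x0 u⟩

/-- general consistency of weight ratios -/
lemma Hyp.R_chain (hrich : ¬ Collinear ℝ (Set.range h.b)) {x y z : X}
    (hxy : x ≠ y) (hxz : x ≠ z) (hyz : y ≠ z)
    (hbxy : h.b x ≠ h.b y) (hbxz : h.b x ≠ h.b z) (hbyz : h.b y ≠ h.b z) (t u v : ℕ) :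
    h.R x y t u * h.R y z u v = h.R x z t v := by
  by_cases hi : Indep (h.b y - h.b x) (h.b z - h.b x)
  · exact h.R_chain_indep hxy hxz hyz hi t u v
  · have hd : h.b y - h.b x ≠ 0 := sub_ne_zero.2 hbxy.symm
    obtain ⟨r, hr⟩ : ∃ r : ℝ, h.b z - h.b x = r • (h.b y - h.b x) :=
      not_indep (fun hj => hi hj.symm) hd
    obtain ⟨g, hg⟩ := h.exists_offline hrich x _ hd
    have hbgx : h.b g ≠ h.b x := by
      intro he
      exact hg.ne_zero_right (by rw [he]; abel)
    have hbgy : h.b g ≠ h.b y := by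
      intro he
      have := hg 1 (-1) (by rw [he]; module)
      simpa using this.1
    have hrne0 : r ≠ 0 := by
      intro hr0
      rw [hr0, zero_smul] at hr
      exact hbxz (sub_eq_zero.1 hr).symm
    have hrne1 : r ≠ 1 := by
      intro hr1
      rw [hr1, one_smul] at hr
      apply hbyz
      have : h.b z = h.b y := by linear_combination (norm := module) hr
      exact this.symm
    have hbgz : h.b g ≠ h.b z := by
      intro he
      have h0 : h.b g - h.b x = r • (h.b y - h.b x) := by rw [he]; exact hr
      have := hg r (-1) (by rw [h0]; module)
      simpa using this.2
    have hgx : g ≠ x := fun he => hbgx (by rw [he])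
    have hgy : g ≠ y := fun he => hbgy (by rw [he])
    have hgz : g ≠ z := fun he => hbgz (by rw [he])
    have I1 : Indep (h.b g - h.b x) (h.b y - h.b x) := hg.symm
    have I2 : Indep (h.b g - h.b x) (h.b z - h.b x) := by
      intro c e hce
      rw [hr] at hce
      have := hg.symm c (e * r) (by linear_combination (norm := module) hce)
      exact ⟨this.1, by
        rcases mul_eq_zero.1 this.2 with he0 | hrr
        · exact he0
        · exact absurd hrr hrne0⟩
    have I3 : Indep (h.b g - h.b y) (h.b z - h.b y) := by
      intro c e hce
      have hgy' : h.b g - h.b y = (h.b g - h.b x) - (h.b y - h.b x) := by abel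
      have hzy : h.b z - h.b y = (r - 1) • (h.b y - h.b x) := by
        rw [sub_smul, one_smul, ← hr]; abel
      rw [hgy', hzy] at hce
      have := hg (e * (r - 1) - c) c (by linear_combination (norm := module) hce)
      refine ⟨this.2, ?_⟩
      have h1 := this.1
      have h2 := this.2
      rw [h2] at h1
      simp only [sub_zero] at h1
      rcases mul_eq_zero.1 h1 with he0 | hrr
      · exact he0
      · exact absurd (by linarith [sub_eq_zero.1 hrr] : r = 1) hrne1
    have C1 := h.R_chain_indep (x := x) (y := g) (z := y) hgx.symm hxy hgy I1 t 0 u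
    have C2 := h.R_chain_indep (x := x) (y := g) (z := z) hgx.symm hxz hgz I2 t 0 v
    have C3 := h.R_chain_indep (x := y) (y := g) (z := z) hgy.symm hyz hgz I3 u 0 v
    have hrec := h.R_mul_R hgy hbgy 0 u
    rw [← C1, ← C3, ← C2]
    linear_combination (h.R x g t 0 * h.R g z 0 v) * hrec

/-- A reference triple for a rich belief process. -/
structure Hyp.Refs (h : Hyp X n) where
  p0 : X
  p1 : X
  p2 : X
  hI : Indep (h.b p1 - h.b p0) (h.b p2 - h.b p0)
  hrich : ¬ Collinear ℝ (Set.range h.b)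

namespace Hyp.Refs

variable {h : Hyp X n} (ρ : h.Refs)

lemma bne01 : h.b ρ.p0 ≠ h.b ρ.p1 :=
  fun he => ρ.hI.ne_zero_left (by rw [he]; abel)

lemma bne02 : h.b ρ.p0 ≠ h.b ρ.p2 :=
  fun he => ρ.hI.ne_zero_right (by rw [he]; abel)

lemma bne12 : h.b ρ.p1 ≠ h.b ρ.p2 := by
  intro he
  have := ρ.hI 1 (-1) (by rw [he]; module)
  simpa using this.1

def isRef (r : X) : Prop := r = ρ.p0 ∨ r = ρ.p1 ∨ r = ρ.p2

lemma bne_refs {r r' : X} (hr : ρ.isRef r) (hr' : ρ.isRef r') (hne : r ≠ r') :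
    h.b r ≠ h.b r' := by
  rcases hr with rfl | rfl | rfl <;> rcases hr' with rfl | rfl | rfl
  · exact absurd rfl hne
  · exact ρ.bne01
  · exact ρ.bne02
  · exact ρ.bne01.symm
  · exact absurd rfl hne
  · exact ρ.bne12
  · exact ρ.bne02.symm
  · exact ρ.bne12.symm
  · exact absurd rfl hne

/-- `r` is a valid reference for `x`. -/
def Good (x r : X) : Prop := ρ.isRef r ∧ r ≠ x ∧ h.b r ≠ h.b x

open scoped Classical in
/-- canonical reference for `x` -/
noncomputable def ref (x : X) : X := if h.b x = h.b ρ.p0 ∨ x = ρ.p0 then ρ.p1 else ρ.p0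

lemma ref_good (x : X) : ρ.Good x (ρ.ref x) := by
  rw [ref]
  split
  · rename_i hc
    have hbx : h.b x = h.b ρ.p0 := by
      rcases hc with hc | rfl
      · exact hc
      · rfl
    refine ⟨Or.inr (Or.inl rfl), ?_, ?_⟩
    · intro he
      exact ρ.bne01 (by rw [he, hbx])
    · rw [hbx]
      exact ρ.bne01.symm
  · rename_i hc
    push_neg at hc
    exact ⟨Or.inl rfl, Ne.symm hc.2, Ne.symm hc.1⟩

open scoped Classical in
noncomputable def base (r : X) : ℝ := if r = ρ.p0 then 1 else h.R r ρ.p0 0 0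

lemma base_pos {r : X} (hr : ρ.isRef r) : 0 < ρ.base r := by
  rw [base]
  split
  · norm_num
  · rename_i hne
    exact h.R_pos hne 0 0

lemma base_ratio {r r' : X} (hr : ρ.isRef r) (hr' : ρ.isRef r') (hne : r ≠ r') :
    ρ.base r = h.R r r' 0 0 * ρ.base r' := by
  have hbrr' := ρ.bne_refs hr hr' hne
  by_cases h0' : r' = ρ.p0
  · subst h0'
    rw [base, base, if_neg hne, if_pos rfl, mul_one]
  · by_cases h0 : r = ρ.p0
    · subst h0
      rw [base, base, if_pos rfl, if_neg h0']
      exact (h.R_mul_R (Ne.symm hne).symm hbrr' 0 0).symm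
    · rw [base, base, if_neg h0, if_neg h0']
      rw [← h.R_chain ρ.hrich hne h0 h0' hbrr' (ρ.bne_refs hr (Or.inl rfl) h0)
        (ρ.bne_refs hr' (Or.inl rfl) h0') 0 0 0]

/-- the weight of signal `x` at time `t` -/
noncomputable def W (x : X) (t : ℕ) : ℝ := h.R x (ρ.ref x) t 0 * ρ.base (ρ.ref x)

lemma W_pos (x : X) (t : ℕ) : 0 < ρ.W x t := by
  obtain ⟨hr, hne, _⟩ := ρ.ref_good x
  exact mul_pos (h.R_pos (Ne.symm hne) t 0) (ρ.base_pos hr)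

lemma W_eq (x : X) (t : ℕ) {r : X} (hg : ρ.Good x r) :
    ρ.W x t = h.R x r t 0 * ρ.base r := by
  obtain ⟨hr, hne, hbne⟩ := hg
  obtain ⟨hr0, hne0, hbne0⟩ := ρ.ref_good x
  by_cases he : r = ρ.ref x
  · rw [W, ← he]
  · have hner : ρ.ref x ≠ r := fun hh => he hh.symm
    have hbr : h.b (ρ.ref x) ≠ h.b r := ρ.bne_refs hr0 hr hner
    rw [W, ρ.base_ratio hr0 hr hner, ← mul_assoc]
    rw [h.R_chain ρ.hrich (Ne.symm hne0) (Ne.symm hne) hner (Ne.symm hbne0) (Ne.symm hbne) hbr t 0 0]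

lemma exists_common (x y : X) : ∃ r, ρ.Good x r ∧ ρ.Good y r := by
  by_cases h0 : h.b ρ.p0 ≠ h.b x ∧ h.b ρ.p0 ≠ h.b y
  · exact ⟨ρ.p0, ⟨Or.inl rfl, fun he => h0.1 (he ▸ rfl), h0.1⟩,
      ⟨Or.inl rfl, fun he => h0.2 (he ▸ rfl), h0.2⟩⟩
  · by_cases h1 : h.b ρ.p1 ≠ h.b x ∧ h.b ρ.p1 ≠ h.b y
    · exact ⟨ρ.p1, ⟨Or.inr (Or.inl rfl), fun he => h1.1 (he ▸ rfl), h1.1⟩,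
        ⟨Or.inr (Or.inl rfl), fun he => h1.2 (he ▸ rfl), h1.2⟩⟩
    · push_neg at h0 h1
      have h2x : h.b ρ.p2 ≠ h.b x := by
        intro hex
        by_cases hc : h.b ρ.p0 = h.b x
        · exact ρ.bne02 (hc.trans hex.symm)
        · have hc0 : h.b ρ.p0 = h.b y := by
            by_contra hcc
            exact hcc (h0 hc)
          by_cases hd : h.b ρ.p1 = h.b x
          · exact ρ.bne12 (hd.trans hex.symm)
          · have hd0 : h.b ρ.p1 = h.b y := by
              by_contra hdd
              exact hdd (h1 hd)
            exact ρ.bne01 (hc0.trans hd0.symm)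
      have h2y : h.b ρ.p2 ≠ h.b y := by
        intro hey
        by_cases hc : h.b ρ.p0 = h.b y
        · exact ρ.bne02 (hc.trans hey.symm)
        · have hc0 : h.b ρ.p0 = h.b x := by
            by_contra hcc
            exact hc (h0 hcc)
          by_cases hd : h.b ρ.p1 = h.b y
          · exact ρ.bne12 (hd.trans hey.symm)
          · have hd0 : h.b ρ.p1 = h.b x := by
              by_contra hdd
              exact hd (h1 hdd)
            exact ρ.bne01 (hc0.trans hd0.symm)
      exact ⟨ρ.p2, ⟨Or.inr (Or.inr rfl), fun he => h2x (he ▸ rfl), h2x⟩,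
        ⟨Or.inr (Or.inr rfl), fun he => h2y (he ▸ rfl), h2y⟩⟩

lemma W_key {x y : X} (hxy : x ≠ y) (hb : h.b x ≠ h.b y) (t u : ℕ) :
    ρ.W x t = h.R x y t u * ρ.W y u := by
  obtain ⟨r, hgx, hgy⟩ := ρ.exists_common x y
  rw [ρ.W_eq x t hgx, ρ.W_eq y u hgy]
  have hxr := hgx.2.1
  have hyr := hgy.2.1
  have hbxr := hgx.2.2
  have hbyr := hgy.2.2
  rw [← h.R_chain ρ.hrich hxy (Ne.symm hxr) (Ne.symm hyr) hb (Ne.symm hbxr) (Ne.symm hbyr) t u 0]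
  ring

/-- the common time-discount ratio -/
noncomputable def Q : ℝ := ρ.W ρ.p0 1 / ρ.W ρ.p0 0

lemma Q_pos : 0 < ρ.Q := div_pos (ρ.W_pos _ _) (ρ.W_pos _ _)

lemma W_shift_ref (x : X) (t : ℕ) {r : X} (hg : ρ.Good x r) :
    ρ.W x (t + 1) * ρ.W r 0 = ρ.W x t * ρ.W r 1 := by
  have hxr := Ne.symm hg.2.1
  have hbxr := Ne.symm hg.2.2
  have e1 : ρ.W x (t+1) = h.R x r (t+1) 1 * ρ.W r 1 := ρ.W_key hxr hbxr (t+1) 1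
  have e2 : h.R x r (t+1) 1 = h.R x r t 0 := h.R_shift hxr hbxr t 0 1
  have e3 : ρ.W x t = h.R x r t 0 * ρ.W r 0 := ρ.W_key hxr hbxr t 0
  rw [e1, e2, e3]
  ring

lemma ratio_ref {r : X} (hr : ρ.isRef r) : ρ.W r 1 = ρ.Q * ρ.W r 0 := by
  have hp0 : ρ.W ρ.p0 1 = ρ.Q * ρ.W ρ.p0 0 := by
    rw [Q, div_mul_cancel₀]
    exact ne_of_gt (ρ.W_pos _ _)
  rcases hr with rfl | rfl | rfl
  · exact hp0
  · have hg : ρ.Good ρ.p0 ρ.p1 :=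
      ⟨Or.inr (Or.inl rfl), fun he => ρ.bne01 (he ▸ rfl), ρ.bne01.symm⟩
    have h2 : ρ.W ρ.p0 1 * ρ.W ρ.p1 0 = ρ.W ρ.p0 0 * ρ.W ρ.p1 1 := by
      simpa using ρ.W_shift_ref ρ.p0 0 hg
    have hW := ne_of_gt (ρ.W_pos ρ.p0 0)
    rw [Q]
    rw [div_mul_eq_mul_div, eq_div_iff hW]
    linear_combination -h2
  · have hg : ρ.Good ρ.p0 ρ.p2 :=
      ⟨Or.inr (Or.inr rfl), fun he => ρ.bne02 (he ▸ rfl), ρ.bne02.symm⟩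
    have h2 : ρ.W ρ.p0 1 * ρ.W ρ.p2 0 = ρ.W ρ.p0 0 * ρ.W ρ.p2 1 := by
      simpa using ρ.W_shift_ref ρ.p0 0 hg
    have hW := ne_of_gt (ρ.W_pos ρ.p0 0)
    rw [Q]
    rw [div_mul_eq_mul_div, eq_div_iff hW]
    linear_combination -h2

lemma W_succ (x : X) (t : ℕ) : ρ.W x (t + 1) = ρ.Q * ρ.W x t := by
  have hg := ρ.ref_good x
  have h1 := ρ.W_shift_ref x t hg
  rw [ρ.ratio_ref hg.1] at h1
  have hW := ne_of_gt (ρ.W_pos (ρ.ref x) 0)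
  apply mul_right_cancel₀ hW
  rw [h1]; ring

lemma W_pow (x : X) (t : ℕ) : ρ.W x t = ρ.Q ^ t * ρ.W x 0 := by
  induction t with
  | zero => simp
  | succ t ih => rw [ρ.W_succ x t, ih, pow_succ]; ring

end Hyp.Refs

lemma Hyp.line (h : Hyp X n) : ∀ (k : ℕ) (A : Finset X) (T : X → ℕ) (P dv : Fin n → ℝ),
    A.card = k → A.Nonempty → (∀ x ∈ A, ∃ r : ℝ, h.b x = P + r • dv) →
    ∃ r : ℝ, h.f A T = P + r • dv := by
  intro k
  induction k using Nat.strong_induction_on with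
  | _ k IHl =>
  intro A T P dv hcard hne hOn
  obtain ⟨a, ha⟩ := hne
  by_cases hA1 : A = {a}
  · subst hA1
    obtain ⟨r, hr⟩ := hOn a (by simp)
    exact ⟨r, by rw [h.single_eq, hr]⟩
  · have hen : (A.erase a).Nonempty := by
      rw [← Finset.card_pos]
      have hsub : A.card ≠ 1 := by
        intro h1
        obtain ⟨a', ha'⟩ := Finset.card_eq_one.1 h1
        apply hA1
        rw [ha'] at ha ⊢
        simp at ha
        rw [ha]
      have : 1 ≤ A.card := Finset.card_pos.2 ⟨a, ha⟩
      have h2 : 2 ≤ A.card := by omega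
      rw [Finset.card_erase_of_mem ha]
      omega
    have hAeq : {a} ∪ A.erase a = A := by
      rw [← Finset.insert_eq, Finset.insert_erase ha]
    obtain ⟨l, hl, he⟩ := h.hswa {a} (A.erase a) T (Finset.singleton_nonempty a) hen
      (by simp [Finset.disjoint_singleton_left])
    rw [hAeq, h.single_eq] at he
    obtain ⟨r1, hr1⟩ := hOn a ha
    have hcp : 0 < A.card := Finset.card_pos.2 ⟨a, ha⟩
    obtain ⟨r2, hr2⟩ := IHl (A.erase a).card
      (by rw [Finset.card_erase_of_mem ha]; omega) (A.erase a) T P dv rfl hen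
      (fun x hx => hOn x (Finset.mem_of_mem_erase hx))
    refine ⟨l * r1 + (1 - l) * r2, ?_⟩
    rw [he, hr1, hr2]
    module

theorem Hyp.Refs.master {h : Hyp X n} (ρ : h.Refs) :
    ∀ (k : ℕ) (A : Finset X) (T : X → ℕ), A.card = k → A.Nonempty →
    h.f A T = (∑ x ∈ A, ρ.W x (T x))⁻¹ • ∑ x ∈ A, ρ.W x (T x) • h.b x := by
  intro k
  induction k using Nat.strong_induction_on with
  | _ k IH =>
  intro A T hcard hne
  have hSpos : 0 < ∑ x ∈ A, ρ.W x (T x) :=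
    Finset.sum_pos (fun x _ => ρ.W_pos x (T x)) hne
  rcases Nat.lt_or_ge k 3 with hk3 | hk3
  · interval_cases k
    · exact absurd (Finset.card_eq_zero.1 hcard) (Finset.nonempty_iff_ne_empty.1 hne)
    · obtain ⟨a, rfl⟩ := Finset.card_eq_one.1 hcard
      rw [h.single_eq, Finset.sum_singleton, Finset.sum_singleton, smul_smul,
        inv_mul_cancel₀ (ne_of_gt (ρ.W_pos a (T a))), one_smul]
    · obtain ⟨x, y, hxy, rfl⟩ := Finset.card_eq_two.1 hcard
      have hsum1 : ∑ z ∈ ({x, y} : Finset X), ρ.W z (T z) = ρ.W x (T x) + ρ.W y (T y) :=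
        Finset.sum_pair hxy
      have hsum2 : ∑ z ∈ ({x, y} : Finset X), ρ.W z (T z) • h.b z
          = ρ.W x (T x) • h.b x + ρ.W y (T y) • h.b y := Finset.sum_pair hxy
      rw [hsum1] at hSpos
      rw [hsum1, hsum2, h.pair_formula hxy]
      have hSne : ρ.W x (T x) + ρ.W y (T y) ≠ 0 := ne_of_gt hSpos
      by_cases hb : h.b x = h.b y
      · rw [hb]
        match_scalars
        field_simp
        ring
      · have hk := ρ.W_key hxy hb (T x) (T y)
        rw [Hyp.R] at hk
        have h1m : 1 - h.lam x y (T x) (T y) ≠ 0 :=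
          ne_of_gt (by linarith [h.lam_lt_one hxy (T x) (T y)])
        rw [div_mul_eq_mul_div, eq_div_iff h1m] at hk
        have e0 : (ρ.W x (T x) + ρ.W y (T y))⁻¹ • (ρ.W x (T x) • h.b x + ρ.W y (T y) • h.b y)
            = ((ρ.W x (T x) + ρ.W y (T y))⁻¹ * ρ.W x (T x)) • h.b x
              + ((ρ.W x (T x) + ρ.W y (T y))⁻¹ * ρ.W y (T y)) • h.b y := by module
        have e1 : (ρ.W x (T x) + ρ.W y (T y))⁻¹ * ρ.W x (T x) = h.lam x y (T x) (T y) := by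
          rw [inv_mul_eq_div, div_eq_iff hSne]
          linear_combination hk
        have e2 : (ρ.W x (T x) + ρ.W y (T y))⁻¹ * ρ.W y (T y) = 1 - h.lam x y (T x) (T y) := by
          rw [inv_mul_eq_div, div_eq_iff hSne]
          linear_combination -hk
        rw [e0, e1, e2]
  · -- k ≥ 3
    have herase_card : ∀ a ∈ A, (A.erase a).card = k - 1 := fun a ha => by
      rw [Finset.card_erase_of_mem ha, hcard]
    have herase_ne : ∀ a ∈ A, (A.erase a).Nonempty := fun a ha => by
      rw [← Finset.card_pos, herase_card a ha]; omega
    have hS'pos : ∀ a ∈ A, 0 < ∑ x ∈ A.erase a, ρ.W x (T x) := fun a ha =>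
      Finset.sum_pos (fun x _ => ρ.W_pos x (T x)) (herase_ne a ha)
    have hfe : ∀ a ∈ A, h.f (A.erase a) T
        = (∑ x ∈ A.erase a, ρ.W x (T x))⁻¹ • ∑ x ∈ A.erase a, ρ.W x (T x) • h.b x :=
      fun a ha => IH (k-1) (by omega) _ T (herase_card a ha) (herase_ne a ha)
    have hsplitW : ∀ a ∈ A, ρ.W a (T a) + ∑ x ∈ A.erase a, ρ.W x (T x) = ∑ x ∈ A, ρ.W x (T x) :=
      fun a ha => Finset.add_sum_erase A (fun x => ρ.W x (T x)) ha
    have hsplitB : ∀ a ∈ A, ρ.W a (T a) • h.b a + ∑ x ∈ A.erase a, ρ.W x (T x) • h.b x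
        = ∑ x ∈ A, ρ.W x (T x) • h.b x := fun a ha => Finset.add_sum_erase A (fun x => ρ.W x (T x) • h.b x) ha
    set S := ∑ x ∈ A, ρ.W x (T x) with hSdef
    set m := S⁻¹ • ∑ x ∈ A, ρ.W x (T x) • h.b x with hmdef
    have hSne : S ≠ 0 := ne_of_gt hSpos
    have hS'sub : ∀ a ∈ A, ∑ x ∈ A.erase a, ρ.W x (T x) = S - ρ.W a (T a) := by
      intro a ha'
      have := hsplitW a ha'
      linarith
    have hSWa : ∀ a ∈ A, S - ρ.W a (T a) ≠ 0 := by
      intro a ha'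
      rw [← hS'sub a ha']
      exact ne_of_gt (hS'pos a ha')
    have hmS : S • m = ∑ x ∈ A, ρ.W x (T x) • h.b x := by
      rw [hmdef, smul_smul, mul_inv_cancel₀ hSne, one_smul]
    clear_value S m
    have hma : ∀ a ∈ A, m = (ρ.W a (T a) / S) • h.b a
        + ((∑ x ∈ A.erase a, ρ.W x (T x)) / S) •
          ((∑ x ∈ A.erase a, ρ.W x (T x))⁻¹ • ∑ x ∈ A.erase a, ρ.W x (T x) • h.b x) := by
      intro a ha
      rw [hmdef, ← hsplitB a ha, hS'sub a ha]
      match_scalars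
      · field_simp
      · field_simp [hSWa a ha, hSne]
    have hsplitf : ∀ a ∈ A, ∃ l ∈ Set.Ioo (0:ℝ) 1, h.f A T = l • h.b a + (1 - l) •
        ((∑ x ∈ A.erase a, ρ.W x (T x))⁻¹ • ∑ x ∈ A.erase a, ρ.W x (T x) • h.b x) := by
      intro a ha
      obtain ⟨l, hl, he⟩ := h.hswa {a} (A.erase a) T (Finset.singleton_nonempty a)
        (herase_ne a ha) (by simp [Finset.disjoint_singleton_left])
      rw [← Finset.insert_eq, Finset.insert_erase ha, h.single_eq, hfe a ha] at he
      exact ⟨l, hl, he⟩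
    have hcoef : ∀ a ∈ A, ρ.W a (T a) / S + (∑ x ∈ A.erase a, ρ.W x (T x)) / S = 1 := by
      intro a ha
      rw [← add_div, hsplitW a ha, div_self hSne]
    by_cases hcase : ∃ a ∈ A, h.b a
        = (∑ x ∈ A.erase a, ρ.W x (T x))⁻¹ • ∑ x ∈ A.erase a, ρ.W x (T x) • h.b x
    · -- case (i): some singleton belief coincides with the rest's average
      obtain ⟨a, ha, hia⟩ := hcase
      obtain ⟨l, hl, he⟩ := hsplitf a ha
      rw [← hia] at he
      have hfa : h.f A T = h.b a := by rw [he]; module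
      have hmb : m = h.b a := by
        rw [hma a ha, ← hia, ← add_smul, hcoef a ha, one_smul]
      rw [hfa, hmb]
    · push_neg at hcase
      -- b a - m in terms of b a - mval a
      have hbm : ∀ a ∈ A, h.b a - m = ((∑ x ∈ A.erase a, ρ.W x (T x)) / S) •
          (h.b a - (∑ x ∈ A.erase a, ρ.W x (T x))⁻¹ • ∑ x ∈ A.erase a, ρ.W x (T x) • h.b x) := by
        intro a ha
        have h1 := hma a ha
        have h2 := hcoef a ha
        linear_combination (norm := module) -h1 - h2 • h.b a
      by_cases hind : ∃ a1 ∈ A, ∃ a2 ∈ A, Indep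
          (h.b a1 - (∑ x ∈ A.erase a1, ρ.W x (T x))⁻¹ • ∑ x ∈ A.erase a1, ρ.W x (T x) • h.b x)
          (h.b a2 - (∑ x ∈ A.erase a2, ρ.W x (T x))⁻¹ • ∑ x ∈ A.erase a2, ρ.W x (T x) • h.b x)
      · -- case (iia)
        obtain ⟨a1, ha1, a2, ha2, hI12⟩ := hind
        obtain ⟨l1, hl1, he1⟩ := hsplitf a1 ha1
        obtain ⟨l2, hl2, he2⟩ := hsplitf a2 ha2
        have hd1 : h.f A T - m = (l1 - ρ.W a1 (T a1)/S) • (h.b a1 -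
            (∑ x ∈ A.erase a1, ρ.W x (T x))⁻¹ • ∑ x ∈ A.erase a1, ρ.W x (T x) • h.b x) := by
          rw [he1, hma a1 ha1]
          linear_combination (norm := module)
            -(hcoef a1 ha1) • ((∑ x ∈ A.erase a1, ρ.W x (T x))⁻¹ • ∑ x ∈ A.erase a1, ρ.W x (T x) • h.b x)
        have hd2 : h.f A T - m = (l2 - ρ.W a2 (T a2)/S) • (h.b a2 -
            (∑ x ∈ A.erase a2, ρ.W x (T x))⁻¹ • ∑ x ∈ A.erase a2, ρ.W x (T x) • h.b x) := by
          rw [he2, hma a2 ha2]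
          linear_combination (norm := module)
            -(hcoef a2 ha2) • ((∑ x ∈ A.erase a2, ρ.W x (T x))⁻¹ • ∑ x ∈ A.erase a2, ρ.W x (T x) • h.b x)
        have h0 := sub_eq_zero.2 (hd1.symm.trans hd2)
        have hz := hI12 (l1 - ρ.W a1 (T a1)/S) (-(l2 - ρ.W a2 (T a2)/S))
          (by linear_combination (norm := module) h0)
        have hfm : h.f A T - m = 0 := by rw [hd1, hz.1, zero_smul]
        have := sub_eq_zero.1 hfm
        exact this
      · -- case (iib): all deviations are parallel
        push_neg at hind
        obtain ⟨a0, ha0⟩ := hne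
        set d := h.b a0 - (∑ x ∈ A.erase a0, ρ.W x (T x))⁻¹ • ∑ x ∈ A.erase a0, ρ.W x (T x) • h.b x
          with hddef
        have hd0 : d ≠ 0 := sub_ne_zero.2 (hcase a0 ha0)
        clear_value d
        have hδex : ∀ a : X, ∃ δa : ℝ, a ∈ A → h.b a - m = δa • d := by
          intro a
          by_cases haA : a ∈ A
          · have hni := hind a haA a0 ha0
            rw [← hddef] at hni
            obtain ⟨r, hr⟩ := not_indep hni hd0
            refine ⟨(∑ x ∈ A.erase a, ρ.W x (T x))/S * r, fun _ => ?_⟩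
            rw [hbm a haA, hr, smul_smul]
          · exact ⟨0, fun hmem => absurd hmem haA⟩
        choose δ hδ using hδex
        have hballs : ∀ a ∈ A, h.b a = m + δ a • d := by
          intro a ha'
          have h9 := hδ a ha'
          linear_combination (norm := module) h9
        have hsum0 : (∑ a ∈ A, ρ.W a (T a) * δ a) = 0 := by
          have h1 : (∑ a ∈ A, ρ.W a (T a) * δ a) • d = 0 := by
            have h2 : ∑ a ∈ A, ρ.W a (T a) • (h.b a - m) = 0 := by
              simp only [smul_sub]
              rw [Finset.sum_sub_distrib, ← Finset.sum_smul, ← hSdef, hmS, sub_self]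
            calc (∑ a ∈ A, ρ.W a (T a) * δ a) • d
                = ∑ a ∈ A, (ρ.W a (T a) * δ a) • d := Finset.sum_smul
              _ = ∑ a ∈ A, ρ.W a (T a) • (h.b a - m) := by
                  refine Finset.sum_congr rfl fun a ha' => ?_
                  rw [mul_smul, ← hδ a ha']
              _ = 0 := h2
          rcases smul_eq_zero.1 h1 with h3 | h3
          · exact h3
          · exact absurd h3 hd0
        have hmval : ∀ a ∈ A, (∑ x ∈ A.erase a, ρ.W x (T x))⁻¹ • ∑ x ∈ A.erase a, ρ.W x (T x) • h.b x
            = m + ((-(ρ.W a (T a) * δ a))/(∑ x ∈ A.erase a, ρ.W x (T x))) • d := by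
          intro a ha'
          have hS'ne := ne_of_gt (hS'pos a ha')
          apply smul_right_injective (Fin n → ℝ) hS'ne
          show (∑ x ∈ A.erase a, ρ.W x (T x)) • _ = (∑ x ∈ A.erase a, ρ.W x (T x)) • _
          rw [smul_inv_smul₀ hS'ne]
          have hv : ∑ x ∈ A.erase a, ρ.W x (T x) • h.b x = S • m - ρ.W a (T a) • h.b a := by
            rw [hmS, ← hsplitB a ha']
            abel
          rw [hv, hballs a ha', hS'sub a ha']
          match_scalars
          · field_simp
          · field_simp [hSWa a ha']
        have hex12 : ∃ a1 ∈ A, ∃ a2 ∈ A,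
            (ρ.W a1 (T a1) * δ a1) * (∑ x ∈ A.erase a2, ρ.W x (T x))
            ≠ (ρ.W a2 (T a2) * δ a2) * (∑ x ∈ A.erase a1, ρ.W x (T x)) := by
          by_contra hall
          push_neg at hall
          -- all cross products equal; sum up against a0
          have hsum1 : ∑ a ∈ A, ((ρ.W a (T a) * δ a) * (∑ x ∈ A.erase a0, ρ.W x (T x)))
              = ∑ a ∈ A, (ρ.W a0 (T a0) * δ a0) * (S - ρ.W a (T a)) :=
            Finset.sum_congr rfl (fun a ha' => by rw [hall a ha' a0 ha0, hS'sub a ha'])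
          rw [← Finset.sum_mul, hsum0, zero_mul] at hsum1
          rw [← Finset.mul_sum] at hsum1
          have hsumS : ∑ a ∈ A, (S - ρ.W a (T a)) = (k:ℝ) * S - S := by
            rw [Finset.sum_sub_distrib, Finset.sum_const, ← hSdef, hcard, nsmul_eq_mul]
          rw [hsumS] at hsum1
          have hkS : (0:ℝ) < (k:ℝ) * S - S := by
            have h3 : (3:ℝ) ≤ (k:ℝ) := by exact_mod_cast hk3
            nlinarith
          have hWδ0 : ρ.W a0 (T a0) * δ a0 = 0 := by
            rcases mul_eq_zero.1 hsum1.symm with h4 | h4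
            · exact h4
            · exact absurd h4 (ne_of_gt hkS)
          have hδ0 : δ a0 = 0 := by
            rcases mul_eq_zero.1 hWδ0 with h4 | h4
            · exact absurd h4 (ne_of_gt (ρ.W_pos a0 (T a0)))
            · exact h4
          apply hcase a0 ha0
          rw [hmval a0 ha0, hballs a0 ha0, hδ0]
          simp
        obtain ⟨a1, ha1, a2, ha2, hs12⟩ := hex12
        -- offline signal g
        obtain ⟨g, hg⟩ := h.exists_offline ρ.hrich a0 d hd0
        have hge : Indep d (h.b g - m) := by
          have h2 := hg.shear (δ a0)
          have h3 : h.b g - h.b a0 + δ a0 • d = h.b g - m := by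
            have h4 := hδ a0 ha0
            linear_combination (norm := module) -h4
          rwa [h3] at h2
        have hgA : g ∉ A := by
          intro hgmem
          have h2 := hδ g hgmem
          have h3 := hge (δ g) (-1) (by linear_combination (norm := module) -h2)
          simpa using h3.2
        obtain ⟨s0, hs0⟩ := h.line k A T m d hcard ⟨a0, ha0⟩ (fun x hx => ⟨δ x, hballs x hx⟩)
        obtain ⟨l, hl, hel⟩ := h.hswa A {g} T ⟨a0, ha0⟩ (Finset.singleton_nonempty g)
          (by simp [Finset.disjoint_singleton_right, hgA])
        rw [h.single_eq, hs0] at hel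
        -- the key scalar relation, uniformly in a
        have hKI : ∀ a ∈ A, l * s0 * ρ.W g (T g) * (∑ x ∈ A.erase a, ρ.W x (T x))
            = (-(ρ.W a (T a) * δ a)) * (ρ.W g (T g) - (1 - l) * (S + ρ.W g (T g))) := by
          intro a ha'
          have hagne : a ≠ g := fun he => hgA (he ▸ ha')
          have hun : A.erase a ∪ {a, g} = A ∪ {g} := by
            ext z
            simp only [Finset.mem_union, Finset.mem_erase, Finset.mem_insert,
              Finset.mem_singleton]
            constructor
            · rintro (⟨hz1, hz2⟩ | rfl | rfl)
              · exact Or.inl hz2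
              · exact Or.inl ha'
              · exact Or.inr rfl
            · rintro (hz | rfl)
              · by_cases hza : z = a
                · exact Or.inr (Or.inl hza)
                · exact Or.inl ⟨hza, hz⟩
              · exact Or.inr (Or.inr rfl)
          have hdis : Disjoint (A.erase a) {a, g} := by
            rw [Finset.disjoint_right]
            intro z hz
            simp only [Finset.mem_insert, Finset.mem_singleton] at hz
            rcases hz with rfl | rfl
            · exact Finset.notMem_erase z A
            · exact fun hz2 => hgA (Finset.mem_of_mem_erase hz2)
          obtain ⟨μ, hμ, heμ⟩ := h.hswa (A.erase a) {a, g} T (herase_ne a ha')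
            (Finset.insert_nonempty a {g}) hdis
          rw [hun, hfe a ha'] at heμ
          have hpair : h.f {a, g} T = (ρ.W a (T a) + ρ.W g (T g))⁻¹ •
              (ρ.W a (T a) • h.b a + ρ.W g (T g) • h.b g) := by
            have hcp : ({a, g} : Finset X).card = 2 := Finset.card_pair hagne
            have h9 := IH 2 (by omega) {a, g} T hcp (Finset.insert_nonempty a {g})
            rw [h9, Finset.sum_pair hagne, Finset.sum_pair hagne]
          rw [hpair] at heμ
          have hPpos : 0 < ρ.W a (T a) + ρ.W g (T g) :=
            add_pos (ρ.W_pos a (T a)) (ρ.W_pos g (T g))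
          have hPne := ne_of_gt hPpos
          have hS'ne := ne_of_gt (hS'pos a ha')
          have hpv : (ρ.W a (T a) + ρ.W g (T g))⁻¹ •
              (ρ.W a (T a) • h.b a + ρ.W g (T g) • h.b g)
              = m + ((ρ.W a (T a) * δ a)/(ρ.W a (T a) + ρ.W g (T g))) • d
                + (ρ.W g (T g)/(ρ.W a (T a) + ρ.W g (T g))) • (h.b g - m) := by
            rw [hballs a ha']
            match_scalars
            · field_simp
              ring
            · field_simp
            · field_simp
              try ring
          rw [hmval a ha', hpv] at heμ
          have hE := hel.symm.trans heμ
          have hsc : (l * s0 - (μ * ((-(ρ.W a (T a) * δ a))/(∑ x ∈ A.erase a, ρ.W x (T x)))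
                + (1-μ) * ((ρ.W a (T a) * δ a)/(ρ.W a (T a) + ρ.W g (T g))))) • d
              + ((1 - l) - (1-μ) * (ρ.W g (T g)/(ρ.W a (T a) + ρ.W g (T g)))) • (h.b g - m)
              = 0 := by
            linear_combination (norm := module) hE
          obtain ⟨hX, hY⟩ := hge _ _ hsc
          have hX' : l * s0 = μ * ((-(ρ.W a (T a) * δ a))/(∑ x ∈ A.erase a, ρ.W x (T x)))
              + (1-μ) * ((ρ.W a (T a) * δ a)/(ρ.W a (T a) + ρ.W g (T g))) := by linarith
          have hY' : 1 - l = (1-μ) * (ρ.W g (T g)/(ρ.W a (T a) + ρ.W g (T g))) := by linarith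
          have hYc : (1 - l) * (ρ.W a (T a) + ρ.W g (T g)) = (1-μ) * ρ.W g (T g) := by
            have h9 : (1-μ) * (ρ.W g (T g)/(ρ.W a (T a) + ρ.W g (T g)))
                = ((1-μ) * ρ.W g (T g))/(ρ.W a (T a) + ρ.W g (T g)) := by ring
            rw [h9, eq_div_iff hPne] at hY'
            exact hY'
          have hXc : l * s0 * ((∑ x ∈ A.erase a, ρ.W x (T x)) * (ρ.W a (T a) + ρ.W g (T g)))
              = μ * (-(ρ.W a (T a) * δ a)) * (ρ.W a (T a) + ρ.W g (T g))
                + (1-μ) * (ρ.W a (T a) * δ a) * (∑ x ∈ A.erase a, ρ.W x (T x)) := by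
            have h9 : μ * ((-(ρ.W a (T a) * δ a))/(∑ x ∈ A.erase a, ρ.W x (T x)))
                + (1-μ) * ((ρ.W a (T a) * δ a)/(ρ.W a (T a) + ρ.W g (T g)))
                = (μ * (-(ρ.W a (T a) * δ a)) * (ρ.W a (T a) + ρ.W g (T g))
                  + (1-μ) * (ρ.W a (T a) * δ a) * (∑ x ∈ A.erase a, ρ.W x (T x)))
                  / ((∑ x ∈ A.erase a, ρ.W x (T x)) * (ρ.W a (T a) + ρ.W g (T g))) := by
              rw [mul_div_assoc', mul_div_assoc', div_add_div _ _ hS'ne hPne]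
              congr 1
              ring
            rw [h9, eq_div_iff (mul_ne_zero hS'ne hPne)] at hX'
            exact hX'
          have hw := hsplitW a ha'
          have hGP : (l * s0 * ρ.W g (T g) * (∑ x ∈ A.erase a, ρ.W x (T x)))
              * (ρ.W a (T a) + ρ.W g (T g))
              = ((-(ρ.W a (T a) * δ a)) * (ρ.W g (T g) - (1 - l) * (S + ρ.W g (T g))))
              * (ρ.W a (T a) + ρ.W g (T g)) := by
            linear_combination ρ.W g (T g) * hXc
              + (ρ.W a (T a) * δ a) * (1-l) * (ρ.W a (T a) + ρ.W g (T g)) * hw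
              - (ρ.W a (T a) * δ a) * ((ρ.W a (T a) + ρ.W g (T g))
                + (∑ x ∈ A.erase a, ρ.W x (T x))) * hYc
          exact mul_right_cancel₀ hPne hGP
        have K1 := hKI a1 ha1
        have K2 := hKI a2 ha2
        have hcross : ((ρ.W a1 (T a1) * δ a1) * (∑ x ∈ A.erase a2, ρ.W x (T x))
            - (ρ.W a2 (T a2) * δ a2) * (∑ x ∈ A.erase a1, ρ.W x (T x)))
            * (ρ.W g (T g) - (1 - l) * (S + ρ.W g (T g))) = 0 := by
          linear_combination (∑ x ∈ A.erase a2, ρ.W x (T x)) * K1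
            - (∑ x ∈ A.erase a1, ρ.W x (T x)) * K2
        rcases mul_eq_zero.1 hcross with h4 | hB
        · exact absurd (sub_eq_zero.1 h4) hs12
        · have hz1 : l * s0 * ρ.W g (T g) * (∑ x ∈ A.erase a1, ρ.W x (T x)) = 0 := by
            rw [K1, hB, mul_zero]
          have hs00 : s0 = 0 := by
            by_contra hs0ne
            exact (mul_ne_zero (mul_ne_zero (mul_ne_zero (ne_of_gt hl.1) hs0ne)
              (ne_of_gt (ρ.W_pos g (T g)))) (ne_of_gt (hS'pos a1 ha1))) hz1
          rw [hs0, hs00, zero_smul, add_zero]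

lemma pair_weights_eq {v w : Fin n → ℝ} (hvw : v ≠ w) {a b a' b' : ℝ}
    (ha : 0 < a) (hb : 0 < b) (ha' : 0 < a') (hb' : 0 < b')
    (he : (a+b)⁻¹ • (a • v + b • w) = (a'+b')⁻¹ • (a' • v + b' • w)) : a * b' = a' * b := by
  have hab : a + b ≠ 0 := ne_of_gt (by linarith)
  have hab' : a' + b' ≠ 0 := ne_of_gt (by linarith)
  have h1 : (a+b)⁻¹ • (a • v + b • w) = (a/(a+b)) • v + (1 - a/(a+b)) • w := by
    match_scalars <;> field_simp <;> ring
  have h2 : (a'+b')⁻¹ • (a' • v + b' • w) = (a'/(a'+b')) • v + (1 - a'/(a'+b')) • w := by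
    match_scalars <;> field_simp <;> ring
  rw [h1, h2] at he
  have h3 := two_point_unique hvw he
  rw [div_eq_div_iff hab hab'] at h3
  linear_combination h3

end Stmt19Aux

open Stmt19Aux

theorem stmt19 {X : Type*} [DecidableEq X] {n : ℕ}
    (f : Finset X → (X → ℕ) → (Fin n → ℝ))
    (hrestrict : ∀ (A : Finset X) (T T' : X → ℕ), (∀ x ∈ A, T x = T' x) → f A T = f A T')
    (hsimplex : ∀ (A : Finset X) (T : X → ℕ), A.Nonempty →
      (∀ ω, 0 ≤ f A T ω) ∧ ∑ ω, f A T ω = 1)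
    (hstat : ∀ (A : Finset X) (T : X → ℕ) (c : ℕ), f A (fun x => T x + c) = f A T)
    (hswa : ∀ (A B : Finset X) (T : X → ℕ), A.Nonempty → B.Nonempty → Disjoint A B →
      ∃ l ∈ Set.Ioo (0:ℝ) 1, f (A ∪ B) T = l • f A T + (1 - l) • f B T)
    (hrich : ¬ Collinear ℝ (Set.range fun x : X => f {x} (fun _ => 1))) :
    ∃ q : ℝ, 0 < q ∧ ∃ w : X → ℝ, (∀ x, 0 < w x) ∧
      (∀ (A : Finset X) (T : X → ℕ), A.Nonempty →
        f A T = (∑ x ∈ A, q ^ T x * w x)⁻¹ •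
          ∑ x ∈ A, (q ^ T x * w x) • f {x} (fun _ => 1)) ∧
      (∀ (q' : ℝ) (w' : X → ℝ), 0 < q' → (∀ x, 0 < w' x) →
        (∀ (A : Finset X) (T : X → ℕ), A.Nonempty →
          f A T = (∑ x ∈ A, q' ^ T x * w' x)⁻¹ •
            ∑ x ∈ A, (q' ^ T x * w' x) • f {x} (fun _ => 1)) →
        q' = q ∧ ∃ α : ℝ, 0 < α ∧ ∀ x, w' x = α * w x) := by
  let h : Hyp X n := ⟨f, hrestrict, hstat, hswa⟩
  have hrich' : ¬ Collinear ℝ (Set.range h.b) := hrich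
  obtain ⟨p0, p1, p2, hI⟩ := h.exists_triple hrich'
  let ρ : h.Refs := ⟨p0, p1, p2, hI, hrich'⟩
  have hmaster : ∀ (A : Finset X) (T : X → ℕ), A.Nonempty →
      f A T = (∑ x ∈ A, ρ.W x (T x))⁻¹ • ∑ x ∈ A, ρ.W x (T x) • h.b x :=
    fun A T hA => ρ.master A.card A T rfl hA
  -- the relation forced on any alternative representation
  have hREL : ∀ (q' : ℝ) (w' : X → ℝ), 0 < q' → (∀ x, 0 < w' x) →
      (∀ (A : Finset X) (T : X → ℕ), A.Nonempty →
        f A T = (∑ x ∈ A, q' ^ T x * w' x)⁻¹ •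
          ∑ x ∈ A, (q' ^ T x * w' x) • f {x} (fun _ => 1)) →
      ∀ x y : X, x ≠ y → h.b x ≠ h.b y → ∀ t u : ℕ,
        (q' ^ t * w' x) * ρ.W y u = ρ.W x t * (q' ^ u * w' y) := by
    intro q' w' hq' hw' hrep' x y hxy hb t u
    have hTx : pT x t u x = t := by simp [pT]
    have hTy : pT x t u y = u := by simp [pT, Ne.symm hxy]
    have hf1 := hrep' {x, y} (pT x t u) (Finset.insert_nonempty x {y})
    rw [Finset.sum_pair hxy, Finset.sum_pair hxy, hTx, hTy] at hf1
    have hf2 := hmaster {x, y} (pT x t u) (Finset.insert_nonempty x {y})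
    rw [Finset.sum_pair hxy, Finset.sum_pair hxy, hTx, hTy] at hf2
    have he : (q' ^ t * w' x + q' ^ u * w' y)⁻¹ •
        ((q' ^ t * w' x) • h.b x + (q' ^ u * w' y) • h.b y)
        = (ρ.W x t + ρ.W y u)⁻¹ • (ρ.W x t • h.b x + ρ.W y u • h.b y) := hf1.symm.trans hf2
    exact pair_weights_eq hb (mul_pos (pow_pos hq' t) (hw' x)) (mul_pos (pow_pos hq' u) (hw' y)) (ρ.W_pos x t) (ρ.W_pos y u) he
  refine ⟨ρ.Q, ρ.Q_pos, fun x => ρ.W x 0, fun x => ρ.W_pos x 0, ?_, ?_⟩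
  · intro A T hA
    have hc : ∀ x ∈ A, ρ.Q ^ T x * ρ.W x 0 = ρ.W x (T x) :=
      fun x _ => (ρ.W_pow x (T x)).symm
    have hs1 : (∑ x ∈ A, ρ.Q ^ T x * ρ.W x 0) = ∑ x ∈ A, ρ.W x (T x) :=
      Finset.sum_congr rfl hc
    have hs2 : (∑ x ∈ A, (ρ.Q ^ T x * ρ.W x 0) • f {x} (fun _ => 1))
        = ∑ x ∈ A, ρ.W x (T x) • h.b x :=
      Finset.sum_congr rfl (fun x hx => by rw [hc x hx]; rfl)
    rw [hs1, hs2]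
    exact hmaster A T hA
  · intro q' w' hq' hw' hrep'
    have hR := hREL q' w' hq' hw' hrep'
    have hne01 : ρ.p0 ≠ ρ.p1 := fun he => ρ.bne01 (by rw [he])
    have hne02 : ρ.p0 ≠ ρ.p2 := fun he => ρ.bne02 (by rw [he])
    have hQ : ρ.W ρ.p0 1 = ρ.Q * ρ.W ρ.p0 0 := by
      simpa using ρ.W_succ ρ.p0 0
    have h1 := hR ρ.p0 ρ.p1 hne01 ρ.bne01 1 0
    have h2 := hR ρ.p0 ρ.p1 hne01 ρ.bne01 0 0
    simp only [pow_zero, pow_one, one_mul] at h1 h2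
    have hqQ : q' = ρ.Q := by
      have h5 : (q' - ρ.Q) * (ρ.W ρ.p0 0 * w' ρ.p1) = 0 := by
        linear_combination h1 - q' * h2 + w' ρ.p1 * hQ
      rcases mul_eq_zero.1 h5 with h6 | h6
      · linarith [sub_eq_zero.1 h6]
      · exact absurd h6 (ne_of_gt (mul_pos (ρ.W_pos ρ.p0 0) (hw' ρ.p1)))
    refine ⟨hqQ, w' ρ.p0 / ρ.W ρ.p0 0, div_pos (hw' ρ.p0) (ρ.W_pos ρ.p0 0), fun x => ?_⟩
    have hrefs : ∀ r, ρ.isRef r → w' r * ρ.W ρ.p0 0 = w' ρ.p0 * ρ.W r 0 := by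
      intro r hr
      rcases hr with rfl | rfl | rfl
      · ring
      · linear_combination -h2
      · have h3 := hR ρ.p0 ρ.p2 hne02 ρ.bne02 0 0
        simp only [pow_zero, one_mul] at h3
        linear_combination -h3
    have hall : w' x * ρ.W ρ.p0 0 = w' ρ.p0 * ρ.W x 0 := by
      obtain ⟨hr1, hr2, hr3⟩ := ρ.ref_good x
      have h3 := hR x (ρ.ref x) (Ne.symm hr2) (Ne.symm hr3) 0 0
      simp only [pow_zero, one_mul] at h3
      have h4 := hrefs (ρ.ref x) hr1
      have h5 : (w' x * ρ.W ρ.p0 0) * ρ.W (ρ.ref x) 0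
          = (w' ρ.p0 * ρ.W x 0) * ρ.W (ρ.ref x) 0 := by
        linear_combination ρ.W ρ.p0 0 * h3 + ρ.W x 0 * h4
      exact mul_right_cancel₀ (ne_of_gt (ρ.W_pos (ρ.ref x) 0)) h5
    rw [div_mul_eq_mul_div, eq_div_iff (ne_of_gt (ρ.W_pos ρ.p0 0))]
    linear_combination hall
end
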